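/- arXiv:math/9907040 — 10 statements merged into one kernel-verified Lean document; each statement's English description precedes it below -/
import Mathlib

section
/- If Λ is integral dominant (a_i ∈ ℤ≥0 for i ≠ 0, a_0 ∈ ℤ) then the zeros of the atypicality matrix A(Λ) lie in distinct rows and distinct columns; moreover if (b,c) and (d,e) are two zeros with c < e then b > d (a zero to the right of another lies strictly above it). -/
/-- The (integer valued) atypicality matrix entry `A(Λ)_{bc}` for integer Dynkin
labels `a : ℤ → ℤ`:
`A(Λ)_{bc} = Σ_{k=-(m-b+1)}^{0} a k − Σ_{k=1}^{c-1} a k + m − b − c + 2`. -/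
noncomputable def AmatZ (m : ℕ) (a : ℤ → ℤ) (b c : ℤ) : ℤ :=
  (∑ k ∈ Finset.Icc (b - (m : ℤ) - 1) 0, a k)
    - (∑ k ∈ Finset.Icc (1 : ℤ) (c - 1), a k)
    + ((m : ℤ) - b - c + 2)

lemma IccIoc (x y : ℤ) : Finset.Icc x y = Finset.Ioc (x - 1) y := by
  ext k; simp


lemma IocSplit (a : ℤ → ℤ) {x y z : ℤ} (h1 : x ≤ y) (h2 : y ≤ z) :
    ∑ k ∈ Finset.Ioc x z, a k
      = (∑ k ∈ Finset.Ioc x y, a k) + ∑ k ∈ Finset.Ioc y z, a k := by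
  rw [← Finset.Ioc_union_Ioc_eq_Ioc h1 h2,
    Finset.sum_union (by simp only [Finset.disjoint_left, Finset.mem_Ioc]; intro k h1 h2; omega)]

lemma key (m n : ℕ) (a : ℤ → ℤ)
    (hdom : ∀ i : ℤ, -(m : ℤ) ≤ i → i ≤ (n : ℤ) → i ≠ 0 → 0 ≤ a i)
    {b c d e : ℤ} (hb : 1 ≤ b) (hd : d ≤ (m : ℤ) + 1) (hc : 1 ≤ c) (he : e ≤ (n : ℤ) + 1)
    (hbd : b ≤ d) (hce : c ≤ e) (h1 : AmatZ m a b c = 0) (h2 : AmatZ m a d e = 0) :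
    b = d ∧ c = e := by
  unfold AmatZ at h1 h2
  have hs1 : ∑ k ∈ Finset.Icc (b - (m:ℤ) - 1) 0, a k
      = (∑ k ∈ Finset.Ioc (b - (m:ℤ) - 2) (d - (m:ℤ) - 2), a k)
        + ∑ k ∈ Finset.Icc (d - (m:ℤ) - 1) 0, a k := by
    rw [IccIoc (b - (m:ℤ) - 1), IccIoc (d - (m:ℤ) - 1),
      show b - (m:ℤ) - 1 - 1 = b - (m:ℤ) - 2 by ring,
      show d - (m:ℤ) - 1 - 1 = d - (m:ℤ) - 2 by ring]
    exact IocSplit a (by omega) (by omega)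
  have hs2 : ∑ k ∈ Finset.Icc (1:ℤ) (e - 1), a k
      = (∑ k ∈ Finset.Icc (1:ℤ) (c - 1), a k)
        + ∑ k ∈ Finset.Ioc (c - 1) (e - 1), a k := by
    rw [IccIoc (1:ℤ) (e-1), IccIoc (1:ℤ) (c-1),
      show (1:ℤ) - 1 = 0 by ring]
    exact IocSplit a (by omega) (by omega)
  have hX : 0 ≤ ∑ k ∈ Finset.Ioc (b - (m:ℤ) - 2) (d - (m:ℤ) - 2), a k := by
    apply Finset.sum_nonneg
    intro k hk
    simp only [Finset.mem_Ioc] at hk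
    exact hdom k (by omega) (by omega) (by omega)
  have hY : 0 ≤ ∑ k ∈ Finset.Ioc (c - 1) (e - 1), a k := by
    apply Finset.sum_nonneg
    intro k hk
    simp only [Finset.mem_Ioc] at hk
    exact hdom k (by omega) (by omega) (by omega)
  rw [hs1] at h1
  rw [hs2] at h2
  constructor <;> omega

/-- If `Λ` is integral dominant then the zeros of `A(Λ)` lie in distinct rows and
columns, and a zero to the right of another lies strictly above it. -/
theorem stmt4 (m n : ℕ) (a : ℤ → ℤ)
    (hdom : ∀ i : ℤ, -(m : ℤ) ≤ i → i ≤ (n : ℤ) → i ≠ 0 → 0 ≤ a i) :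
    ∀ b c d e : ℤ, 1 ≤ b → b ≤ (m : ℤ) + 1 → 1 ≤ d → d ≤ (m : ℤ) + 1 →
      1 ≤ c → c ≤ (n : ℤ) + 1 → 1 ≤ e → e ≤ (n : ℤ) + 1 →
      AmatZ m a b c = 0 → AmatZ m a d e = 0 →
      ((b = d ↔ c = e) ∧ (c < e → d < b)) := by
  intro b c d e hb1 hb2 hd1 hd2 hc1 hc2 he1 he2 h1 h2
  constructor
  · constructor
    · intro hbd
      rcases le_or_gt c e with h | h
      · exact (key m n a hdom hb1 hd2 hc1 he2 (le_of_eq hbd) h h1 h2).2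
      · exact ((key m n a hdom hd1 hb2 he1 hc2 (le_of_eq hbd.symm) h.le h2 h1).2).symm
    · intro hce
      rcases le_or_gt b d with h | h
      · exact (key m n a hdom hb1 hd2 hc1 he2 h (le_of_eq hce) h1 h2).1
      · exact ((key m n a hdom hd1 hb2 he1 hc2 h.le (le_of_eq hce.symm) h2 h1).1).symm
  · intro hce
    by_contra h
    push_neg at h
    exact absurd (key m n a hdom hb1 hd2 hc1 he2 h hce.le h1 h2).2 hce.ne
end

section
/- Let (b_s,c_s) and (b_t,c_t) be zeros of A(Λ) with c_s < c_t (hence b_s > b_t), and set x_{st} = A(Λ)_{b_t, c_s} and the hook length h_{st} = b_s − b_t + c_t − c_s + 1. Then x_{st} = h_{st} − 1 if and only if b_s = b_t + Σ_{i=c_s}^{c_t−1} a_i, which holds if and only if the position (b_s, c_s) lies on the extended west chain W^e_Λ(t) = {(b,c) : 1 ≤ c ≤ c_t, b = b_t + Σ_{i=c}^{c_t−1} a_i}. -/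
/-- For two zeros `(b_s,c_s)`, `(b_t,c_t)` of `A(Λ)` with `c_s < c_t`, setting
`x_{st} = A(Λ)_{b_t c_s}` and `h_{st} = b_s − b_t + c_t − c_s + 1`, one has
`x_{st} = h_{st} − 1` iff `b_s = b_t + Σ_{i=c_s}^{c_t−1} a_i`, iff `(b_s,c_s)`
lies on the extended west chain `W^e_Λ(t)`. -/
theorem stmt5 (m n : ℕ) (a : ℤ → ℤ)
    (hdom : ∀ i : ℤ, -(m : ℤ) ≤ i → i ≤ (n : ℤ) → i ≠ 0 → 0 ≤ a i)
    (bs cs bt ct : ℤ)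
    (hbs : 1 ≤ bs) (hbs' : bs ≤ (m : ℤ) + 1) (hbt : 1 ≤ bt) (hbt' : bt ≤ (m : ℤ) + 1)
    (hcs : 1 ≤ cs) (hcs' : cs ≤ (n : ℤ) + 1) (hct : 1 ≤ ct) (hct' : ct ≤ (n : ℤ) + 1)
    (hzs : AmatZ m a bs cs = 0) (hzt : AmatZ m a bt ct = 0) (hlt : cs < ct) :
    (AmatZ m a bt cs = (bs - bt + ct - cs + 1) - 1 ↔
        bs = bt + ∑ i ∈ Finset.Icc cs (ct - 1), a i) ∧
    ((bs = bt + ∑ i ∈ Finset.Icc cs (ct - 1), a i) ↔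
        (1 ≤ cs ∧ cs ≤ ct ∧ bs = bt + ∑ i ∈ Finset.Icc cs (ct - 1), a i)) := by
  have hsplit : (∑ k ∈ Finset.Icc (1 : ℤ) (ct - 1), a k)
      = (∑ k ∈ Finset.Icc (1 : ℤ) (cs - 1), a k)
        + ∑ i ∈ Finset.Icc cs (ct - 1), a i := by
    rw [← Finset.sum_union (by
      rw [Finset.disjoint_left]
      intro x hx hx'
      simp only [Finset.mem_Icc] at hx hx'
      omega)]
    congr 1
    ext x
    simp only [Finset.mem_union, Finset.mem_Icc]
    omega
  constructor
  · constructor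
    · intro h
      simp only [AmatZ] at h hzt
      rw [hsplit] at hzt
      linarith
    · intro h
      simp only [AmatZ] at hzt ⊢
      rw [hsplit] at hzt
      linarith
  · exact ⟨fun h => ⟨hcs, le_of_lt hlt, h⟩, fun h => h.2.2⟩
end

section
/- Let (b_s,c_s) and (b_t,c_t) be zeros of A(Λ) with c_s < c_t, and set x_{st} = A(Λ)_{b_t,c_s}, h_{st} = b_s − b_t + c_t − c_s + 1. If x_{st} > h_{st} − 1 (the zeros are 'normally related'), then b_s < b_t + Σ_{i=c_s}^{c_t−1} a_i; that is, the extended west chain emanating from (b_t,c_t) meets column c_s strictly below row b_s. -/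
/-- If the zeros `(b_s,c_s)`, `(b_t,c_t)` (with `c_s < c_t`) are normally related,
i.e. `x_{st} > h_{st} − 1`, then `b_s < b_t + Σ_{i=c_s}^{c_t−1} a_i`: the extended
west chain from `(b_t,c_t)` meets column `c_s` strictly below row `b_s`. -/
theorem stmt6 (m n : ℕ) (a : ℤ → ℤ)
    (hdom : ∀ i : ℤ, -(m : ℤ) ≤ i → i ≤ (n : ℤ) → i ≠ 0 → 0 ≤ a i)
    (bs cs bt ct : ℤ)
    (hbs : 1 ≤ bs) (hbs' : bs ≤ (m : ℤ) + 1) (hbt : 1 ≤ bt) (hbt' : bt ≤ (m : ℤ) + 1)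
    (hcs : 1 ≤ cs) (hcs' : cs ≤ (n : ℤ) + 1) (hct : 1 ≤ ct) (hct' : ct ≤ (n : ℤ) + 1)
    (hzs : AmatZ m a bs cs = 0) (hzt : AmatZ m a bt ct = 0) (hlt : cs < ct)
    (hn : AmatZ m a bt cs > (bs - bt + ct - cs + 1) - 1) :
    bs < bt + ∑ i ∈ Finset.Icc cs (ct - 1), a i := by
  have hIcc : ∀ x : ℤ, Finset.Icc (1 : ℤ) (x - 1) = Finset.Ico 1 x := by
    intro x; ext k; simp
  have hsplit : ∑ k ∈ Finset.Icc (1 : ℤ) (cs - 1), a k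
      + ∑ k ∈ Finset.Icc cs (ct - 1), a k
      = ∑ k ∈ Finset.Icc (1 : ℤ) (ct - 1), a k := by
    have h2 : Finset.Icc cs (ct - 1) = Finset.Ico cs ct := by
      ext k; simp
    rw [hIcc, hIcc, h2, ← Finset.sum_union (Finset.Ico_disjoint_Ico_consecutive 1 cs ct),
      Finset.Ico_union_Ico_eq_Ico hcs (le_of_lt hlt)]
  simp only [AmatZ] at hzt hn
  omega
end

section
/- Let (b_t,c_t) be a zero of A(Λ) and suppose (d,e) lies on the extended west chain W^e_Λ(t), i.e., d = b_t + Σ_{j=e}^{c_t−1} a_j with 1 ≤ e ≤ c_t. If i = A(Λ)_{de}, then (d, e+i) lies on the extended south chain S^e_Λ(t), i.e., e + i = c_t − Σ_{j=-(m-b_t+1)}^{-(m-d+2)} a_j. Symmetrically, if (d,e) ∈ S^e_Λ(t) and i = A(Λ)_{de}, then (d+i, e) ∈ W^e_Λ(t). -/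

lemma sum_Icc_split (a : ℤ → ℤ) (x y z : ℤ) (hx : x ≤ y) (hy : y ≤ z + 1) :
    (∑ k ∈ Finset.Icc x z, a k)
      = (∑ k ∈ Finset.Icc x (y - 1), a k) + ∑ k ∈ Finset.Icc y z, a k := by
  have hu : Finset.Icc x z = Finset.Icc x (y - 1) ∪ Finset.Icc y z := by
    ext k; simp only [Finset.mem_Icc, Finset.mem_union]; omega
  have hdis : Disjoint (Finset.Icc x (y - 1)) (Finset.Icc y z) := by
    rw [Finset.disjoint_left]
    intro k hk hk'
    simp only [Finset.mem_Icc] at hk hk'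
    omega
  rw [hu, Finset.sum_union hdis]

/-- Let `(b_t,c_t)` be a zero of `A(Λ)` and `b_t ≤ d ≤ m+1`, `1 ≤ e ≤ c_t`,
`i = A(Λ)_{de}`.  If `(d,e) ∈ W^e_Λ(t)` then `(d,e+i) ∈ S^e_Λ(t)`; if
`(d,e) ∈ S^e_Λ(t)` then `(d+i,e) ∈ W^e_Λ(t)`.  Here membership in `W^e_Λ(t)`
in column `e` means `d = b_t + Σ_{j=e}^{c_t−1} a_j`, and membership in
`S^e_Λ(t)` in row `d` means `e = c_t − Σ_{j=-(m-b_t+1)}^{-(m-d+2)} a_j`. -/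
theorem stmt7 (m n : ℕ) (a : ℤ → ℤ) (bt ct d e : ℤ)
    (hbt : 1 ≤ bt) (hbt' : bt ≤ (m : ℤ) + 1) (hct : 1 ≤ ct) (hct' : ct ≤ (n : ℤ) + 1)
    (hz : AmatZ m a bt ct = 0)
    (hd : bt ≤ d) (hd' : d ≤ (m : ℤ) + 1) (he : 1 ≤ e) (he' : e ≤ ct) :
    (d = bt + ∑ j ∈ Finset.Icc e (ct - 1), a j →
      e + AmatZ m a d e = ct - ∑ j ∈ Finset.Icc (bt - (m : ℤ) - 1) (d - (m : ℤ) - 2), a j) ∧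
    (e = ct - ∑ j ∈ Finset.Icc (bt - (m : ℤ) - 1) (d - (m : ℤ) - 2), a j →
      d + AmatZ m a d e = bt + ∑ j ∈ Finset.Icc e (ct - 1), a j) := by
  have h1 := sum_Icc_split a (bt - (m : ℤ) - 1) (d - (m : ℤ) - 1) 0 (by omega) (by omega)
  rw [show d - (m : ℤ) - 1 - 1 = d - (m : ℤ) - 2 by ring] at h1
  have h2 := sum_Icc_split a 1 e (ct - 1) (by omega) (by omega)
  unfold AmatZ at hz ⊢
  constructor <;> intro h <;> linarith
end

section
/- Suppose Λ has nonnegative integer Dynkin labels a_i for i ≠ 0. If A(Λ)_{bc} > 0 and A(Λ)_{b−a_c, c+1} ≤ 0, then A(Λ)_{bc} = 1 and A(Λ)_{b−a_c, c+1} = 0; moreover a_{-(m-b+2)} = ⋯ = a_{-(m-b+1+a_c)} = 0. -/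
/-- If `A(Λ)_{bc} > 0` and `A(Λ)_{b−a_c,c+1} ≤ 0` then `A(Λ)_{bc} = 1`,
`A(Λ)_{b−a_c,c+1} = 0` and `a_{-(m-b+2)} = ⋯ = a_{-(m-b+1+a_c)} = 0`. -/
theorem stmt8 (m n : ℕ) (a : ℤ → ℤ)
    (hdom : ∀ i : ℤ, -(m : ℤ) ≤ i → i ≤ (n : ℤ) → i ≠ 0 → 0 ≤ a i)
    (b c : ℤ) (hb : 1 ≤ b) (hb' : b ≤ (m : ℤ) + 1) (hc : 1 ≤ c) (hc' : c ≤ (n : ℤ))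
    (hvalid : 1 ≤ b - a c)
    (h1 : 0 < AmatZ m a b c) (h2 : AmatZ m a (b - a c) (c + 1) ≤ 0) :
    AmatZ m a b c = 1 ∧ AmatZ m a (b - a c) (c + 1) = 0 ∧
      ∀ k : ℤ, b - (m : ℤ) - 1 - a c ≤ k → k ≤ b - (m : ℤ) - 2 → a k = 0 := by
  have hac : 0 ≤ a c := hdom c (by linarith) hc' (by linarith)
  set S : ℤ := ∑ k ∈ Finset.Icc (b - (m : ℤ) - 1 - a c) (b - (m : ℤ) - 2), a k with hS
  -- split the left sum
  have hsplit1 : (∑ k ∈ Finset.Icc (b - a c - (m : ℤ) - 1) 0, a k)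
      = S + ∑ k ∈ Finset.Icc (b - (m : ℤ) - 1) 0, a k := by
    rw [hS]
    rw [← Finset.sum_union]
    · congr 1
      ext x
      simp only [Finset.mem_union, Finset.mem_Icc]
      omega
    · rw [Finset.disjoint_left]
      intro x hx hx'
      simp only [Finset.mem_Icc] at hx hx'
      linarith [hx.2, hx'.1]
  -- split the right sum
  have hsplit2 : (∑ k ∈ Finset.Icc (1 : ℤ) (c + 1 - 1), a k)
      = (∑ k ∈ Finset.Icc (1 : ℤ) (c - 1), a k) + a c := by
    have : Finset.Icc (1 : ℤ) (c + 1 - 1) = insert c (Finset.Icc (1 : ℤ) (c - 1)) := by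
      ext x
      simp only [Finset.mem_Icc, Finset.mem_insert]
      constructor
      · rintro ⟨h1, h2⟩
        rcases eq_or_lt_of_le h2 with h | h
        · left; linarith
        · right; constructor <;> linarith
      · rintro (rfl | ⟨h1, h2⟩) <;> constructor <;> linarith
    rw [this, Finset.sum_insert (by simp)]
    ring
  have key : AmatZ m a (b - a c) (c + 1) = AmatZ m a b c + S - 1 := by
    simp only [AmatZ, hsplit1, hsplit2]; ring
  have hSnn : 0 ≤ S := by
    apply Finset.sum_nonneg
    intro k hk
    simp only [Finset.mem_Icc] at hk
    exact hdom k (by linarith) (by linarith) (by intro h; omega)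
  have hA1 : AmatZ m a b c = 1 := by omega
  have hS0 : S = 0 := by omega
  refine ⟨hA1, by omega, ?_⟩
  intro k hk1 hk2
  have := (Finset.sum_eq_zero_iff_of_nonneg (fun k hk => by
    simp only [Finset.mem_Icc] at hk
    exact hdom k (by linarith) (by linarith) (by intro h; omega))).mp hS0
  exact this k (Finset.mem_Icc.mpr ⟨hk1, hk2⟩)
end

section
/- Suppose Λ has nonnegative integer Dynkin labels a_i for i ≠ 0. If A(Λ)_{bc} < 0 and A(Λ)_{b−1, c + a_{-(m-b+2)}} ≥ 0, then A(Λ)_{bc} = −1 and A(Λ)_{b−1, c + a_{-(m-b+2)}} = 0. -/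
/-- If `A(Λ)_{bc} < 0` and `A(Λ)_{b−1, c+a_{-(m-b+2)}} ≥ 0` then `A(Λ)_{bc} = −1`
and `A(Λ)_{b−1, c+a_{-(m-b+2)}} = 0`.  (Note `-(m-b+2) = b - m - 2`.) -/
theorem stmt9 (m n : ℕ) (a : ℤ → ℤ)
    (hdom : ∀ i : ℤ, -(m : ℤ) ≤ i → i ≤ (n : ℤ) → i ≠ 0 → 0 ≤ a i)
    (b c : ℤ) (hb : 1 ≤ b - 1) (hb' : b ≤ (m : ℤ) + 1)
    (hc : 1 ≤ c) (hc' : c ≤ (n : ℤ) + 1)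
    (hvalid : c + a (b - (m : ℤ) - 2) ≤ (n : ℤ) + 1)
    (h1 : AmatZ m a b c < 0) (h2 : 0 ≤ AmatZ m a (b - 1) (c + a (b - (m : ℤ) - 2))) :
    AmatZ m a b c = -1 ∧ AmatZ m a (b - 1) (c + a (b - (m : ℤ) - 2)) = 0 := by
  set t := a (b - (m : ℤ) - 2) with htdef
  have ht : 0 ≤ t := hdom _ (by omega) (by omega) (by omega)
  have hS : 0 ≤ ∑ k ∈ Finset.Ioc (c - 1) (c + t - 1), a k :=
    Finset.sum_nonneg fun k hk => by
      simp only [Finset.mem_Ioc] at hk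
      exact hdom k (by omega) (by omega) (by omega)
  have key : AmatZ m a (b - 1) (c + t) =
      AmatZ m a b c + 1 - ∑ k ∈ Finset.Ioc (c - 1) (c + t - 1), a k := by
    unfold AmatZ
    have e1 : Finset.Icc (b - 1 - (m : ℤ) - 1) 0
        = insert (b - (m : ℤ) - 2) (Finset.Icc (b - (m : ℤ) - 1) 0) := by
      ext k
      simp only [Finset.mem_Icc, Finset.mem_insert]
      omega
    have e2 : Finset.Icc (1 : ℤ) (c + t - 1)
        = Finset.Icc (1 : ℤ) (c - 1) ∪ Finset.Ioc (c - 1) (c + t - 1) := by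
      ext k
      simp only [Finset.mem_Icc, Finset.mem_union, Finset.mem_Ioc]
      omega
    have hd : Disjoint (Finset.Icc (1 : ℤ) (c - 1)) (Finset.Ioc (c - 1) (c + t - 1)) := by
      rw [Finset.disjoint_left]
      intro k hk hk'
      simp only [Finset.mem_Icc] at hk
      simp only [Finset.mem_Ioc] at hk'
      omega
    rw [e1, Finset.sum_insert (by simp only [Finset.mem_Icc]; omega), e2,
      Finset.sum_union hd]
    rw [← htdef]
    ring
  constructor <;> omega
end

section
/- In the Lie superalgebra sl(m+1/n+1) with simple root vectors and Cartan elements as defined, the elements X_i = ω_i + Ω_i, where ω_i = m+1+i+h_{-m,i} and Ω_i = 1 − Σ_{-m ≤ -k ≤ i} f_{-k,i} e_{-k,i} for i ∈ {-m,...,-1}, and ω_i = n+1−i+h_{i,n} and Ω_i = 1 − Σ_{i ≤ k ≤ n} f_{ik} e_{ik} for i ∈ {1,...,n}, pairwise commute in the universal enveloping algebra: [X_i, X_j] = 0 for all i, j. -/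
/-! We model the universal enveloping superalgebra `U(sl(m+1/n+1))` faithfully by
working in an arbitrary ring `U` equipped with elements `E a b` (the images of the
matrix units `E_{ab}`, `1 ≤ a,b ≤ m+n+2`) satisfying the super-commutation
relations of `gl(m+1/n+1)`; an identity holds in the enveloping algebra iff it
holds in every such `U`. -/

/-- Parity of the matrix unit `E_{ab}` (1-based indices): odd iff exactly one of
`a, b` lies in the second block `{m+2,…,m+n+2}`. -/
abbrev podd (m : ℕ) (a b : ℤ) : Bool :=
  xor (decide ((m : ℤ) + 1 < a)) (decide ((m : ℤ) + 1 < b))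

/-- The sign `(−1)^{p(ab)p(cd)}`. -/
abbrev ssgn (m : ℕ) (a b c d : ℤ) : ℤ :=
  if podd m a b && podd m c d then -1 else 1

/-- The defining super-commutation relations of `gl(m+1/n+1)`:
`[E_{ab}, E_{cd}] = δ_{bc} E_{ad} − (−1)^{p(ab)p(cd)} δ_{da} E_{cb}`. -/
def glRel (m n : ℕ) {U : Type*} [Ring U] (E : ℤ → ℤ → U) : Prop :=
  ∀ a b c d : ℤ,
    1 ≤ a → a ≤ (m : ℤ) + n + 2 → 1 ≤ b → b ≤ (m : ℤ) + n + 2 →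
    1 ≤ c → c ≤ (m : ℤ) + n + 2 → 1 ≤ d → d ≤ (m : ℤ) + n + 2 →
    E a b * E c d = ssgn m a b c d • (E c d * E a b) +
      ((if b = c then E a d else 0) - ssgn m a b c d • (if d = a then E c b else 0))

/-- The root vector `e_{ij} = E_{m+i+1, m+j+2}` for `i ≤ j` in `I = {-m,…,n}`. -/
abbrev eV (m : ℕ) {U : Type*} [Ring U] (E : ℤ → ℤ → U) (i j : ℤ) : U :=
  E ((m : ℤ) + i + 1) ((m : ℤ) + j + 2)

/-- The root vector `f_{ij} = E_{m+j+2, m+i+1}`. -/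
abbrev fV (m : ℕ) {U : Type*} [Ring U] (E : ℤ → ℤ → U) (i j : ℤ) : U :=
  E ((m : ℤ) + j + 2) ((m : ℤ) + i + 1)

/-- The Cartan element `h_{ij} = E_{m+i+1,m+i+1} − (−1)^{σ_{ij}} E_{m+j+2,m+j+2}`,
where `σ_{ij} = 1` iff `α_{ij}` is odd, i.e. `i ≤ 0 ≤ j`. -/
abbrev hV (m : ℕ) {U : Type*} [Ring U] (E : ℤ → ℤ → U) (i j : ℤ) : U :=
  E ((m : ℤ) + i + 1) ((m : ℤ) + i + 1)
    - (if i ≤ 0 ∧ 0 ≤ j then (-1 : ℤ) else 1) • E ((m : ℤ) + j + 2) ((m : ℤ) + j + 2)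

/-- The sign `(−1)^{|e_{ij}||e_{kl}|}` for root vectors: `e_{ij}` is odd iff `i ≤ 0 ≤ j`. -/
abbrev obr (i j k l : ℤ) : ℤ :=
  if (i ≤ 0 ∧ 0 ≤ j) ∧ (k ≤ 0 ∧ 0 ≤ l) then -1 else 1

/-- The zero-weight element `Ω_i ∈ U(G)`:
`Ω_i = 1 − Σ_{-m ≤ k ≤ i} f_{ki} e_{ki}` for `i < 0`, and
`Ω_i = 1 − Σ_{i ≤ k ≤ n} f_{ik} e_{ik}` for `i > 0`. -/
noncomputable abbrev OmegaV (m n : ℕ) {U : Type*} [Ring U] (E : ℤ → ℤ → U) (i : ℤ) : U :=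
  if i < 0 then 1 - ∑ k ∈ Finset.Icc (-(m : ℤ)) i, fV m E k i * eV m E k i
  else 1 - ∑ k ∈ Finset.Icc i (n : ℤ), fV m E i k * eV m E i k

/-- The element `ω_i ∈ ℂ ⊕ H`: `ω_i = m+1+i+h_{-m,i}` for `i < 0` and
`ω_i = n+1−i+h_{i,n}` for `i > 0`. -/
noncomputable abbrev omegaV (m n : ℕ) {U : Type*} [Ring U] (E : ℤ → ℤ → U) (i : ℤ) : U :=
  if i < 0 then (((m : ℤ) + 1 + i : ℤ) : U) + hV m E (-(m : ℤ)) i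
  else (((n : ℤ) + 1 - i : ℤ) : U) + hV m E i (n : ℤ)

/-- `X_i = ω_i + Ω_i`. -/
noncomputable abbrev XV (m n : ℕ) {U : Type*} [Ring U] (E : ℤ → ℤ → U) (i : ℤ) : U :=
  omegaV m n E i + OmegaV m n E i


section Bracket
variable {U : Type*} [Ring U]

/-- Commutator. -/
def brk (x y : U) : U := x * y - y * x

lemma brk_def (x y : U) : brk x y = x * y - y * x := rfl

lemma brk_anti (x y : U) : brk x y = - brk y x := by simp [brk_def]

lemma brk_add_left (x y z : U) : brk (x + y) z = brk x z + brk y z := by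
  simp only [brk_def]; noncomm_ring

lemma brk_sub_left (x y z : U) : brk (x - y) z = brk x z - brk y z := by
  simp only [brk_def]; noncomm_ring

lemma brk_add_right (x y z : U) : brk x (y + z) = brk x y + brk x z := by
  simp only [brk_def]; noncomm_ring

lemma brk_sub_right (x y z : U) : brk x (y - z) = brk x y - brk x z := by
  simp only [brk_def]; noncomm_ring

lemma brk_mul_left (x y z : U) : brk (x * y) z = x * brk y z + brk x z * y := by
  simp only [brk_def]; noncomm_ring

lemma brk_mul_right (x y z : U) : brk x (y * z) = brk x y * z + y * brk x z := by
  simp only [brk_def]; noncomm_ring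

lemma brk_sum_left {ι : Type*} (s : Finset ι) (f : ι → U) (y : U) :
    brk (∑ i ∈ s, f i) y = ∑ i ∈ s, brk (f i) y := by
  simp only [brk_def, Finset.sum_mul, Finset.mul_sum, Finset.sum_sub_distrib]

lemma brk_sum_right {ι : Type*} (s : Finset ι) (f : ι → U) (y : U) :
    brk y (∑ i ∈ s, f i) = ∑ i ∈ s, brk y (f i) := by
  simp only [brk_def, Finset.sum_mul, Finset.mul_sum, Finset.sum_sub_distrib]

lemma brk_intCast_left (k : ℤ) (x : U) : brk ((k : U)) x = 0 :=
  sub_eq_zero.mpr (Int.cast_commute k x)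

lemma brk_intCast_right (k : ℤ) (x : U) : brk x ((k : U)) = 0 :=
  sub_eq_zero.mpr (Int.cast_commute k x).symm.eq

lemma brk_neg_neg (x y : U) : brk (-x) (-y) = brk x y := by
  simp only [brk_def]; noncomm_ring

end Bracket

section Gelfand

variable {U : Type*} [Ring U]

/-- The Gelfand-type element `F_{lo,lo} - F_{pp} - Σ_{lo ≤ b < p} F_{pb} F_{bp}`. -/
noncomputable def Gel (F : ℤ → ℤ → U) (lo p : ℤ) : U :=
  F lo lo - F p p - ∑ b ∈ Finset.Icc lo (p - 1), F p b * F b p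

variable (F : ℤ → ℤ → U) (lo hi : ℤ)
variable (hrel : ∀ a b c d : ℤ, lo ≤ a → a ≤ hi → lo ≤ b → b ≤ hi →
    lo ≤ c → c ≤ hi → lo ≤ d → d ≤ hi →
    brk (F a b) (F c d) = (if b = c then F a d else 0) - (if d = a then F c b else 0))

include hrel

lemma diag_diag (r s : ℤ) (h1 : lo ≤ r) (h2 : r ≤ hi) (h3 : lo ≤ s) (h4 : s ≤ hi) :
    brk (F r r) (F s s) = 0 := by
  rw [hrel r r s s h1 h2 h1 h2 h3 h4 h3 h4]
  by_cases h : r = s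
  · subst h; simp
  · simp [h, Ne.symm h]

lemma diag_quad (r s c : ℤ) (h1 : lo ≤ r) (h2 : r ≤ hi) (h3 : lo ≤ s) (h4 : s ≤ hi)
    (h5 : lo ≤ c) (h6 : c ≤ hi) (hrs : r ≠ s) :
    brk (F r r) (F s c * F c s) = 0 := by
  rw [brk_mul_right, hrel r r s c h1 h2 h1 h2 h3 h4 h5 h6,
    hrel r r c s h1 h2 h1 h2 h5 h6 h3 h4]
  by_cases h : c = r
  · subst h
    simp only [if_neg hrs, if_neg (Ne.symm hrs), if_pos rfl]
    noncomm_ring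
    abel
  · simp only [if_neg hrs, if_neg (Ne.symm hrs), if_neg h, if_neg (Ne.symm h)]
    noncomm_ring

lemma quad_sum (b p q : ℤ) (hlb : lo ≤ b) (hbp : b < p) (hpq : p < q) (hq : q ≤ hi) :
    brk (F p b * F b p) (∑ c ∈ Finset.Icc lo (q - 1), F q c * F c q) = 0 := by
  have hbq : b ≠ q := by omega
  have hqb : q ≠ b := by omega
  have hpq' : p ≠ q := by omega
  have hqp : q ≠ p := by omega
  have hbh : b ≤ hi := by omega
  have hph : p ≤ hi := by omega
  have hlp : lo ≤ p := by omega
  have hlq : lo ≤ q := by omega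
  rw [brk_sum_right]
  have key : ∀ c ∈ Finset.Icc lo (q - 1),
      brk (F p b * F b p) (F q c * F c q) =
      ((if c = p then F p b * (F q p * F b q) - F q b * (F p q * F b p) else 0)
        - (if c = b then F p b * (F q p * F b q) - F q b * (F p q * F b p) else 0)) := by
    intro c hc
    rw [Finset.mem_Icc] at hc
    have hc1 : lo ≤ c := hc.1
    have hc2 : c ≤ hi := by omega
    rw [brk_mul_left, brk_mul_right, brk_mul_right,
      hrel b p q c hlb hbh hlp hph hlq hq hc1 hc2,
      hrel b p c q hlb hbh hlp hph hc1 hc2 hlq hq,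
      hrel p b q c hlp hph hlb hbh hlq hq hc1 hc2,
      hrel p b c q hlp hph hlb hbh hc1 hc2 hlq hq]
    by_cases h1 : c = p
    · subst h1
      have hcb : ¬ (c = b) := by omega
      have hbc : ¬ (b = c) := by omega
      simp only [if_pos rfl, if_true, if_neg hpq', if_neg hqb, if_neg hbq, if_neg hqp,
        if_neg hcb, if_neg hbc]
      noncomm_ring
    · by_cases h2 : c = b
      · subst h2
        have hcp : ¬ (c = p) := by omega
        have hpc : ¬ (p = c) := by omega
        simp only [if_pos rfl, if_true, if_neg hpq', if_neg hqb, if_neg hbq, if_neg hqp,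
          if_neg hcp, if_neg hpc]
        noncomm_ring
      · have h1' : ¬ (p = c) := fun h => h1 h.symm
        have h2' : ¬ (b = c) := fun h => h2 h.symm
        simp only [if_neg h1, if_neg h2, if_neg h1', if_neg h2', if_neg hpq',
          if_neg hqb, if_neg hbq, if_neg hqp]
        noncomm_ring
  rw [Finset.sum_congr rfl key, Finset.sum_sub_distrib,
    Finset.sum_ite_eq' (Finset.Icc lo (q-1)) p, Finset.sum_ite_eq' (Finset.Icc lo (q-1)) b,
    if_pos (by rw [Finset.mem_Icc]; omega), if_pos (by rw [Finset.mem_Icc]; omega), sub_self]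

lemma quad_diag (b p r : ℤ) (hlb : lo ≤ b) (hbp : b < p) (hp : p ≤ hi)
    (hr1 : lo ≤ r) (hr2 : r ≤ hi) (hpr : p ≠ r) :
    brk (F p b * F b p) (F r r) = 0 := by
  rw [brk_anti, diag_quad F lo hi hrel r p b hr1 hr2 (by omega) hp hlb (by omega)
    (Ne.symm hpr), neg_zero]

lemma gelfand_lt (p q : ℤ) (hp1 : lo < p) (hq2 : q ≤ hi) (hpq : p < q) :
    brk (Gel F lo p) (Gel F lo q) = 0 := by
  have hp2 : p ≤ hi := by omega
  have hq1 : lo < q := by omega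
  have hll : lo ≤ hi := by omega
  unfold Gel
  rw [brk_sub_left, brk_sub_left, brk_sub_right, brk_sub_right, brk_sub_right, brk_sub_right,
    brk_sub_right, brk_sub_right]
  rw [diag_diag F lo hi hrel lo lo le_rfl hll le_rfl hll,
    diag_diag F lo hi hrel lo q le_rfl hll (by omega) hq2,
    diag_diag F lo hi hrel p lo (by omega) hp2 le_rfl hll,
    diag_diag F lo hi hrel p q (by omega) hp2 (by omega) hq2]
  rw [brk_sum_right, Finset.sum_eq_zero (fun c hc => by
    rw [Finset.mem_Icc] at hc
    exact diag_quad F lo hi hrel lo q c le_rfl hll (by omega) hq2 hc.1 (by omega) (by omega))]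
  rw [brk_sum_right, Finset.sum_eq_zero (fun c hc => by
    rw [Finset.mem_Icc] at hc
    exact diag_quad F lo hi hrel p q c (by omega) hp2 (by omega) hq2 hc.1 (by omega) (by omega))]
  rw [brk_sum_left, Finset.sum_eq_zero (fun b hb => by
    rw [Finset.mem_Icc] at hb
    exact quad_diag F lo hi hrel b p lo hb.1 (by omega) hp2 le_rfl hll (by omega))]
  rw [brk_sum_left, Finset.sum_eq_zero (fun b hb => by
    rw [Finset.mem_Icc] at hb
    exact quad_diag F lo hi hrel b p q hb.1 (by omega) hp2 (by omega) hq2 (by omega))]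
  rw [brk_sum_left, Finset.sum_eq_zero (fun b hb => by
    rw [Finset.mem_Icc] at hb
    exact quad_sum F lo hi hrel b p q hb.1 (by omega) hpq hq2)]
  simp

lemma gelfand (p q : ℤ) (hp1 : lo < p) (hp2 : p ≤ hi) (hq1 : lo < q) (hq2 : q ≤ hi) :
    brk (Gel F lo p) (Gel F lo q) = 0 := by
  rcases lt_trichotomy p q with h | h | h
  · exact gelfand_lt F lo hi hrel p q hp1 hq2 h
  · subst h; simp [brk_def]
  · rw [brk_anti, gelfand_lt F lo hi hrel q p hq1 hp2 h, neg_zero]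

end Gelfand
section Blocks
variable {m n : ℕ} {U : Type*} [Ring U] {E : ℤ → ℤ → U}

lemma relLow (hE : glRel m n E) :
    ∀ a b c d : ℤ, 1 ≤ a → a ≤ (m:ℤ)+1 → 1 ≤ b → b ≤ (m:ℤ)+1 → 1 ≤ c → c ≤ (m:ℤ)+1 →
      1 ≤ d → d ≤ (m:ℤ)+1 →
      brk (E a b) (E c d) = (if b = c then E a d else 0) - (if d = a then E c b else 0) := by
  intro a b c d h1 h2 h3 h4 h5 h6 h7 h8
  have key := hE a b c d h1 (by omega) h3 (by omega) h5 (by omega) h7 (by omega)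
  have hp : podd m a b = false := by
    simp only [podd]
    rw [decide_eq_false (by omega : ¬ ((m:ℤ)+1 < a)),
      decide_eq_false (by omega : ¬ ((m:ℤ)+1 < b))]
    rfl
  have hs : ssgn m a b c d = 1 := by simp [ssgn, hp]
  rw [hs, one_zsmul, one_zsmul] at key
  rw [brk_def, key]
  noncomm_ring

lemma relHigh (hE : glRel m n E) :
    ∀ a b c d : ℤ, (m:ℤ)+2 ≤ a → a ≤ (m:ℤ)+n+2 → (m:ℤ)+2 ≤ b → b ≤ (m:ℤ)+n+2 →
      (m:ℤ)+2 ≤ c → c ≤ (m:ℤ)+n+2 → (m:ℤ)+2 ≤ d → d ≤ (m:ℤ)+n+2 →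
      brk (E a b) (E c d) = (if b = c then E a d else 0) - (if d = a then E c b else 0) := by
  intro a b c d h1 h2 h3 h4 h5 h6 h7 h8
  have key := hE a b c d (by omega) h2 (by omega) h4 (by omega) h6 (by omega) h8
  have hp : podd m a b = false := by
    simp only [podd]
    rw [decide_eq_true (by omega : ((m:ℤ)+1 < a)),
      decide_eq_true (by omega : ((m:ℤ)+1 < b))]
    rfl
  have hs : ssgn m a b c d = 1 := by simp [ssgn, hp]
  rw [hs, one_zsmul, one_zsmul] at key
  rw [brk_def, key]
  noncomm_ring

lemma relCross (hE : glRel m n E) :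
    ∀ a b c d : ℤ, 1 ≤ a → a ≤ (m:ℤ)+1 → 1 ≤ b → b ≤ (m:ℤ)+1 →
      (m:ℤ)+2 ≤ c → c ≤ (m:ℤ)+n+2 → (m:ℤ)+2 ≤ d → d ≤ (m:ℤ)+n+2 →
      Commute (E a b) (E c d) := by
  intro a b c d h1 h2 h3 h4 h5 h6 h7 h8
  have key := hE a b c d h1 (by omega) h3 (by omega) (by omega) h6 (by omega) h8
  have hp : podd m a b = false := by
    simp only [podd]
    rw [decide_eq_false (by omega : ¬ ((m:ℤ)+1 < a)),
      decide_eq_false (by omega : ¬ ((m:ℤ)+1 < b))]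
    rfl
  have hs : ssgn m a b c d = 1 := by simp [ssgn, hp]
  rw [hs, one_zsmul, one_zsmul, if_neg (by omega : ¬ (b = c)),
    if_neg (by omega : ¬ (d = a))] at key
  unfold Commute SemiconjBy
  rw [key]; noncomm_ring

end Blocks

/-- reflected-negated-transposed generators for the second block -/
def F2 (m n : ℕ) {U : Type*} [Ring U] (E : ℤ → ℤ → U) : ℤ → ℤ → U :=
  fun a b => -(E ((2*(m:ℤ)+n+4) - b) ((2*(m:ℤ)+n+4) - a))

section Blocks
variable {m n : ℕ} {U : Type*} [Ring U] {E : ℤ → ℤ → U}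

lemma relF2 (hE : glRel m n E) :
    ∀ a b c d : ℤ, (m:ℤ)+2 ≤ a → a ≤ (m:ℤ)+n+2 → (m:ℤ)+2 ≤ b → b ≤ (m:ℤ)+n+2 →
      (m:ℤ)+2 ≤ c → c ≤ (m:ℤ)+n+2 → (m:ℤ)+2 ≤ d → d ≤ (m:ℤ)+n+2 →
      brk (F2 m n E a b) (F2 m n E c d)
        = (if b = c then F2 m n E a d else 0) - (if d = a then F2 m n E c b else 0) := by
  intro a b c d h1 h2 h3 h4 h5 h6 h7 h8
  unfold F2
  rw [brk_neg_neg]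
  rw [relHigh hE ((2*(m:ℤ)+n+4) - b) ((2*(m:ℤ)+n+4) - a) ((2*(m:ℤ)+n+4) - d)
    ((2*(m:ℤ)+n+4) - c) (by omega) (by omega) (by omega) (by omega) (by omega) (by omega)
    (by omega) (by omega)]
  rw [if_congr (show (2*(m:ℤ)+n+4 - a = 2*(m:ℤ)+n+4 - d) ↔ (d = a) by omega) rfl rfl,
    if_congr (show (2*(m:ℤ)+n+4 - c = 2*(m:ℤ)+n+4 - b) ↔ (b = c) by omega) rfl rfl]
  by_cases hda : d = a <;> by_cases hbc : b = c <;>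
    simp [hda, hbc] <;> noncomm_ring

end Blocks

section Forms
variable (m n : ℕ) {U : Type*} [Ring U] (E : ℤ → ℤ → U)

lemma XV_neg (i : ℤ) (h1 : -(m:ℤ) ≤ i) (h2 : i < 0) :
    XV m n E i = ((((m:ℤ)+1+i) : ℤ) : U) + (1 + Gel E 1 ((m:ℤ)+i+2)) := by
  have hcond : ¬ (-(m:ℤ) ≤ 0 ∧ 0 ≤ i) := by omega
  simp only [XV, omegaV, OmegaV, hV, fV, eV, if_pos h2, if_neg hcond, one_zsmul]
  rw [show (m:ℤ) + -(m:ℤ) + 1 = 1 by ring]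
  have hsum : (∑ k ∈ Finset.Icc (-(m:ℤ)) i,
        E ((m:ℤ)+i+2) ((m:ℤ)+k+1) * E ((m:ℤ)+k+1) ((m:ℤ)+i+2))
      = ∑ b ∈ Finset.Icc 1 (((m:ℤ)+i+2) - 1), E ((m:ℤ)+i+2) b * E b ((m:ℤ)+i+2) := by
    refine Finset.sum_nbij' (fun k => (m:ℤ)+k+1) (fun b => b - (m:ℤ) - 1) ?_ ?_ ?_ ?_ ?_
    · intro k hk; simp only [Finset.mem_Icc] at *; omega
    · intro b hb; simp only [Finset.mem_Icc] at *; omega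
    · intro k _; ring
    · intro b _; ring
    · intro k _; rfl
  rw [hsum]
  unfold Gel
  abel

set_option maxHeartbeats 1000000 in
lemma XV_pos (j : ℤ) (h1 : 0 < j) (h2 : j ≤ (n:ℤ)) :
    XV m n E j = ((((n:ℤ)+1-j) : ℤ) : U) +
      (1 + Gel (F2 m n E) ((m:ℤ)+2) ((m:ℤ)+(n:ℤ)+3-j)) := by
  have hj0 : ¬ (j < 0) := by omega
  have hcond : ¬ (j ≤ 0 ∧ 0 ≤ (n:ℤ)) := by omega
  simp only [XV, omegaV, OmegaV, hV, fV, eV, if_neg hj0, if_neg hcond, one_zsmul]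
  unfold Gel F2
  rw [show (2*(m:ℤ)+n+4) - ((m:ℤ)+2) = (m:ℤ)+n+2 by ring]
  rw [show (2*(m:ℤ)+n+4) - ((m:ℤ)+(n:ℤ)+3-j) = (m:ℤ)+j+1 by ring]
  have hsum : (∑ k ∈ Finset.Icc j (n:ℤ),
        E ((m:ℤ)+k+2) ((m:ℤ)+j+1) * E ((m:ℤ)+j+1) ((m:ℤ)+k+2))
      = ∑ b ∈ Finset.Icc ((m:ℤ)+2) (((m:ℤ)+(n:ℤ)+3-j) - 1),
          -(E ((2*(m:ℤ)+n+4) - b) ((m:ℤ)+j+1)) *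
          -(E ((m:ℤ)+j+1) ((2*(m:ℤ)+n+4) - b)) := by
    refine Finset.sum_nbij' (fun k => (m:ℤ)+(n:ℤ)+2-k) (fun b => (m:ℤ)+(n:ℤ)+2-b)
      ?_ ?_ ?_ ?_ ?_
    · intro k hk; simp only [Finset.mem_Icc] at *; omega
    · intro b hb; simp only [Finset.mem_Icc] at *; omega
    · intro k _; ring
    · intro b _; ring
    · intro k _
      rw [neg_mul_neg, show (2*(m:ℤ)+n+4) - ((m:ℤ)+(n:ℤ)+2-k) = (m:ℤ)+k+2 by ring]
  rw [hsum]
  abel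

end Forms

section Main
variable {U : Type*} [Ring U]

lemma brk_one_left (x : U) : brk 1 x = 0 := by simp [brk_def]
lemma brk_one_right (x : U) : brk x 1 = 0 := by simp [brk_def]

lemma brk_shift (k l : ℤ) (x y : U) (h : brk x y = 0) :
    brk ((k : U) + (1 + x)) ((l : U) + (1 + y)) = 0 := by
  simp [brk_add_left, brk_add_right, brk_intCast_left, brk_intCast_right,
    brk_one_left, brk_one_right, h]

lemma crossXV (m n : ℕ) (E : ℤ → ℤ → U) (hE : glRel m n E)
    (i j : ℤ) (hi1 : -(m:ℤ) ≤ i) (hi2 : i < 0) (hj1 : 0 < j) (hj2 : j ≤ (n:ℤ)) :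
    Commute (XV m n E i) (XV m n E j) := by
  have base := relCross hE
  have hgen : ∀ a b : ℤ, 1 ≤ a → a ≤ (m:ℤ)+1 → 1 ≤ b → b ≤ (m:ℤ)+1 →
      Commute (E a b) (XV m n E j) := by
    intro a b ha1 ha2 hb1 hb2
    have hj0 : ¬ (j < 0) := by omega
    have hcond : ¬ (j ≤ 0 ∧ 0 ≤ (n:ℤ)) := by omega
    simp only [XV, omegaV, OmegaV, hV, fV, eV, if_neg hj0, if_neg hcond, one_zsmul]
    refine Commute.add_right
      (Commute.add_right ((Int.cast_commute _ _).symm)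
        (Commute.sub_right
          (base a b _ _ ha1 ha2 hb1 hb2 (by omega) (by omega) (by omega) (by omega))
          (base a b _ _ ha1 ha2 hb1 hb2 (by omega) (by omega) (by omega) (by omega))))
      (Commute.sub_right (Commute.one_right _)
        (Commute.sum_right _ _ _ (fun k hk => by
          rw [Finset.mem_Icc] at hk
          exact Commute.mul_right
            (base a b _ _ ha1 ha2 hb1 hb2 (by omega) (by omega) (by omega) (by omega))
            (base a b _ _ ha1 ha2 hb1 hb2 (by omega) (by omega) (by omega) (by omega)))))
  have hcond' : ¬ (-(m:ℤ) ≤ 0 ∧ 0 ≤ i) := by omega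
  show Commute (XV m n E i) _
  simp only [XV, omegaV, OmegaV, hV, fV, eV, if_pos hi2, if_neg hcond', one_zsmul]
  refine Commute.add_left
    (Commute.add_left (Int.cast_commute _ _)
      (Commute.sub_left
        (hgen _ _ (by omega) (by omega) (by omega) (by omega))
        (hgen _ _ (by omega) (by omega) (by omega) (by omega))))
    (Commute.sub_left (Commute.one_left _)
      (Commute.sum_left _ _ _ (fun k hk => by
        rw [Finset.mem_Icc] at hk
        exact Commute.mul_left
          (hgen _ _ (by omega) (by omega) (by omega) (by omega))
          (hgen _ _ (by omega) (by omega) (by omega) (by omega)))))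

end Main

/-- The elements `X_i = ω_i + Ω_i`, `i ∈ I₁ ∪ I₂ = {-m,…,-1} ∪ {1,…,n}`, pairwise
commute in the universal enveloping algebra: `[X_i, X_j] = 0`. -/
theorem stmt10 (m n : ℕ) (U : Type*) [Ring U] (E : ℤ → ℤ → U) (hE : glRel m n E) :
    ∀ i j : ℤ, -(m : ℤ) ≤ i → i ≤ (n : ℤ) → i ≠ 0 →
      -(m : ℤ) ≤ j → j ≤ (n : ℤ) → j ≠ 0 →
      XV m n E i * XV m n E j = XV m n E j * XV m n E i := by
  intro i j hi1 hi2 hi0 hj1 hj2 hj0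
  rcases hi0.lt_or_gt with hi | hi <;> rcases hj0.lt_or_gt with hj | hj
  · rw [XV_neg m n E i hi1 hi, XV_neg m n E j hj1 hj]
    have h0 := brk_shift ((m:ℤ)+1+i) ((m:ℤ)+1+j) _ _
      (gelfand E 1 ((m:ℤ)+1) (relLow hE) ((m:ℤ)+i+2) ((m:ℤ)+j+2)
        (by omega) (by omega) (by omega) (by omega))
    rw [brk_def] at h0
    exact sub_eq_zero.mp h0
  · exact (crossXV m n E hE i j hi1 hi hj hj2).eq
  · exact ((crossXV m n E hE j i hj1 hj hi hi2).symm).eq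
  · rw [XV_pos m n E i hi hi2, XV_pos m n E j hj hj2]
    have h0 := brk_shift ((n:ℤ)+1-i) ((n:ℤ)+1-j) _ _
      (gelfand (F2 m n E) ((m:ℤ)+2) ((m:ℤ)+n+2) (relF2 hE)
        ((m:ℤ)+(n:ℤ)+3-i) ((m:ℤ)+(n:ℤ)+3-j)
        (by omega) (by omega) (by omega) (by omega))
    rw [brk_def] at h0
    exact sub_eq_zero.mp h0
end

section
/- With ω_i, Ω_i as defined: [ω_i, ω_j] = 0, [ω_i, Ω_j] = 0, and [Ω_i, Ω_j] = 0 in U(sl(m+1/n+1)) for all i, j ∈ {-m,...,-1} ∪ {1,...,n}. -/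
/-! ### Auxiliary lemmas -/

section Aux

variable {U : Type*} [Ring U]

lemma podd_self (m : ℕ) (p : ℤ) : podd m p p = false := Bool.xor_self _

lemma podd_low {m : ℕ} {x y : ℤ} (h1 : x ≤ (m : ℤ) + 1) (h2 : y ≤ (m : ℤ) + 1) :
    podd m x y = false := by
  unfold podd
  rw [decide_eq_false (by omega), decide_eq_false (by omega)]
  rfl

lemma podd_high {m : ℕ} {x y : ℤ} (h1 : (m : ℤ) + 2 ≤ x) (h2 : (m : ℤ) + 2 ≤ y) :
    podd m x y = false := by
  unfold podd
  rw [decide_eq_true (by omega : (m : ℤ) + 1 < x), decide_eq_true (by omega : (m : ℤ) + 1 < y)]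
  rfl

/-- Cross-block commutation: if the index sets are disjoint in the right way and one of the
two elements is even, the two root vectors commute. -/
lemma gcomm {m n : ℕ} {E : ℤ → ℤ → U} (hE : glRel m n E) {p q r s : ℤ}
    (hp1 : 1 ≤ p) (hp2 : p ≤ (m : ℤ) + n + 2) (hq1 : 1 ≤ q) (hq2 : q ≤ (m : ℤ) + n + 2)
    (hr1 : 1 ≤ r) (hr2 : r ≤ (m : ℤ) + n + 2) (hs1 : 1 ≤ s) (hs2 : s ≤ (m : ℤ) + n + 2)
    (hqr : q ≠ r) (hsp : s ≠ p)
    (hpar : podd m p q = false ∨ podd m r s = false) :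
    Commute (E p q) (E r s) := by
  have h := hE p q r s hp1 hp2 hq1 hq2 hr1 hr2 hs1 hs2
  have hs1' : ssgn m p q r s = 1 := by
    unfold ssgn
    rcases hpar with h' | h' <;> rw [h'] <;> simp
  rw [hs1', one_smul, one_smul, if_neg hqr, if_neg hsp] at h
  show E p q * E r s = E r s * E p q
  rw [h]; abel

/-- Even (single-block) commutation relations. -/
def CRel (E : ℤ → ℤ → U) (lo hi : ℤ) : Prop :=
  ∀ a b c d : ℤ, lo ≤ a → a ≤ hi → lo ≤ b → b ≤ hi → lo ≤ c → c ≤ hi → lo ≤ d → d ≤ hi →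
    E a b * E c d = E c d * E a b +
      ((if b = c then E a d else 0) - (if d = a then E c b else 0))

lemma crel_low {m n : ℕ} {E : ℤ → ℤ → U} (hE : glRel m n E) : CRel E 1 ((m : ℤ) + 1) := by
  intro a b c d ha1 ha2 hb1 hb2 hc1 hc2 hd1 hd2
  have h := hE a b c d ha1 (by omega) hb1 (by omega) hc1 (by omega) hd1 (by omega)
  have hs : ssgn m a b c d = 1 := by
    unfold ssgn
    rw [podd_low ha2 hb2]
    simp
  rw [hs, one_smul, one_smul] at h
  exact h

lemma crel_high {m n : ℕ} {E : ℤ → ℤ → U} (hE : glRel m n E) :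
    CRel E ((m : ℤ) + 2) ((m : ℤ) + n + 2) := by
  intro a b c d ha1 ha2 hb1 hb2 hc1 hc2 hd1 hd2
  have h := hE a b c d (by omega) ha2 (by omega) hb2 (by omega) hc2 (by omega) hd2
  have hs : ssgn m a b c d = 1 := by
    unfold ssgn
    rw [podd_high ha1 hb1]
    simp
  rw [hs, one_smul, one_smul] at h
  exact h

namespace CRel

variable {E : ℤ → ℤ → U} {lo hi : ℤ}

lemma comm_of_ne (R : CRel E lo hi) {p q r s : ℤ}
    (hp1 : lo ≤ p) (hp2 : p ≤ hi) (hq1 : lo ≤ q) (hq2 : q ≤ hi)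
    (hr1 : lo ≤ r) (hr2 : r ≤ hi) (hs1 : lo ≤ s) (hs2 : s ≤ hi)
    (hqr : q ≠ r) (hsp : s ≠ p) :
    Commute (E p q) (E r s) := by
  have h := R p q r s hp1 hp2 hq1 hq2 hr1 hr2 hs1 hs2
  rw [if_neg hqr, if_neg hsp] at h
  show E p q * E r s = E r s * E p q
  rw [h]; abel

lemma rel_mid (R : CRel E lo hi) {a b d : ℤ}
    (ha1 : lo ≤ a) (ha2 : a ≤ hi) (hb1 : lo ≤ b) (hb2 : b ≤ hi)
    (hd1 : lo ≤ d) (hd2 : d ≤ hi) (hda : d ≠ a) :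
    E a b * E b d = E b d * E a b + E a d := by
  have h := R a b b d ha1 ha2 hb1 hb2 hb1 hb2 hd1 hd2
  rw [if_pos rfl, if_neg hda] at h
  rw [h]; abel

lemma rel_hit (R : CRel E lo hi) {a b c : ℤ}
    (ha1 : lo ≤ a) (ha2 : a ≤ hi) (hb1 : lo ≤ b) (hb2 : b ≤ hi)
    (hc1 : lo ≤ c) (hc2 : c ≤ hi) (hbc : b ≠ c) :
    E a b * E c a = E c a * E a b - E c b := by
  have h := R a b c a ha1 ha2 hb1 hb2 hc1 hc2 ha1 ha2
  rw [if_neg hbc, if_pos rfl] at h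
  rw [h]; abel

/-- Weight-zero quadratic terms commute with diagonal elements. -/
lemma diagTermComm (R : CRel E lo hi) {p u v : ℤ}
    (hp1 : lo ≤ p) (hp2 : p ≤ hi) (hu1 : lo ≤ u) (hu2 : u ≤ hi)
    (hv1 : lo ≤ v) (hv2 : v ≤ hi) :
    Commute (E p p) (E u v * E v u) := by
  by_cases hpu : p = u
  · subst hpu
    by_cases hpv : p = v
    · subst hpv
      exact (Commute.refl _).mul_right (Commute.refl _)
    · have h1 : E p p * E p v = E p v * E p p + E p v := by
        have h := R p p p v hp1 hp2 hp1 hp2 hp1 hp2 hv1 hv2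
        rw [if_pos rfl, if_neg (Ne.symm hpv)] at h
        rw [h]; abel
      have h2 : E p p * E v p = E v p * E p p - E v p := by
        have h := R p p v p hp1 hp2 hp1 hp2 hv1 hv2 hp1 hp2
        rw [if_neg hpv, if_pos rfl] at h
        rw [h]; abel
      show E p p * (E p v * E v p) = (E p v * E v p) * E p p
      calc E p p * (E p v * E v p) = (E p p * E p v) * E v p := by noncomm_ring
        _ = (E p v * E p p + E p v) * E v p := by rw [h1]
        _ = E p v * (E p p * E v p) + E p v * E v p := by noncomm_ring
        _ = E p v * (E v p * E p p - E v p) + E p v * E v p := by rw [h2]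
        _ = (E p v * E v p) * E p p := by noncomm_ring
  · by_cases hpv : p = v
    · subst hpv
      have h1 : E p p * E u p = E u p * E p p - E u p := by
        have h := R p p u p hp1 hp2 hp1 hp2 hu1 hu2 hp1 hp2
        rw [if_neg hpu, if_pos rfl] at h
        rw [h]; abel
      have h2 : E p p * E p u = E p u * E p p + E p u := by
        have h := R p p p u hp1 hp2 hp1 hp2 hp1 hp2 hu1 hu2
        rw [if_pos rfl, if_neg (Ne.symm hpu)] at h
        rw [h]; abel
      show E p p * (E u p * E p u) = (E u p * E p u) * E p p
      calc E p p * (E u p * E p u) = (E p p * E u p) * E p u := by noncomm_ring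
        _ = (E u p * E p p - E u p) * E p u := by rw [h1]
        _ = E u p * (E p p * E p u) - E u p * E p u := by noncomm_ring
        _ = E u p * (E p u * E p p + E p u) - E u p * E p u := by rw [h2]
        _ = (E u p * E p u) * E p p := by noncomm_ring
    · exact (R.comm_of_ne hp1 hp2 hp1 hp2 hu1 hu2 hv1 hv2 hpu (Ne.symm hpv)).mul_right
        (R.comm_of_ne hp1 hp2 hp1 hp2 hv1 hv2 hu1 hu2 hpv (Ne.symm hpu))

end CRel

/-- Abstract key identity for the "lower" family. -/
lemma key1 {R : Type*} [Ring R] (x X y Y z Z : R)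
    (hXy : X*y = y*X - z) (hxy : x*y = y*x) (hXY : X*Y = Y*X) (hxY : x*Y = Y*x + Z)
    (hXz : X*z = z*X) (hXZ : X*Z = Z*X + Y) (hxz : x*z = z*x - y) (hxZ : x*Z = Z*x) :
    (x*X) * (y*Y + z*Z) = (y*Y + z*Z) * (x*X) := by
  have h1 : x*X*(y*Y) = y*Y*(x*X) + y*Z*X - x*z*Y := by
    calc x*X*(y*Y) = x*(X*y)*Y := by noncomm_ring
      _ = x*(y*X - z)*Y := by rw [hXy]
      _ = (x*y)*(X*Y) - x*z*Y := by noncomm_ring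
      _ = (y*x)*(Y*X) - x*z*Y := by rw [hxy, hXY]
      _ = y*(x*Y)*X - x*z*Y := by noncomm_ring
      _ = y*(Y*x + Z)*X - x*z*Y := by rw [hxY]
      _ = y*Y*(x*X) + y*Z*X - x*z*Y := by noncomm_ring
  have h2 : x*X*(z*Z) = z*Z*(x*X) + x*z*Y - y*Z*X := by
    calc x*X*(z*Z) = x*(X*z)*Z := by noncomm_ring
      _ = x*(z*X)*Z := by rw [hXz]
      _ = (x*z)*(X*Z) := by noncomm_ring
      _ = (x*z)*(Z*X + Y) := by rw [hXZ]
      _ = ((x*z)*Z)*X + x*z*Y := by noncomm_ring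
      _ = ((z*x - y)*Z)*X + x*z*Y := by rw [hxz]
      _ = z*(x*Z)*X - y*Z*X + x*z*Y := by noncomm_ring
      _ = z*(Z*x)*X - y*Z*X + x*z*Y := by rw [hxZ]
      _ = z*Z*(x*X) + x*z*Y - y*Z*X := by noncomm_ring
  calc (x*X)*(y*Y + z*Z) = x*X*(y*Y) + x*X*(z*Z) := by noncomm_ring
    _ = (y*Y*(x*X) + y*Z*X - x*z*Y) + (z*Z*(x*X) + x*z*Y - y*Z*X) := by rw [h1, h2]
    _ = (y*Y + z*Z)*(x*X) := by noncomm_ring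

/-- Abstract key identity for the "upper" family. -/
lemma key2 {S : Type*} [Ring S] (p P q Q r R : S)
    (hrp : r*p = p*r + q) (hrP : r*P = P*r) (hRp : R*p = p*R) (hRP : R*P = P*R - Q)
    (hrq : r*q = q*r) (hrQ : r*Q = Q*r - P) (hRq : R*q = q*R + p) (hRQ : R*Q = Q*R) :
    (r*R) * (p*P + q*Q) = (p*P + q*Q) * (r*R) := by
  have h1 : r*R*(p*P) = p*P*(r*R) - p*Q*r + p*P + q*P*R - q*Q := by
    calc r*R*(p*P) = r*(R*p)*P := by noncomm_ring
      _ = r*(p*R)*P := by rw [hRp]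
      _ = (r*p)*(R*P) := by noncomm_ring
      _ = (p*r + q)*(P*R - Q) := by rw [hrp, hRP]
      _ = p*(r*P)*R - p*(r*Q) + q*P*R - q*Q := by noncomm_ring
      _ = p*(P*r)*R - p*(Q*r - P) + q*P*R - q*Q := by rw [hrP, hrQ]
      _ = p*P*(r*R) - p*Q*r + p*P + q*P*R - q*Q := by noncomm_ring
  have h2 : r*R*(q*Q) = q*Q*(r*R) - q*P*R + p*Q*r - p*P + q*Q := by
    calc r*R*(q*Q) = r*(R*q)*Q := by noncomm_ring
      _ = r*(q*R + p)*Q := by rw [hRq]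
      _ = (r*q)*(R*Q) + (r*p)*Q := by noncomm_ring
      _ = (q*r)*(Q*R) + (p*r + q)*Q := by rw [hrq, hRQ, hrp]
      _ = q*(r*Q)*R + p*(r*Q) + q*Q := by noncomm_ring
      _ = q*(Q*r - P)*R + p*(Q*r - P) + q*Q := by rw [hrQ]
      _ = q*Q*(r*R) - q*P*R + p*Q*r - p*P + q*Q := by noncomm_ring
  calc (r*R)*(p*P + q*Q) = r*R*(p*P) + r*R*(q*Q) := by noncomm_ring
    _ = (p*P*(r*R) - p*Q*r + p*P + q*P*R - q*Q)
        + (q*Q*(r*R) - q*P*R + p*Q*r - p*P + q*Q) := by rw [h1, h2]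
    _ = (p*P + q*Q)*(r*R) := by noncomm_ring

/-- Commutation of the "lower" quadratic sums. -/
lemma Scomm {E : ℤ → ℤ → U} {lo hi : ℤ} (R : CRel E lo hi) {b d : ℤ}
    (hb : lo ≤ b) (hbd : b ≤ d) (hd : d ≤ hi) :
    Commute (∑ a ∈ Finset.Icc lo (b-1), E b a * E a b)
            (∑ c ∈ Finset.Icc lo (d-1), E d c * E c d) := by
  rcases eq_or_lt_of_le hbd with rfl | hlt
  · exact Commute.refl _
  refine Commute.sum_left _ _ _ fun a ha => ?_
  rw [Finset.mem_Icc] at ha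
  obtain ⟨ha1, ha2⟩ := ha
  have hsub : ({a, b} : Finset ℤ) ⊆ Finset.Icc lo (d-1) := by
    intro x hx
    simp only [Finset.mem_insert, Finset.mem_singleton] at hx
    rw [Finset.mem_Icc]
    rcases hx with rfl | rfl <;> omega
  rw [← Finset.sum_sdiff hsub]
  refine Commute.add_right ?_ ?_
  · refine Commute.sum_right _ _ _ fun c hc => ?_
    rw [Finset.mem_sdiff, Finset.mem_Icc] at hc
    obtain ⟨⟨hc1, hc2⟩, hc3⟩ := hc
    simp only [Finset.mem_insert, Finset.mem_singleton, not_or] at hc3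
    obtain ⟨hca, hcb⟩ := hc3
    exact ((R.comm_of_ne (by omega) (by omega) (by omega) (by omega) (by omega) (by omega)
        (by omega) (by omega) (by omega) (by omega)).mul_right
      (R.comm_of_ne (by omega) (by omega) (by omega) (by omega) (by omega) (by omega)
        (by omega) (by omega) (by omega) (by omega))).mul_left
      ((R.comm_of_ne (by omega) (by omega) (by omega) (by omega) (by omega) (by omega)
        (by omega) (by omega) (by omega) (by omega)).mul_right
      (R.comm_of_ne (by omega) (by omega) (by omega) (by omega) (by omega) (by omega)
        (by omega) (by omega) (by omega) (by omega)))
  · rw [Finset.sum_pair (by omega : a ≠ b)]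
    exact key1 (E b a) (E a b) (E d a) (E a d) (E d b) (E b d)
      (R.rel_hit (by omega) (by omega) (by omega) (by omega) (by omega) (by omega) (by omega))
      (R.comm_of_ne (by omega) (by omega) (by omega) (by omega) (by omega) (by omega)
        (by omega) (by omega) (by omega) (by omega))
      (R.comm_of_ne (by omega) (by omega) (by omega) (by omega) (by omega) (by omega)
        (by omega) (by omega) (by omega) (by omega))
      (R.rel_mid (by omega) (by omega) (by omega) (by omega) (by omega) (by omega) (by omega))
      (R.comm_of_ne (by omega) (by omega) (by omega) (by omega) (by omega) (by omega)
        (by omega) (by omega) (by omega) (by omega))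
      (R.rel_mid (by omega) (by omega) (by omega) (by omega) (by omega) (by omega) (by omega))
      (R.rel_hit (by omega) (by omega) (by omega) (by omega) (by omega) (by omega) (by omega))
      (R.comm_of_ne (by omega) (by omega) (by omega) (by omega) (by omega) (by omega)
        (by omega) (by omega) (by omega) (by omega))

/-- Commutation of the "upper" quadratic sums. -/
lemma Tcomm {E : ℤ → ℤ → U} {lo hi : ℤ} (R : CRel E lo hi) {a a' : ℤ}
    (ha : lo ≤ a) (haa : a ≤ a') (ha' : a' ≤ hi) :
    Commute (∑ d ∈ Finset.Icc (a+1) hi, E d a * E a d)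
            (∑ d' ∈ Finset.Icc (a'+1) hi, E d' a' * E a' d') := by
  rcases eq_or_lt_of_le haa with rfl | hlt
  · exact Commute.refl _
  refine Commute.sum_right _ _ _ fun d' hd' => ?_
  rw [Finset.mem_Icc] at hd'
  obtain ⟨hd1, hd2⟩ := hd'
  have hsub : ({a', d'} : Finset ℤ) ⊆ Finset.Icc (a+1) hi := by
    intro x hx
    simp only [Finset.mem_insert, Finset.mem_singleton] at hx
    rw [Finset.mem_Icc]
    rcases hx with rfl | rfl <;> omega
  rw [← Finset.sum_sdiff hsub]
  refine Commute.add_left ?_ ?_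
  · refine Commute.sum_left _ _ _ fun d hd => ?_
    rw [Finset.mem_sdiff, Finset.mem_Icc] at hd
    obtain ⟨⟨hda1, hda2⟩, hd3⟩ := hd
    simp only [Finset.mem_insert, Finset.mem_singleton, not_or] at hd3
    obtain ⟨hda', hdd'⟩ := hd3
    exact ((R.comm_of_ne (by omega) (by omega) (by omega) (by omega) (by omega) (by omega)
        (by omega) (by omega) (by omega) (by omega)).mul_right
      (R.comm_of_ne (by omega) (by omega) (by omega) (by omega) (by omega) (by omega)
        (by omega) (by omega) (by omega) (by omega))).mul_left
      ((R.comm_of_ne (by omega) (by omega) (by omega) (by omega) (by omega) (by omega)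
        (by omega) (by omega) (by omega) (by omega)).mul_right
      (R.comm_of_ne (by omega) (by omega) (by omega) (by omega) (by omega) (by omega)
        (by omega) (by omega) (by omega) (by omega)))
  · rw [Finset.sum_pair (by omega : a' ≠ d')]
    exact (key2 (E a' a) (E a a') (E d' a) (E a d') (E d' a') (E a' d')
      (R.rel_mid (by omega) (by omega) (by omega) (by omega) (by omega) (by omega) (by omega))
      (R.comm_of_ne (by omega) (by omega) (by omega) (by omega) (by omega) (by omega)
        (by omega) (by omega) (by omega) (by omega))
      (R.comm_of_ne (by omega) (by omega) (by omega) (by omega) (by omega) (by omega)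
        (by omega) (by omega) (by omega) (by omega))
      (R.rel_hit (by omega) (by omega) (by omega) (by omega) (by omega) (by omega) (by omega))
      (R.comm_of_ne (by omega) (by omega) (by omega) (by omega) (by omega) (by omega)
        (by omega) (by omega) (by omega) (by omega))
      (R.rel_hit (by omega) (by omega) (by omega) (by omega) (by omega) (by omega) (by omega))
      (R.rel_mid (by omega) (by omega) (by omega) (by omega) (by omega) (by omega) (by omega))
      (R.comm_of_ne (by omega) (by omega) (by omega) (by omega) (by omega) (by omega)
        (by omega) (by omega) (by omega) (by omega))).symm

/-- Diagonal elements commute with each other. -/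
lemma diagComm {m n : ℕ} {E : ℤ → ℤ → U} (hE : glRel m n E) {p q : ℤ}
    (hp1 : 1 ≤ p) (hp2 : p ≤ (m : ℤ) + n + 2) (hq1 : 1 ≤ q) (hq2 : q ≤ (m : ℤ) + n + 2) :
    Commute (E p p) (E q q) := by
  by_cases hpq : p = q
  · subst hpq; exact Commute.refl _
  · exact gcomm hE hp1 hp2 hp1 hp2 hq1 hq2 hq1 hq2 hpq (Ne.symm hpq)
      (Or.inl (podd_self m p))

/-- Diagonal elements commute with weight-zero quadratic terms whose indices lie
in a common block. -/
lemma diagTermGlob {m n : ℕ} {E : ℤ → ℤ → U} (hE : glRel m n E) {p u v : ℤ}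
    (hp1 : 1 ≤ p) (hp2 : p ≤ (m : ℤ) + n + 2)
    (hu1 : 1 ≤ u) (hu2 : u ≤ (m : ℤ) + n + 2) (hv1 : 1 ≤ v) (hv2 : v ≤ (m : ℤ) + n + 2)
    (hblk : (u ≤ (m : ℤ) + 1 ∧ v ≤ (m : ℤ) + 1) ∨ ((m : ℤ) + 2 ≤ u ∧ (m : ℤ) + 2 ≤ v)) :
    Commute (E p p) (E u v * E v u) := by
  rcases hblk with ⟨hu', hv'⟩ | ⟨hu', hv'⟩
  · by_cases hp' : p ≤ (m : ℤ) + 1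
    · exact (crel_low hE).diagTermComm hp1 hp' hu1 hu' hv1 hv'
    · exact (gcomm hE hp1 hp2 hp1 hp2 hu1 hu2 hv1 hv2 (by omega) (by omega)
        (Or.inl (podd_self m p))).mul_right
        (gcomm hE hp1 hp2 hp1 hp2 hv1 hv2 hu1 hu2 (by omega) (by omega)
          (Or.inl (podd_self m p)))
  · by_cases hp' : (m : ℤ) + 2 ≤ p
    · exact (crel_high hE).diagTermComm hp' hp2 hu' hu2 hv' hv2
    · exact (gcomm hE hp1 hp2 hp1 hp2 hu1 hu2 hv1 hv2 (by omega) (by omega)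
        (Or.inl (podd_self m p))).mul_right
        (gcomm hE hp1 hp2 hp1 hp2 hv1 hv2 hu1 hu2 (by omega) (by omega)
          (Or.inl (podd_self m p)))

/-- Normal form of `Ω_i` for `i < 0`. -/
lemma OmegaV_neg (m n : ℕ) (E : ℤ → ℤ → U) {i : ℤ} (hi : i < 0) :
    OmegaV m n E i =
      1 - ∑ a ∈ Finset.Icc 1 ((m : ℤ) + i + 1), E ((m : ℤ) + i + 2) a * E a ((m : ℤ) + i + 2) := by
  rw [OmegaV, if_pos hi]
  congr 1
  have hmap : Finset.Icc (1 : ℤ) ((m : ℤ) + i + 1)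
      = Finset.map (addLeftEmbedding ((m : ℤ) + 1)) (Finset.Icc (-(m : ℤ)) i) := by
    rw [Finset.map_add_left_Icc]
    congr 1 <;> ring
  rw [hmap, Finset.sum_map]
  refine Finset.sum_congr rfl fun k _ => ?_
  rw [addLeftEmbedding_apply]
  have e1 : (m : ℤ) + 1 + k = (m : ℤ) + k + 1 := by ring
  rw [e1]

/-- Normal form of `Ω_i` for `i > 0`. -/
lemma OmegaV_pos (m n : ℕ) (E : ℤ → ℤ → U) {i : ℤ} (hi : 0 < i) :
    OmegaV m n E i =
      1 - ∑ d ∈ Finset.Icc ((m : ℤ) + i + 2) ((m : ℤ) + n + 2),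
        E d ((m : ℤ) + i + 1) * E ((m : ℤ) + i + 1) d := by
  rw [OmegaV, if_neg (by omega)]
  congr 1
  have hmap : Finset.Icc ((m : ℤ) + i + 2) ((m : ℤ) + n + 2)
      = Finset.map (addLeftEmbedding ((m : ℤ) + 2)) (Finset.Icc i (n : ℤ)) := by
    rw [Finset.map_add_left_Icc]
    congr 1 <;> ring
  rw [hmap, Finset.sum_map]
  refine Finset.sum_congr rfl fun k _ => ?_
  rw [addLeftEmbedding_apply]
  have e1 : (m : ℤ) + 2 + k = (m : ℤ) + k + 2 := by ring
  rw [e1]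

/-- Normal form of `ω_i` for `i < 0`. -/
lemma omegaV_neg (m n : ℕ) (E : ℤ → ℤ → U) {i : ℤ} (hi : i < 0) :
    omegaV m n E i =
      (((m : ℤ) + 1 + i : ℤ) : U) + (E 1 1 - E ((m : ℤ) + i + 2) ((m : ℤ) + i + 2)) := by
  rw [omegaV, if_pos hi, hV, if_neg (by omega : ¬(-(m : ℤ) ≤ 0 ∧ 0 ≤ i)), one_smul]
  have e1 : (m : ℤ) + -(m : ℤ) + 1 = 1 := by ring
  rw [e1]

/-- Normal form of `ω_i` for `i > 0`. -/
lemma omegaV_pos (m n : ℕ) (E : ℤ → ℤ → U) {i : ℤ} (hi : 0 < i) :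
    omegaV m n E i =
      (((n : ℤ) + 1 - i : ℤ) : U)
        + (E ((m : ℤ) + i + 1) ((m : ℤ) + i + 1) - E ((m : ℤ) + (n : ℤ) + 2) ((m : ℤ) + (n : ℤ) + 2)) := by
  rw [omegaV, if_neg (by omega : ¬ i < 0), hV, if_neg (by omega : ¬(i ≤ 0 ∧ 0 ≤ (n : ℤ))), one_smul]

/-- Generic commutation of the `ω`-type elements. -/
lemma omega_comm_gen {m n : ℕ} {E : ℤ → ℤ → U} (hE : glRel m n E) (c c' : ℤ) {p q p' q' : ℤ}
    (hp1 : 1 ≤ p) (hp2 : p ≤ (m : ℤ) + n + 2) (hq1 : 1 ≤ q) (hq2 : q ≤ (m : ℤ) + n + 2)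
    (hp1' : 1 ≤ p') (hp2' : p' ≤ (m : ℤ) + n + 2) (hq1' : 1 ≤ q') (hq2' : q' ≤ (m : ℤ) + n + 2) :
    ((c : U) + (E p p - E q q)) * ((c' : U) + (E p' p' - E q' q'))
      = ((c' : U) + (E p' p' - E q' q')) * ((c : U) + (E p p - E q q)) := by
  have A : Commute (E p p) ((c' : U) + (E p' p' - E q' q')) :=
    (Int.cast_commute c' (E p p)).symm.add_right
      ((diagComm hE hp1 hp2 hp1' hp2').sub_right (diagComm hE hp1 hp2 hq1' hq2'))
  have B : Commute (E q q) ((c' : U) + (E p' p' - E q' q')) :=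
    (Int.cast_commute c' (E q q)).symm.add_right
      ((diagComm hE hq1 hq2 hp1' hp2').sub_right (diagComm hE hq1 hq2 hq1' hq2'))
  exact ((Int.cast_commute c _).add_left (A.sub_left B)).eq

/-- Generic commutation of an `ω`-type element with an `Ω`-type element. -/
lemma omega_Omega_gen {m n : ℕ} {E : ℤ → ℤ → U} (hE : glRel m n E) (c : ℤ) {p q : ℤ}
    (hp1 : 1 ≤ p) (hp2 : p ≤ (m : ℤ) + n + 2) (hq1 : 1 ≤ q) (hq2 : q ≤ (m : ℤ) + n + 2)
    (s : Finset ℤ) (u v : ℤ → ℤ)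
    (h : ∀ x ∈ s, (1 ≤ u x ∧ u x ≤ (m : ℤ) + n + 2) ∧ (1 ≤ v x ∧ v x ≤ (m : ℤ) + n + 2) ∧
      ((u x ≤ (m : ℤ) + 1 ∧ v x ≤ (m : ℤ) + 1) ∨ ((m : ℤ) + 2 ≤ u x ∧ (m : ℤ) + 2 ≤ v x))) :
    ((c : U) + (E p p - E q q)) * (1 - ∑ x ∈ s, E (u x) (v x) * E (v x) (u x))
      = (1 - ∑ x ∈ s, E (u x) (v x) * E (v x) (u x)) * ((c : U) + (E p p - E q q)) := by
  have hsum : ∀ r : ℤ, 1 ≤ r → r ≤ (m : ℤ) + n + 2 →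
      Commute (E r r) (∑ x ∈ s, E (u x) (v x) * E (v x) (u x)) := fun r hr1 hr2 =>
    Commute.sum_right _ _ _ fun x hx =>
      diagTermGlob hE hr1 hr2 (h x hx).1.1 (h x hx).1.2 (h x hx).2.1.1 (h x hx).2.1.2
        (h x hx).2.2
  exact ((Int.cast_commute c _).add_left
    (((Commute.one_right _).sub_right (hsum p hp1 hp2)).sub_left
      ((Commute.one_right _).sub_right (hsum q hq1 hq2)))).eq

/-- Commutation of two negative-index `Ω`'s. -/
lemma OmOm_neg {m n : ℕ} {E : ℤ → ℤ → U} (hE : glRel m n E) {i j : ℤ}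
    (hi : i < 0) (hj : j < 0) (hi1 : -(m : ℤ) ≤ i) (hj1 : -(m : ℤ) ≤ j) :
    Commute
      (1 - ∑ a ∈ Finset.Icc 1 ((m : ℤ) + i + 1), E ((m : ℤ) + i + 2) a * E a ((m : ℤ) + i + 2))
      (1 - ∑ a ∈ Finset.Icc 1 ((m : ℤ) + j + 1), E ((m : ℤ) + j + 2) a * E a ((m : ℤ) + j + 2)) := by
  have e1 : (m : ℤ) + i + 1 = ((m : ℤ) + i + 2) - 1 := by ring
  have e2 : (m : ℤ) + j + 1 = ((m : ℤ) + j + 2) - 1 := by ring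
  rw [e1, e2]
  have hS : Commute
      (∑ a ∈ Finset.Icc 1 (((m : ℤ) + i + 2) - 1), E ((m : ℤ) + i + 2) a * E a ((m : ℤ) + i + 2))
      (∑ a ∈ Finset.Icc 1 (((m : ℤ) + j + 2) - 1), E ((m : ℤ) + j + 2) a * E a ((m : ℤ) + j + 2)) := by
    rcases le_total i j with h | h
    · exact Scomm (crel_low hE) (by omega) (by omega) (by omega)
    · exact (Scomm (crel_low hE) (by omega) (by omega) (by omega)).symm
  exact (Commute.one_left _).sub_left ((Commute.one_right _).sub_right hS)

/-- Commutation of two positive-index `Ω`'s. -/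
lemma OmOm_pos {m n : ℕ} {E : ℤ → ℤ → U} (hE : glRel m n E) {i j : ℤ}
    (hi : 0 < i) (hj : 0 < j) (hi2 : i ≤ (n : ℤ)) (hj2 : j ≤ (n : ℤ)) :
    Commute
      (1 - ∑ d ∈ Finset.Icc ((m : ℤ) + i + 2) ((m : ℤ) + n + 2),
        E d ((m : ℤ) + i + 1) * E ((m : ℤ) + i + 1) d)
      (1 - ∑ d ∈ Finset.Icc ((m : ℤ) + j + 2) ((m : ℤ) + n + 2),
        E d ((m : ℤ) + j + 1) * E ((m : ℤ) + j + 1) d) := by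
  have e1 : (m : ℤ) + i + 2 = ((m : ℤ) + i + 1) + 1 := by ring
  have e2 : (m : ℤ) + j + 2 = ((m : ℤ) + j + 1) + 1 := by ring
  rw [e1, e2]
  have hS : Commute
      (∑ d ∈ Finset.Icc (((m : ℤ) + i + 1) + 1) ((m : ℤ) + n + 2),
        E d ((m : ℤ) + i + 1) * E ((m : ℤ) + i + 1) d)
      (∑ d ∈ Finset.Icc (((m : ℤ) + j + 1) + 1) ((m : ℤ) + n + 2),
        E d ((m : ℤ) + j + 1) * E ((m : ℤ) + j + 1) d) := by
    rcases le_total i j with h | h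
    · exact Tcomm (crel_high hE) (by omega) (by omega) (by omega)
    · exact (Tcomm (crel_high hE) (by omega) (by omega) (by omega)).symm
  exact (Commute.one_left _).sub_left ((Commute.one_right _).sub_right hS)

/-- Commutation of a negative-index `Ω` with a positive-index `Ω`. -/
lemma OmOm_mixed {m n : ℕ} {E : ℤ → ℤ → U} (hE : glRel m n E) {i j : ℤ}
    (hi : i < 0) (hj : 0 < j) (hi1 : -(m : ℤ) ≤ i) (hj2 : j ≤ (n : ℤ)) :
    Commute
      (1 - ∑ a ∈ Finset.Icc 1 ((m : ℤ) + i + 1), E ((m : ℤ) + i + 2) a * E a ((m : ℤ) + i + 2))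
      (1 - ∑ d ∈ Finset.Icc ((m : ℤ) + j + 2) ((m : ℤ) + n + 2),
        E d ((m : ℤ) + j + 1) * E ((m : ℤ) + j + 1) d) := by
  have hS : Commute
      (∑ a ∈ Finset.Icc 1 ((m : ℤ) + i + 1), E ((m : ℤ) + i + 2) a * E a ((m : ℤ) + i + 2))
      (∑ d ∈ Finset.Icc ((m : ℤ) + j + 2) ((m : ℤ) + n + 2),
        E d ((m : ℤ) + j + 1) * E ((m : ℤ) + j + 1) d) := by
    refine Commute.sum_left _ _ _ fun a ha => ?_
    refine Commute.sum_right _ _ _ fun d hd => ?_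
    rw [Finset.mem_Icc] at ha hd
    have hb1 : podd m ((m : ℤ) + i + 2) a = false := podd_low (by omega) (by omega)
    have hb2 : podd m a ((m : ℤ) + i + 2) = false := podd_low (by omega) (by omega)
    exact ((gcomm hE (by omega) (by omega) (by omega) (by omega) (by omega) (by omega)
        (by omega) (by omega) (by omega) (by omega) (Or.inl hb1)).mul_right
      (gcomm hE (by omega) (by omega) (by omega) (by omega) (by omega) (by omega)
        (by omega) (by omega) (by omega) (by omega) (Or.inl hb1))).mul_left
      ((gcomm hE (by omega) (by omega) (by omega) (by omega) (by omega) (by omega)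
        (by omega) (by omega) (by omega) (by omega) (Or.inl hb2)).mul_right
      (gcomm hE (by omega) (by omega) (by omega) (by omega) (by omega) (by omega)
        (by omega) (by omega) (by omega) (by omega) (Or.inl hb2)))
  exact (Commute.one_left _).sub_left ((Commute.one_right _).sub_right hS)

end Aux

/-- `[ω_i, ω_j] = 0`, `[ω_i, Ω_j] = 0` and `[Ω_i, Ω_j] = 0` in `U(sl(m+1/n+1))`
for all `i, j ∈ {-m,…,-1} ∪ {1,…,n}`. -/
theorem stmt11 (m n : ℕ) (U : Type*) [Ring U] (E : ℤ → ℤ → U) (hE : glRel m n E) :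
    ∀ i j : ℤ, -(m : ℤ) ≤ i → i ≤ (n : ℤ) → i ≠ 0 →
      -(m : ℤ) ≤ j → j ≤ (n : ℤ) → j ≠ 0 →
      omegaV m n E i * omegaV m n E j = omegaV m n E j * omegaV m n E i ∧
      omegaV m n E i * OmegaV m n E j = OmegaV m n E j * omegaV m n E i ∧
      OmegaV m n E i * OmegaV m n E j = OmegaV m n E j * OmegaV m n E i := by
  intro i j hi1 hi2 hi0 hj1 hj2 hj0
  rcases lt_or_gt_of_ne hi0 with hi | hi <;> rcases lt_or_gt_of_ne hj0 with hj | hj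
  · -- i < 0, j < 0
    rw [omegaV_neg m n E hi, omegaV_neg m n E hj, OmegaV_neg m n E hi, OmegaV_neg m n E hj]
    refine ⟨omega_comm_gen hE _ _ (by omega) (by omega) (by omega) (by omega) (by omega)
      (by omega) (by omega) (by omega), ?_, (OmOm_neg hE hi hj hi1 hj1).eq⟩
    exact omega_Omega_gen hE _ (by omega) (by omega) (by omega) (by omega) _
      (fun _ => (m : ℤ) + j + 2) (fun a => a) (fun x hx => by
        rw [Finset.mem_Icc] at hx
        exact ⟨⟨by omega, by omega⟩, ⟨by omega, by omega⟩, Or.inl ⟨by omega, by omega⟩⟩)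
  · -- i < 0, j > 0
    rw [omegaV_neg m n E hi, omegaV_pos m n E hj, OmegaV_neg m n E hi, OmegaV_pos m n E hj]
    refine ⟨omega_comm_gen hE _ _ (by omega) (by omega) (by omega) (by omega) (by omega)
      (by omega) (by omega) (by omega), ?_, (OmOm_mixed hE hi hj hi1 hj2).eq⟩
    exact omega_Omega_gen hE _ (by omega) (by omega) (by omega) (by omega) _
      (fun d => d) (fun _ => (m : ℤ) + j + 1) (fun x hx => by
        rw [Finset.mem_Icc] at hx
        exact ⟨⟨by omega, by omega⟩, ⟨by omega, by omega⟩, Or.inr ⟨by omega, by omega⟩⟩)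
  · -- i > 0, j < 0
    rw [omegaV_pos m n E hi, omegaV_neg m n E hj, OmegaV_pos m n E hi, OmegaV_neg m n E hj]
    refine ⟨omega_comm_gen hE _ _ (by omega) (by omega) (by omega) (by omega) (by omega)
      (by omega) (by omega) (by omega), ?_, ((OmOm_mixed hE hj hi hj1 hi2).symm).eq⟩
    exact omega_Omega_gen hE _ (by omega) (by omega) (by omega) (by omega) _
      (fun _ => (m : ℤ) + j + 2) (fun a => a) (fun x hx => by
        rw [Finset.mem_Icc] at hx
        exact ⟨⟨by omega, by omega⟩, ⟨by omega, by omega⟩, Or.inl ⟨by omega, by omega⟩⟩)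
  · -- i > 0, j > 0
    rw [omegaV_pos m n E hi, omegaV_pos m n E hj, OmegaV_pos m n E hi, OmegaV_pos m n E hj]
    refine ⟨omega_comm_gen hE _ _ (by omega) (by omega) (by omega) (by omega) (by omega)
      (by omega) (by omega) (by omega), ?_, (OmOm_pos hE hi hj hi2 hj2).eq⟩
    exact omega_Omega_gen hE _ (by omega) (by omega) (by omega) (by omega) _
      (fun d => d) (fun _ => (m : ℤ) + j + 1) (fun x hx => by
        rw [Finset.mem_Icc] at hx
        exact ⟨⟨by omega, by omega⟩, ⟨by omega, by omega⟩, Or.inr ⟨by omega, by omega⟩⟩)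
end

section
/- Let φ: U(G) → U(G⁻ ⊕ H) be the projection along the direct sum decomposition U(G) = U(G⁻ ⊕ H) ⊕ U(G)G⁺, and for i ∈ I₁ ∪ I₂ and c ∈ ℂ define χ_{i,c} g = c·g + φ(Ω_i g) on U(G⁻ ⊕ H). Then χ_{i,c} and χ_{j,c'} commute: χ_{i,c} χ_{j,c'} g = χ_{j,c'} χ_{i,c} g for all g ∈ U(G⁻ ⊕ H). -/
/-- The left ideal `U(G)G⁺ ⊆ U(G)`: the span of elements `u * e(α)`, `α ∈ Δ⁺`,
i.e. `u * E_{ab}` with `a < b` (strictly upper triangular matrix units). -/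
noncomputable def Kid (m n : ℕ) {U : Type*} [Ring U] [Algebra ℂ U] (E : ℤ → ℤ → U) :
    Submodule ℂ U :=
  Submodule.span ℂ
    {x | ∃ u : U, ∃ a b : ℤ, 1 ≤ a ∧ a < b ∧ b ≤ (m : ℤ) + n + 2 ∧ x = u * E a b}

/-- The subalgebra `U(G⁻ ⊕ H) ⊆ U(G)`: generated by the `E_{ab}` with `b ≤ a`
(lower triangular and diagonal matrix units, i.e. the `f`'s and the Cartan). -/
noncomputable def Lsub (m n : ℕ) {U : Type*} [Ring U] [Algebra ℂ U] (E : ℤ → ℤ → U) :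
    Subalgebra ℂ U :=
  Algebra.adjoin ℂ {x | ∃ a b : ℤ, 1 ≤ b ∧ b ≤ a ∧ a ≤ (m : ℤ) + n + 2 ∧ x = E a b}

/-- The operator `χ_{i,c} g = c • g + φ(Ω_i g)`, where `φ` is the projection
`U(G) → U(G⁻ ⊕ H)` along `U(G)G⁺`. -/
noncomputable def chiOp (m n : ℕ) {U : Type*} [Ring U] [Algebra ℂ U] (E : ℤ → ℤ → U)
    (φ : U →ₗ[ℂ] U) (i : ℤ) (c : ℂ) (g : U) : U :=
  c • g + φ (OmegaV m n E i * g)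

/-! Because `U(G)G⁺` is a left ideal killed by `φ` and containing `u - φ u`, we have
`φ (Ω φ u) = φ (Ω u)`, so `χ_{i,c} χ_{j,c'} g = c c' g + c φ(Ω_j g) + c' φ(Ω_i g) + φ(Ω_i Ω_j g)`
and everything reduces to `Ω_i Ω_j = Ω_j Ω_i`. For `i < 0`, `Ω_i = 1 - Σ_{c < b} E_{bc} E_{cb}` with
`b = m+i+2` lies in the even block `gl(m+1)`; in `[E_{xy}, E_{bc} E_{cb}]` with `x, y < b` the two
surviving terms `-δ_{cx} E_{by} E_{xb}` and `δ_{yc} E_{by} E_{xb}` cancel after summing over `c`,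
so `Ω_i` commutes with every `E_{xy}` with `x, y < b`, and trivially with the other even block.
Symmetrically for `i > 0`. In each case one of `Ω_i, Ω_j` is built from `E`'s the other commutes with. -/

section GlRelations

variable {U : Type*} [Ring U]

theorem Ring.lie_mul (x y z : U) : ⁅x, y * z⁆ = ⁅x, y⁆ * z + y * ⁅x, z⁆ := by
  simp only [Ring.lie_def]
  noncomm_ring

def GlRelOn (t : Set ℤ) (E : ℤ → ℤ → U) : Prop :=
  ∀ a ∈ t, ∀ b ∈ t, ∀ c ∈ t, ∀ d ∈ t,
    ⁅E a b, E c d⁆ = (if b = c then E a d else 0) - (if d = a then E c b else 0)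

namespace GlRelOn

variable {t : Set ℤ} {E : ℤ → ℤ → U} {s : Finset ℤ} {b x y : ℤ}

theorem commute_E_sum_E_mul_E (hE : GlRelOn t E) (hb : b ∈ t) (hst : ∀ c ∈ s, c ∈ t)
    (hbs : b ∉ s) (hx : x ∈ s) (hy : y ∈ s) :
    Commute (E x y) (∑ c ∈ s, E b c * E c b) := by
  have hyb : y ≠ b := ne_of_mem_of_not_mem hy hbs
  have hbx : b ≠ x := (ne_of_mem_of_not_mem hx hbs).symm
  have h₁ : ∀ c ∈ s, ⁅E x y, E b c⁆ = -(if c = x then E b y else 0) := fun c hc => by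
    rw [hE x (hst x hx) y (hst y hy) b hb c (hst c hc), if_neg hyb, zero_sub]
  have h₂ : ∀ c ∈ s, ⁅E x y, E c b⁆ = if y = c then E x b else 0 := fun c hc => by
    rw [hE x (hst x hx) y (hst y hy) c (hst c hc) b hb, if_neg hbx, sub_zero]
  rw [commute_iff_lie_eq, Ring.lie_def, Finset.mul_sum, Finset.sum_mul, ← Finset.sum_sub_distrib]
  simp only [← Ring.lie_def]
  calc ∑ c ∈ s, ⁅E x y, E b c * E c b⁆
      = ∑ c ∈ s, (-(if c = x then E b y else 0) * E c b + E b c * if y = c then E x b else 0) :=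
        Finset.sum_congr rfl fun c hc => by rw [Ring.lie_mul, h₁ c hc, h₂ c hc]
    _ = 0 := by
        simp only [neg_mul, ite_mul, zero_mul, mul_ite, mul_zero, Finset.sum_add_distrib,
          Finset.sum_neg_distrib, Finset.sum_ite_eq, Finset.sum_ite_eq', hx, hy, if_true,
          neg_add_cancel]

theorem commute_E_sum_E_mul_E' (hE : GlRelOn t E) (hb : b ∈ t) (hst : ∀ c ∈ s, c ∈ t)
    (hbs : b ∉ s) (hx : x ∈ s) (hy : y ∈ s) :
    Commute (E x y) (∑ c ∈ s, E c b * E b c) := by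
  have hyb : y ≠ b := ne_of_mem_of_not_mem hy hbs
  have hbx : b ≠ x := (ne_of_mem_of_not_mem hx hbs).symm
  have h₁ : ∀ c ∈ s, ⁅E x y, E b c⁆ = -(if c = x then E b y else 0) := fun c hc => by
    rw [hE x (hst x hx) y (hst y hy) b hb c (hst c hc), if_neg hyb, zero_sub]
  have h₂ : ∀ c ∈ s, ⁅E x y, E c b⁆ = if y = c then E x b else 0 := fun c hc => by
    rw [hE x (hst x hx) y (hst y hy) c (hst c hc) b hb, if_neg hbx, sub_zero]
  rw [commute_iff_lie_eq, Ring.lie_def, Finset.mul_sum, Finset.sum_mul, ← Finset.sum_sub_distrib]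
  simp only [← Ring.lie_def]
  calc ∑ c ∈ s, ⁅E x y, E c b * E b c⁆
      = ∑ c ∈ s, ((if y = c then E x b else 0) * E b c + E c b * -(if c = x then E b y else 0)) :=
        Finset.sum_congr rfl fun c hc => by rw [Ring.lie_mul, h₁ c hc, h₂ c hc]
    _ = 0 := by
        simp only [mul_neg, ite_mul, zero_mul, mul_ite, mul_zero, Finset.sum_add_distrib,
          Finset.sum_neg_distrib, Finset.sum_ite_eq, Finset.sum_ite_eq', hx, hy, if_true,
          add_neg_cancel]

end GlRelOn

end GlRelations

namespace glRel

variable {m n : ℕ} {U : Type*} [Ring U] {E : ℤ → ℤ → U}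

theorem lie_eq_of_even (hE : glRel m n E) {a b c d : ℤ}
    (ha : a ∈ Set.Icc 1 ((m : ℤ) + n + 2)) (hb : b ∈ Set.Icc 1 ((m : ℤ) + n + 2))
    (hc : c ∈ Set.Icc 1 ((m : ℤ) + n + 2)) (hd : d ∈ Set.Icc 1 ((m : ℤ) + n + 2))
    (hab : podd m a b = false) :
    ⁅E a b, E c d⁆ = (if b = c then E a d else 0) - (if d = a then E c b else 0) := by
  rw [Ring.lie_def, hE a b c d ha.1 ha.2 hb.1 hb.2 hc.1 hc.2 hd.1 hd.2]
  simp [ssgn, hab]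

theorem glRelOn_lower (hE : glRel m n E) : GlRelOn (Set.Icc 1 ((m : ℤ) + 1)) E := by
  rintro a ⟨ha₁, ha₂⟩ b ⟨hb₁, hb₂⟩ c ⟨hc₁, hc₂⟩ d ⟨hd₁, hd₂⟩
  exact hE.lie_eq_of_even ⟨ha₁, by omega⟩ ⟨hb₁, by omega⟩ ⟨hc₁, by omega⟩ ⟨hd₁, by omega⟩
    (by simp only [podd]; simp; omega)

theorem glRelOn_upper (hE : glRel m n E) : GlRelOn (Set.Icc ((m : ℤ) + 2) (m + n + 2)) E := by
  rintro a ⟨ha₁, ha₂⟩ b ⟨hb₁, hb₂⟩ c ⟨hc₁, hc₂⟩ d ⟨hd₁, hd₂⟩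
  exact hE.lie_eq_of_even ⟨by omega, ha₂⟩ ⟨by omega, hb₂⟩ ⟨by omega, hc₂⟩ ⟨by omega, hd₂⟩
    (by simp only [podd]; simp; omega)

theorem commute_lower_upper (hE : glRel m n E) {a b c d : ℤ}
    (ha : a ∈ Set.Icc 1 ((m : ℤ) + 1)) (hb : b ∈ Set.Icc 1 ((m : ℤ) + 1))
    (hc : c ∈ Set.Icc ((m : ℤ) + 2) (m + n + 2)) (hd : d ∈ Set.Icc ((m : ℤ) + 2) (m + n + 2)) :
    Commute (E a b) (E c d) := by
  simp only [Set.mem_Icc] at ha hb hc hd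
  rw [commute_iff_lie_eq, hE.lie_eq_of_even ⟨ha.1, by omega⟩ ⟨hb.1, by omega⟩ ⟨by omega, hc.2⟩
    ⟨by omega, hd.2⟩ (by simp only [podd]; simp; omega), if_neg (by omega), if_neg (by omega),
    sub_zero]

end glRel

section Omega

variable {m n : ℕ} {U : Type*} [Ring U] {E : ℤ → ℤ → U} {i : ℤ}

theorem OmegaV_of_neg (hi : i < 0) :
    OmegaV m n E i = 1 - ∑ c ∈ Finset.Icc 1 ((m : ℤ) + i + 1),
      E ((m : ℤ) + i + 2) c * E c ((m : ℤ) + i + 2) := by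
  have hIcc : Finset.Icc 1 ((m : ℤ) + i + 1) = (Finset.Icc (-(m : ℤ)) i).map
      (addLeftEmbedding ((m : ℤ) + 1)) := by
    rw [Finset.map_add_left_Icc]; congr 1 <;> ring
  rw [OmegaV, if_pos hi, hIcc, Finset.sum_map]
  refine congrArg _ (Finset.sum_congr rfl fun k _ => ?_)
  simp only [addLeftEmbedding_apply, fV, eV]
  ring_nf

theorem OmegaV_of_pos (hi : 0 < i) :
    OmegaV m n E i = 1 - ∑ c ∈ Finset.Icc ((m : ℤ) + i + 2) (m + n + 2),
      E c ((m : ℤ) + i + 1) * E ((m : ℤ) + i + 1) c := by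
  have hIcc : Finset.Icc ((m : ℤ) + i + 2) (m + n + 2) = (Finset.Icc i (n : ℤ)).map
      (addLeftEmbedding ((m : ℤ) + 2)) := by
    rw [Finset.map_add_left_Icc]; congr 1 <;> ring
  rw [OmegaV, if_neg hi.not_gt, hIcc, Finset.sum_map]
  refine congrArg _ (Finset.sum_congr rfl fun k _ => ?_)
  simp only [addLeftEmbedding_apply, fV, eV]
  ring_nf

theorem commute_OmegaV_of_neg (hi : i < 0) {X : U}
    (hX : ∀ x ∈ Set.Icc 1 ((m : ℤ) + i + 2), ∀ y ∈ Set.Icc 1 ((m : ℤ) + i + 2),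
      Commute X (E x y)) :
    Commute X (OmegaV m n E i) := by
  rw [OmegaV_of_neg hi]
  refine (Commute.one_right X).sub_right (Commute.sum_right _ _ _ fun c hc => ?_)
  rw [Finset.mem_Icc] at hc
  exact (hX _ ⟨by omega, le_rfl⟩ _ ⟨hc.1, by omega⟩).mul_right
    (hX _ ⟨hc.1, by omega⟩ _ ⟨by omega, le_rfl⟩)

theorem commute_OmegaV_of_pos (hi : 0 < i) {X : U}
    (hX : ∀ x ∈ Set.Icc ((m : ℤ) + i + 1) (m + n + 2), ∀ y ∈ Set.Icc ((m : ℤ) + i + 1) (m + n + 2),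
      Commute X (E x y)) :
    Commute X (OmegaV m n E i) := by
  rw [OmegaV_of_pos hi]
  refine (Commute.one_right X).sub_right (Commute.sum_right _ _ _ fun c hc => ?_)
  rw [Finset.mem_Icc] at hc
  exact (hX _ ⟨by omega, hc.2⟩ _ ⟨le_rfl, by omega⟩).mul_right
    (hX _ ⟨le_rfl, by omega⟩ _ ⟨by omega, hc.2⟩)

end Omega

namespace glRel

variable {m n : ℕ} {U : Type*} [Ring U] {E : ℤ → ℤ → U} {i j x y : ℤ}

theorem commute_E_OmegaV_of_neg (hE : glRel m n E) (hi : i < 0)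
    (hx : x ∈ Finset.Icc 1 ((m : ℤ) + i + 1)) (hy : y ∈ Finset.Icc 1 ((m : ℤ) + i + 1)) :
    Commute (E x y) (OmegaV m n E i) := by
  rw [OmegaV_of_neg hi]
  have hx' := Finset.mem_Icc.1 hx
  refine (Commute.one_right _).sub_right (hE.glRelOn_lower.commute_E_sum_E_mul_E
    ⟨by omega, by omega⟩ (fun c hc => ?_) (by simp) hx hy)
  rw [Finset.mem_Icc] at hc
  exact ⟨hc.1, by omega⟩

theorem commute_E_OmegaV_of_pos (hE : glRel m n E) (hi : 0 < i)
    (hx : x ∈ Finset.Icc ((m : ℤ) + i + 2) (m + n + 2))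
    (hy : y ∈ Finset.Icc ((m : ℤ) + i + 2) (m + n + 2)) :
    Commute (E x y) (OmegaV m n E i) := by
  rw [OmegaV_of_pos hi]
  have hx' := Finset.mem_Icc.1 hx
  refine (Commute.one_right _).sub_right (hE.glRelOn_upper.commute_E_sum_E_mul_E'
    ⟨by omega, by omega⟩ (fun c hc => ?_) (by simp) hx hy)
  rw [Finset.mem_Icc] at hc
  exact ⟨by omega, hc.2⟩

theorem commute_OmegaV_of_lt (hE : glRel m n E) (hij : i < j) (hi0 : i ≠ 0) (hj0 : j ≠ 0) :
    Commute (OmegaV m n E i) (OmegaV m n E j) := by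
  rcases lt_or_gt_of_ne hi0 with hi | hi
  · rcases lt_or_gt_of_ne hj0 with hj | hj
    · refine (commute_OmegaV_of_neg hi fun x hx y hy => ?_).symm
      simp only [Set.mem_Icc] at hx hy
      exact (hE.commute_E_OmegaV_of_neg hj (by simp; omega) (by simp; omega)).symm
    · refine commute_OmegaV_of_pos hj fun x hx y hy =>
        (commute_OmegaV_of_neg hi fun x' hx' y' hy' => ?_).symm
      simp only [Set.mem_Icc] at hx hy hx' hy'
      exact (hE.commute_lower_upper ⟨hx'.1, by omega⟩ ⟨hy'.1, by omega⟩ ⟨by omega, hx.2⟩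
        ⟨by omega, hy.2⟩).symm
  · refine commute_OmegaV_of_pos (hi.trans hij) fun x hx y hy => ?_
    simp only [Set.mem_Icc] at hx hy
    exact (hE.commute_E_OmegaV_of_pos hi (by simp; omega) (by simp; omega)).symm

theorem commute_OmegaV (hE : glRel m n E) (hi0 : i ≠ 0) (hj0 : j ≠ 0) :
    Commute (OmegaV m n E i) (OmegaV m n E j) := by
  rcases lt_trichotomy i j with hij | rfl | hij
  · exact hE.commute_OmegaV_of_lt hij hi0 hj0
  · exact Commute.refl _
  · exact (hE.commute_OmegaV_of_lt hij hj0 hi0).symm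

end glRel

section Projection

variable {m n : ℕ} {U : Type*} [Ring U] [Algebra ℂ U] {E : ℤ → ℤ → U}

theorem mul_mem_Kid (v : U) {x : U} (hx : x ∈ Kid m n E) : v * x ∈ Kid m n E := by
  suffices Kid m n E ≤ (Kid m n E).comap (LinearMap.mulLeft ℂ v) from this hx
  refine Submodule.span_le.2 ?_
  rintro _ ⟨u, a, b, ha, hab, hb, rfl⟩
  exact Submodule.subset_span ⟨v * u, a, b, ha, hab, hb, (mul_assoc v u (E a b)).symm⟩

theorem map_mul_map_eq {φ : U →ₗ[ℂ] U} (hker : ∀ x ∈ Kid m n E, φ x = 0)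
    (hdec : ∀ u : U, u - φ u ∈ Kid m n E) (v x : U) : φ (v * φ x) = φ (v * x) := by
  have h := hker _ (mul_mem_Kid v (hdec x))
  rwa [mul_sub, map_sub, sub_eq_zero, eq_comm] at h

end Projection

theorem stmt12_general (m n : ℕ) (U : Type*) [Ring U] [Algebra ℂ U] (E : ℤ → ℤ → U)
    (hE : glRel m n E) (φ : U →ₗ[ℂ] U)
    (hker : ∀ x ∈ Kid m n E, φ x = 0)
    (hdec : ∀ u : U, u - φ u ∈ Kid m n E) :
    ∀ i j : ℤ, -(m : ℤ) ≤ i → i ≤ (n : ℤ) → i ≠ 0 →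
      -(m : ℤ) ≤ j → j ≤ (n : ℤ) → j ≠ 0 →
      ∀ c c' : ℂ, ∀ g ∈ Lsub m n E,
        chiOp m n E φ i c (chiOp m n E φ j c' g)
          = chiOp m n E φ j c' (chiOp m n E φ i c g) := by
  intro i j _ _ hi0 _ _ hj0 c c' g _
  have hΩ : OmegaV m n E i * OmegaV m n E j = OmegaV m n E j * OmegaV m n E i :=
    hE.commute_OmegaV hi0 hj0
  simp only [chiOp, mul_add, mul_smul_comm, map_add, map_smul, map_mul_map_eq hker hdec,
    ← mul_assoc, hΩ, smul_add, smul_smul, mul_comm c c']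
  abel

/-- The operators `χ_{i,c}` and `χ_{j,c'}` commute on `U(G⁻ ⊕ H)`, where `φ` is the
projection of `U(G)` onto `U(G⁻ ⊕ H)` along the left ideal `U(G)G⁺`. -/
theorem stmt12 (m n : ℕ) (U : Type*) [Ring U] [Algebra ℂ U] (E : ℤ → ℤ → U)
    (hE : glRel m n E) (φ : U →ₗ[ℂ] U)
    (hrange : ∀ u : U, φ u ∈ Lsub m n E)
    (hfix : ∀ g ∈ Lsub m n E, φ g = g)
    (hker : ∀ x ∈ Kid m n E, φ x = 0)
    (hdec : ∀ u : U, u - φ u ∈ Kid m n E) :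
    ∀ i j : ℤ, -(m : ℤ) ≤ i → i ≤ (n : ℤ) → i ≠ 0 →
      -(m : ℤ) ≤ j → j ≤ (n : ℤ) → j ≠ 0 →
      ∀ c c' : ℂ, ∀ g ∈ Lsub m n E,
        chiOp m n E φ i c (chiOp m n E φ j c' g)
          = chiOp m n E φ j c' (chiOp m n E φ i c g) :=
  stmt12_general m n U E hE φ hker hdec
end

section
/- For indices -m ≤ -r ≤ -1 and 1 ≤ s ≤ t ≤ n, J ⊆ {-r,...,-1,1,...,s}, C ∈ ℂ^J, C(1) = C + (1,...,1): χ_{J,C} f_{-r,s} · χ_{J,C(1)} f_{-r,t} + χ_{J,C} f_{-r,t} · χ_{J,C(1)} f_{-r,s} = 0 in U(G⁻ ⊕ H). -/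
/-- The composite operator `χ_{J,C} = ∏_{j ∈ J} χ_{j,c_j}` (the `χ_{j,c_j}`
commute, so the order — here increasing in `j` — is irrelevant). -/
noncomputable def chiJ (m n : ℕ) {U : Type*} [Ring U] [Algebra ℂ U] (E : ℤ → ℤ → U)
    (φ : U →ₗ[ℂ] U) (J : Finset ℤ) (C : ℤ → ℂ) (g : U) : U :=
  (J.sort (· ≤ ·)).foldr (fun j acc => chiOp m n E φ j (C j) acc) g

namespace S14

def lam (j : ℤ) : ℤ := if j < 0 then j else j - 1

lemma lam_lt_lam {a b : ℤ} (ha : a ≠ 0) (hb : b ≠ 0) (hab : a < b) : lam a < lam b := by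
  unfold lam
  split_ifs with h1 h2
  all_goals omega

lemma lam_ge {a : ℤ} (r : ℤ) (hr : 1 ≤ r) (h : -r ≤ a) (h0 : a ≠ 0) : -r ≤ lam a := by
  unfold lam
  split_ifs with h1 h2
  all_goals omega

noncomputable def sg (P : Prop) [Decidable P] : ℂ := if P then -1 else 1

lemma sg_mul {P Q R : Prop} [Decidable P] [Decidable Q] [Decidable R]
    (h : R ↔ ((P ∧ ¬ Q) ∨ (¬ P ∧ Q))) : sg P * sg Q = sg R := by
  unfold sg
  by_cases hP : P <;> by_cases hQ : Q <;> simp only [hP, hQ, if_true, if_false] <;>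
    [ rw [if_neg (by rw [h]; tauto)]
    ; rw [if_pos (by rw [h]; tauto)]
    ; rw [if_pos (by rw [h]; tauto)]
    ; rw [if_neg (by rw [h]; tauto)] ] <;> ring

structure Ctx (m n : ℕ) (U : Type*) [Ring U] [Algebra ℂ U] where
  E : ℤ → ℤ → U
  p : U →ₗ[ℂ] U
  r : ℤ
  hE : glRel m n E
  hfix : ∀ g ∈ Lsub m n E, p g = g
  hker : ∀ x ∈ Kid m n E, p x = 0
  hr : 1 ≤ r
  hrm : r ≤ (m : ℤ)

variable {m n : ℕ} {U : Type*} [Ring U] [Algebra ℂ U] (Γ : Ctx m n U)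

def Ctx.c0 : ℤ := (m : ℤ) - Γ.r + 1

noncomputable def Ctx.fE (u : ℤ) : U := Γ.E ((m:ℤ)+u+2) Γ.c0

noncomputable def Ctx.gE (a b : ℤ) : U := Γ.E ((m:ℤ)+b+2) ((m:ℤ)+a+2)

lemma Ctx.c0_one : 1 ≤ Γ.c0 := by have := Γ.hrm; unfold Ctx.c0; omega
lemma Ctx.c0_le : Γ.c0 ≤ (m:ℤ) + 1 := by have := Γ.hr; unfold Ctx.c0; omega
lemma Ctx.c0_le' : Γ.c0 ≤ (m:ℤ) + n + 2 := by have := Γ.hr; unfold Ctx.c0; omega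

/-- parity of `fE u` -/
lemma Ctx.podd_fE (u : ℤ) : podd m ((m:ℤ)+u+2) Γ.c0 = decide (0 ≤ u) := by
  unfold podd
  rw [decide_eq_false (by have := Γ.hr; unfold Ctx.c0; omega : ¬ ((m:ℤ)+1 < Γ.c0))]
  rw [show (decide ((m:ℤ)+1 < (m:ℤ)+u+2)) = decide (0 ≤ u) from decide_eq_decide.mpr (by omega)]
  simp

/-- parity of `gE a b` (for `a ≤ b`) -/
lemma podd_gE (a b : ℤ) (hab : a ≤ b) :
    podd m ((m:ℤ)+b+2) ((m:ℤ)+a+2) = decide (a < 0 ∧ 0 ≤ b) := by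
  unfold podd
  rw [show (decide ((m:ℤ)+1 < (m:ℤ)+b+2)) = decide (0 ≤ b) from decide_eq_decide.mpr (by omega)]
  rw [show (decide ((m:ℤ)+1 < (m:ℤ)+a+2)) = decide (0 ≤ a) from decide_eq_decide.mpr (by omega)]
  by_cases h1 : 0 ≤ a <;> by_cases h2 : 0 ≤ b <;> simp [h1, h2] <;> omega

lemma podd_low {m : ℕ} (a b : ℤ) (ha : a ≤ (m:ℤ)+1) (hb : b ≤ (m:ℤ)+1) : podd m a b = false := by
  unfold podd
  rw [decide_eq_false (by omega : ¬ ((m:ℤ)+1 < a)), decide_eq_false (by omega : ¬ ((m:ℤ)+1 < b))]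
  rfl

lemma podd_high {m : ℕ} (a b : ℤ) (ha : (m:ℤ)+1 < a) (hb : (m:ℤ)+1 < b) : podd m a b = false := by
  unfold podd
  rw [decide_eq_true ha, decide_eq_true hb]; rfl

/-- master swap lemma (no collision) -/
lemma Ctx.swapE (a b c d : ℤ)
    (h1 : 1 ≤ a) (h2 : a ≤ (m:ℤ)+n+2) (h3 : 1 ≤ b) (h4 : b ≤ (m:ℤ)+n+2)
    (h5 : 1 ≤ c) (h6 : c ≤ (m:ℤ)+n+2) (h7 : 1 ≤ d) (h8 : d ≤ (m:ℤ)+n+2)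
    (hbc : b ≠ c) (hda : d ≠ a) :
    Γ.E a b * Γ.E c d = ssgn m a b c d • (Γ.E c d * Γ.E a b) := by
  have h := Γ.hE a b c d h1 h2 h3 h4 h5 h6 h7 h8
  rw [if_neg hbc, if_neg hda] at h
  simpa using h

lemma Ctx.swapE_bc (a b c d : ℤ)
    (h1 : 1 ≤ a) (h2 : a ≤ (m:ℤ)+n+2) (h3 : 1 ≤ b) (h4 : b ≤ (m:ℤ)+n+2)
    (h5 : 1 ≤ c) (h6 : c ≤ (m:ℤ)+n+2) (h7 : 1 ≤ d) (h8 : d ≤ (m:ℤ)+n+2)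
    (hbc : b = c) (hda : d ≠ a) :
    Γ.E a b * Γ.E c d = ssgn m a b c d • (Γ.E c d * Γ.E a b) + Γ.E a d := by
  have h := Γ.hE a b c d h1 h2 h3 h4 h5 h6 h7 h8
  rw [if_pos hbc, if_neg hda] at h
  rw [h]; abel

lemma Ctx.swapE_da (a b c d : ℤ)
    (h1 : 1 ≤ a) (h2 : a ≤ (m:ℤ)+n+2) (h3 : 1 ≤ b) (h4 : b ≤ (m:ℤ)+n+2)
    (h5 : 1 ≤ c) (h6 : c ≤ (m:ℤ)+n+2) (h7 : 1 ≤ d) (h8 : d ≤ (m:ℤ)+n+2)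
    (hbc : b ≠ c) (hda : d = a) :
    Γ.E a b * Γ.E c d = ssgn m a b c d • (Γ.E c d * Γ.E a b) - ssgn m a b c d • Γ.E c b := by
  have h := Γ.hE a b c d h1 h2 h3 h4 h5 h6 h7 h8
  rw [if_neg hbc, if_pos hda] at h
  rw [h]; abel

end S14
namespace S14
variable {m n : ℕ} {U : Type*} [Ring U] [Algebra ℂ U] (Γ : Ctx m n U)

lemma ssgn_even {m : ℕ} {a b : ℤ} (c d : ℤ) (h : podd m a b = false) : ssgn m a b c d = 1 := by
  simp [ssgn, h]

lemma zsgn_smul {P Q : Prop} [Decidable P] [Decidable Q] (x : U) :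
    (if (decide P && decide Q) = true then (-1:ℤ) else 1) • x = sg (P ∧ Q) • x := by
  by_cases hP : P <;> by_cases hQ : Q <;> simp [sg, hP, hQ]

lemma zsgn_one {P Q : Prop} [Decidable P] [Decidable Q] (hx : ¬ (P ∧ Q)) (x : U) :
    (if (decide P && decide Q) = true then (-1:ℤ) else 1) • x = x := by
  by_cases hP : P <;> by_cases hQ : Q <;> simp [hP, hQ] <;> tauto

/-- projection kills the left ideal generators -/
lemma Ctx.pk (y : U) (a b : ℤ) (h1 : 1 ≤ a) (h2 : a < b) (h3 : b ≤ (m:ℤ)+n+2) :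
    Γ.p (y * Γ.E a b) = 0 :=
  Γ.hker _ (Submodule.subset_span ⟨y, a, b, h1, h2, h3, rfl⟩)

lemma Ctx.EL_mem (a b : ℤ) (h1 : 1 ≤ b) (h2 : b ≤ a) (h3 : a ≤ (m:ℤ)+n+2) :
    Γ.E a b ∈ Lsub m n Γ.E :=
  Algebra.subset_adjoin ⟨a, b, h1, h2, h3, rfl⟩

lemma Ctx.fE_mem (u : ℤ) (hu1 : -Γ.r-1 ≤ u) (hu2 : u ≤ n) : Γ.fE u ∈ Lsub m n Γ.E := by
  have h1 := Γ.hr; have h2 := Γ.hrm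
  exact Γ.EL_mem _ _ (by unfold Ctx.c0; omega) (by unfold Ctx.c0; omega) (by omega)

lemma Ctx.gE_mem (a b : ℤ) (ha : -Γ.r ≤ a) (hab : a ≤ b) (hb : b ≤ n) :
    Γ.gE a b ∈ Lsub m n Γ.E := by
  have h1 := Γ.hr; have h2 := Γ.hrm
  exact Γ.EL_mem _ _ (by omega) (by omega) (by omega)

/-- `fE u * fE v` swap -/
lemma Ctx.fE_fE (u v : ℤ) (hu1 : -Γ.r ≤ u) (hu2 : u ≤ n) (hv1 : -Γ.r ≤ v) (hv2 : v ≤ n) :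
    Γ.fE u * Γ.fE v = sg (0 ≤ u ∧ 0 ≤ v) • (Γ.fE v * Γ.fE u) := by
  have h1 := Γ.hr; have h2 := Γ.hrm; have hc0 : Γ.c0 = (m:ℤ) - Γ.r + 1 := rfl
  unfold Ctx.fE
  rw [Γ.swapE _ _ _ _ (by omega) (by omega) (by omega) (by omega) (by omega) (by omega) (by omega) (by omega)
      (by omega) (by omega)]
  simp only [ssgn, Γ.podd_fE]
  rw [zsgn_smul]

/-- `fE c * gE a b` swap (`c ≠ a`) -/
lemma Ctx.fE_gE (c a b : ℤ) (hc1 : -Γ.r ≤ c) (hc2 : c ≤ n) (ha1 : -Γ.r ≤ a) (hab : a < b)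
    (hb2 : b ≤ n) (hca : c ≠ a) :
    Γ.fE c * Γ.gE a b = sg (0 ≤ c ∧ (a < 0 ∧ 0 ≤ b)) • (Γ.gE a b * Γ.fE c) := by
  have h1 := Γ.hr; have h2 := Γ.hrm; have hc0 : Γ.c0 = (m:ℤ) - Γ.r + 1 := rfl
  unfold Ctx.fE Ctx.gE
  rw [Γ.swapE _ _ _ _ (by omega) (by omega) (by omega) (by omega) (by omega) (by omega) (by omega)
      (by omega) (by omega) (by omega)]
  simp only [ssgn, Γ.podd_fE, podd_gE (m := m) a b (by omega)]
  rw [zsgn_smul]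

/-- `gE a b * fE c` swap (`a ≠ c`) -/
lemma Ctx.gE_fE (a b c : ℤ) (ha1 : -Γ.r ≤ a) (hab : a < b) (hb2 : b ≤ n) (hc1 : -Γ.r ≤ c)
    (hc2 : c ≤ n) (hac : a ≠ c) :
    Γ.gE a b * Γ.fE c = sg ((a < 0 ∧ 0 ≤ b) ∧ 0 ≤ c) • (Γ.fE c * Γ.gE a b) := by
  have h1 := Γ.hr; have h2 := Γ.hrm; have hc0 : Γ.c0 = (m:ℤ) - Γ.r + 1 := rfl
  unfold Ctx.fE Ctx.gE
  rw [Γ.swapE _ _ _ _ (by omega) (by omega) (by omega) (by omega) (by omega) (by omega) (by omega)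
      (by omega) (by omega) (by omega)]
  simp only [ssgn, Γ.podd_fE, podd_gE (m := m) a b (by omega)]
  rw [zsgn_smul]

/-- `gE a b * fE a` collision -/
lemma Ctx.gE_fE_coll (a b : ℤ) (ha1 : -Γ.r ≤ a) (hab : a < b) (hb2 : b ≤ n) :
    Γ.gE a b * Γ.fE a = Γ.fE a * Γ.gE a b + Γ.fE b := by
  have h1 := Γ.hr; have h2 := Γ.hrm; have hc0 : Γ.c0 = (m:ℤ) - Γ.r + 1 := rfl
  unfold Ctx.fE Ctx.gE
  rw [Γ.swapE_bc _ _ _ _ (by omega) (by omega) (by omega) (by omega) (by omega) (by omega) (by omega)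
      (by omega) rfl (by omega)]
  simp only [ssgn, Γ.podd_fE, podd_gE (m := m) a b (by omega)]
  rw [zsgn_one (by omega)]

/-- `gE a b * gE c d` swap -/
lemma Ctx.gE_gE (a b c d : ℤ) (ha1 : -Γ.r ≤ a) (hab : a < b) (hb2 : b ≤ n) (hc1 : -Γ.r ≤ c)
    (hcd : c < d) (hd2 : d ≤ n) (had : a ≠ d) (hcb : c ≠ b) :
    Γ.gE a b * Γ.gE c d = sg ((a < 0 ∧ 0 ≤ b) ∧ (c < 0 ∧ 0 ≤ d)) • (Γ.gE c d * Γ.gE a b) := by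
  have h1 := Γ.hr; have h2 := Γ.hrm
  unfold Ctx.gE
  rw [Γ.swapE _ _ _ _ (by omega) (by omega) (by omega) (by omega) (by omega) (by omega)
      (by omega) (by omega) (by omega) (by omega)]
  simp only [ssgn, podd_gE (m := m) a b (by omega), podd_gE (m := m) c d (by omega)]
  rw [zsgn_smul]

/-- `gE μ u * gE a μ` collision -/
lemma Ctx.gE_gE_coll (a μ u : ℤ) (ha1 : -Γ.r ≤ a) (haμ : a < μ) (hμu : μ < u) (hu2 : u ≤ n) :
    Γ.gE μ u * Γ.gE a μ = Γ.gE a μ * Γ.gE μ u + Γ.gE a u := by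
  have h1 := Γ.hr; have h2 := Γ.hrm
  unfold Ctx.gE
  rw [Γ.swapE_bc _ _ _ _ (by omega) (by omega) (by omega) (by omega) (by omega) (by omega)
      (by omega) (by omega) rfl (by omega)]
  simp only [ssgn, podd_gE (m := m) μ u (by omega), podd_gE (m := m) a μ (by omega)]
  rw [zsgn_one (by omega)]

noncomputable def Ctx.tail (G : Ctx m n U) : ℤ → List ℤ → ℤ → U
  | a, [], u => G.gE a u
  | a, b :: M, u => G.gE a b * Ctx.tail G b M u

noncomputable def Ctx.chain (G : Ctx m n U) : List ℤ → ℤ → U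
  | [], u => G.fE u
  | a :: M, u => G.fE a * Ctx.tail G a M u

@[simp] lemma Ctx.tail_nil (a u : ℤ) : Γ.tail a [] u = Γ.gE a u := rfl
@[simp] lemma Ctx.tail_cons (a b : ℤ) (M : List ℤ) (u : ℤ) :
    Γ.tail a (b :: M) u = Γ.gE a b * Γ.tail b M u := rfl
@[simp] lemma Ctx.chain_nil (u : ℤ) : Γ.chain [] u = Γ.fE u := rfl
@[simp] lemma Ctx.chain_cons (a : ℤ) (M : List ℤ) (u : ℤ) :
    Γ.chain (a :: M) u = Γ.fE a * Γ.tail a M u := rfl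

lemma Ctx.tail_append (a : ℤ) (M : List ℤ) (x u : ℤ) :
    Γ.tail a (M ++ [x]) u = Γ.tail a M x * Γ.gE x u := by
  induction M generalizing a with
  | nil => simp [Ctx.tail]
  | cons b M ih => simp [Ctx.tail, ih b, mul_assoc]

lemma Ctx.chain_append (M : List ℤ) (x u : ℤ) :
    Γ.chain (M ++ [x]) u = Γ.chain M x * Γ.gE x u := by
  cases M with
  | nil => simp [Ctx.chain, Ctx.tail]
  | cons a M => simp [Ctx.chain, Ctx.tail_append, mul_assoc]

lemma Ctx.tail_mem (a : ℤ) (M : List ℤ) (u : ℤ) (ha : -Γ.r ≤ a) (hM : ∀ x ∈ M, a < x)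
    (hMp : M.Pairwise (· < ·)) (hMu : ∀ x ∈ M, x < u) (hau : a < u) (hun : u ≤ n) :
    Γ.tail a M u ∈ Lsub m n Γ.E := by
  induction M generalizing a with
  | nil => exact Γ.gE_mem a u ha (by omega) hun
  | cons b M ih =>
    rw [Ctx.tail_cons]
    refine mul_mem (Γ.gE_mem a b ha (le_of_lt (hM b (by simp))) ?_) ?_
    · exact le_trans (le_of_lt (hMu b (by simp))) (by omega)
    · rcases List.pairwise_cons.mp hMp with ⟨hb, hMp'⟩
      exact ih b (by have := hM b (by simp); omega) hb hMp'
        (fun x hx => hMu x (by simp [hx])) (hMu b (by simp))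

lemma Ctx.chain_mem (M : List ℤ) (u : ℤ) (hM : ∀ x ∈ M, -Γ.r ≤ x)
    (hMp : M.Pairwise (· < ·)) (hMu : ∀ x ∈ M, x < u) (hu1 : -Γ.r ≤ u) (hun : u ≤ n) :
    Γ.chain M u ∈ Lsub m n Γ.E := by
  cases M with
  | nil => exact Γ.fE_mem u (by omega) hun
  | cons a M =>
    rw [Ctx.chain_cons]
    rcases List.pairwise_cons.mp hMp with ⟨ha, hMp'⟩
    refine mul_mem (Γ.fE_mem a (by have := hM a (by simp); omega) ?_) ?_
    · exact le_trans (le_of_lt (hMu a (by simp))) hun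
    · exact Γ.tail_mem a M u (hM a (by simp)) ha hMp' (fun x hx => hMu x (by simp [hx]))
        (hMu a (by simp)) hun

end S14
namespace S14
variable {m n : ℕ} {U : Type*} [Ring U] [Algebra ℂ U] (Γ : Ctx m n U)

lemma Ctx.pfix {x : U} (h : x ∈ Lsub m n Γ.E) : Γ.p x = x := Γ.hfix x h

lemma sg_one {P : Prop} [Decidable P] (h : ¬ P) : sg P = 1 := if_neg h

lemma pair_ext {h v : ℤ} {M : List ℤ} (hs : ((h :: M) ++ [v]).Pairwise (· < ·)) :
    (∀ x ∈ M, h < x) ∧ h < v ∧ ((M ++ [v]).Pairwise (· < ·)) ∧ (∀ x ∈ M, x < v)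
      ∧ M.Pairwise (· < ·) := by
  rcases List.pairwise_cons.mp hs with ⟨h1, h2⟩
  rcases List.pairwise_append.mp h2 with ⟨h3, _, h4⟩
  exact ⟨fun x hx => h1 x (by simp [hx]), h1 v (by simp), h2,
    fun x hx => h4 x hx v (by simp), h3⟩

lemma pair_ext' {v : ℤ} {M : List ℤ} (hs : (M ++ [v]).Pairwise (· < ·)) :
    (∀ x ∈ M, x < v) ∧ M.Pairwise (· < ·) := by
  rcases List.pairwise_append.mp hs with ⟨h3, _, h4⟩
  exact ⟨fun x hx => h4 x hx v (by simp), h3⟩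

/-- `gE μ w` passes a `tail` exactly, with a sign. -/
lemma Ctx.g_pass_tail (μ w : ℤ) (hμ1 : -Γ.r ≤ μ) (hμw : μ < w) (hw2 : w ≤ n)
    (M : List ℤ) (h v : ℤ)
    (hs : ((h :: M) ++ [v]).Pairwise (· < ·))
    (hb : ∀ x ∈ h :: M, -Γ.r ≤ x) (hlt : ∀ x ∈ h :: M, x < μ)
    (hv2 : v ≤ n) (hvμ : v ≠ μ) :
    Γ.gE μ w * Γ.tail h M v
      = sg ((μ < 0 ∧ 0 ≤ w) ∧ (h < 0 ∧ 0 ≤ v)) • (Γ.tail h M v * Γ.gE μ w) := by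
  induction M generalizing h with
  | nil =>
    obtain ⟨_, hhv, _, _, _⟩ := pair_ext hs
    rw [Ctx.tail_nil]
    exact Γ.gE_gE μ w h v hμ1 hμw hw2 (hb h (by simp)) hhv hv2 (Ne.symm hvμ)
      (by have := hlt h (by simp); omega)
  | cons b M ih =>
    obtain ⟨hhM, hhv, hrest, hMv, hMp⟩ := pair_ext hs
    have hhb : h < b := hhM b (by simp)
    have hbμ : b < μ := hlt b (by simp)
    have hbv : b < v := hMv b (by simp)
    have hhμ : h < μ := hlt h (by simp)
    rw [Ctx.tail_cons, ← mul_assoc]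
    rw [Γ.gE_gE μ w h b hμ1 hμw hw2 (hb h (by simp)) hhb (by omega) (by omega) (by omega)]
    rw [smul_mul_assoc, mul_assoc]
    rw [ih b hrest (fun x hx => hb x (List.mem_cons_of_mem h hx))
      (fun x hx => hlt x (List.mem_cons_of_mem h hx))]
    have hsg : sg ((μ < 0 ∧ 0 ≤ w) ∧ (h < 0 ∧ 0 ≤ b)) * sg ((μ < 0 ∧ 0 ≤ w) ∧ (b < 0 ∧ 0 ≤ v))
        = sg ((μ < 0 ∧ 0 ≤ w) ∧ (h < 0 ∧ 0 ≤ v)) := sg_mul (by omega)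
    rw [mul_smul_comm, smul_smul, hsg, ← mul_assoc]

/-- `gE μ w` passes a `chain` exactly, with a sign. -/
lemma Ctx.g_pass_chain (μ w : ℤ) (hμ1 : -Γ.r ≤ μ) (hμw : μ < w) (hw2 : w ≤ n)
    (M : List ℤ) (v : ℤ)
    (hs : (M ++ [v]).Pairwise (· < ·))
    (hb : ∀ x ∈ M, -Γ.r ≤ x) (hlt : ∀ x ∈ M, x < μ)
    (hv1 : -Γ.r ≤ v) (hv2 : v ≤ n) (hvμ : v ≠ μ) :
    Γ.gE μ w * Γ.chain M v
      = sg ((μ < 0 ∧ 0 ≤ w) ∧ 0 ≤ v) • (Γ.chain M v * Γ.gE μ w) := by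
  cases M with
  | nil =>
    rw [Ctx.chain_nil]
    exact Γ.gE_fE μ w v hμ1 hμw hw2 hv1 hv2 (fun hc => hvμ hc.symm)
  | cons h M =>
    obtain ⟨hhM, hhv, hrest, hMv, hMp⟩ := pair_ext hs
    have hhμ : h < μ := hlt h (by simp)
    rw [Ctx.chain_cons, ← mul_assoc]
    rw [Γ.gE_fE μ w h hμ1 hμw hw2 (hb h (by simp)) (by omega) (by omega)]
    rw [smul_mul_assoc, mul_assoc]
    rw [Γ.g_pass_tail μ w hμ1 hμw hw2 M h v hs hb hlt hv2 hvμ]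
    have hsg : sg ((μ < 0 ∧ 0 ≤ w) ∧ 0 ≤ h) * sg ((μ < 0 ∧ 0 ≤ w) ∧ (h < 0 ∧ 0 ≤ v))
        = sg ((μ < 0 ∧ 0 ≤ w) ∧ 0 ≤ v) := sg_mul (by omega)
    rw [mul_smul_comm, smul_smul, hsg, ← mul_assoc]

/-- collision of `gE μ u` with a chain ending at `μ`. -/
lemma Ctx.g_coll_chain (μ u : ℤ) (hμ1 : -Γ.r ≤ μ) (hμu : μ < u) (hu2 : u ≤ n)
    (M : List ℤ)
    (hs : (M ++ [μ]).Pairwise (· < ·)) (hb : ∀ x ∈ M, -Γ.r ≤ x) :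
    Γ.gE μ u * Γ.chain M μ = Γ.chain M μ * Γ.gE μ u + Γ.chain M u := by
  rcases M.eq_nil_or_concat with hM | ⟨L, a, hM⟩
  · subst hM
    rw [Ctx.chain_nil, Ctx.chain_nil]
    exact Γ.gE_fE_coll μ u hμ1 hμu hu2
  · rw [List.concat_eq_append] at hM
    subst hM
    have hpre : (L ++ [a]).Pairwise (· < ·) := hs.sublist (List.sublist_append_left _ _)
    obtain ⟨hLa, hLp⟩ := pair_ext' hpre
    obtain ⟨hallμ, _⟩ := pair_ext' hs
    have haμ : a < μ := hallμ a (by simp)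
    have ha1 : -Γ.r ≤ a := hb a (by simp)
    rw [Γ.chain_append L a μ, ← mul_assoc]
    rw [Γ.g_pass_chain μ u hμ1 hμu hu2 L a hpre (fun x hx => hb x (by simp [hx]))
      (fun x hx => lt_trans (hLa x hx) haμ) ha1 (by omega) (by omega)]
    rw [sg_one (by omega), one_smul, mul_assoc]
    rw [Γ.gE_gE_coll a μ u ha1 haμ hμu hu2]
    rw [mul_add, ← mul_assoc, ← Γ.chain_append L a μ, ← Γ.chain_append L a u]

/-- negative `e`-generators pass tails exactly. -/
lemma Ctx.e_pass_tail (k j : ℤ) (hj : j < 0) (hkj : k ≤ j) (hk : -(m:ℤ) ≤ k)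
    (M : List ℤ) (h u : ℤ)
    (hs : ((h :: M) ++ [u]).Pairwise (· < ·))
    (hb : ∀ x ∈ h :: M, -Γ.r ≤ x) (hgt : ∀ x ∈ h :: M, j < x)
    (hun : u ≤ n) (huj : j < u) :
    Γ.E ((m:ℤ)+k+1) ((m:ℤ)+j+2) * Γ.tail h M u
      = Γ.tail h M u * Γ.E ((m:ℤ)+k+1) ((m:ℤ)+j+2) := by
  have h1 := Γ.hr; have h2 := Γ.hrm
  induction M generalizing h with
  | nil =>
    obtain ⟨_, hhu, _, _, _⟩ := pair_ext hs
    have hh1 : -Γ.r ≤ h := hb h (by simp)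
    have hhj : j < h := hgt h (by simp)
    rw [Ctx.tail_nil]
    unfold Ctx.gE
    rw [Γ.swapE _ _ _ _ (by omega) (by omega) (by omega) (by omega) (by omega) (by omega)
      (by omega) (by omega) (by omega) (by omega)]
    rw [ssgn_even _ _ (podd_low _ _ (by omega) (by omega)), one_zsmul]
  | cons b M ih =>
    obtain ⟨hhM, hhu, hrest, hMu, hMp⟩ := pair_ext hs
    have hh1 : -Γ.r ≤ h := hb h (by simp)
    have hhj : j < h := hgt h (by simp)
    have hhb : h < b := hhM b (by simp)
    have hbu : b < u := hMu b (by simp)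
    rw [Ctx.tail_cons, ← mul_assoc]
    have e1 : Γ.E ((m:ℤ)+k+1) ((m:ℤ)+j+2) * Γ.gE h b
        = Γ.gE h b * Γ.E ((m:ℤ)+k+1) ((m:ℤ)+j+2) := by
      unfold Ctx.gE
      rw [Γ.swapE _ _ _ _ (by omega) (by omega) (by omega) (by omega) (by omega) (by omega)
        (by omega) (by omega) (by omega) (by omega)]
      rw [ssgn_even _ _ (podd_low _ _ (by omega) (by omega)), one_zsmul]
    rw [e1, mul_assoc]
    rw [ih b hrest (fun x hx => hb x (List.mem_cons_of_mem h hx))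
      (fun x hx => hgt x (List.mem_cons_of_mem h hx)), ← mul_assoc]

/-- positive `e`-generators: anything ending with such an `e` against a tail is killed by `p`. -/
lemma Ctx.e_kill_tail (j : ℤ) (hj : 1 ≤ j)
    (M : List ℤ) (h u β : ℤ) (y : U)
    (hβ : j - 1 < β) (hβn : β ≤ n)
    (hs : ((h :: M) ++ [u]).Pairwise (· < ·))
    (hb : ∀ x ∈ h :: M, -Γ.r ≤ x) (hgt : ∀ x ∈ h :: M, j - 1 < x)
    (hun : u ≤ n) (huj : j - 1 < u) :
    Γ.p (y * Γ.E ((m:ℤ)+j+1) ((m:ℤ)+β+2) * Γ.tail h M u) = 0 := by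
  have h1 := Γ.hr; have h2 := Γ.hrm
  induction M generalizing h β y with
  | nil =>
    obtain ⟨_, hhu, _, _, _⟩ := pair_ext hs
    have hh1 : -Γ.r ≤ h := hb h (by simp)
    have hhj : j - 1 < h := hgt h (by simp)
    rw [Ctx.tail_nil, mul_assoc]
    by_cases hβu : β = u
    · subst hβu
      unfold Ctx.gE
      rw [Γ.swapE_bc _ _ _ _ (by omega) (by omega) (by omega) (by omega) (by omega) (by omega)
        (by omega) (by omega) rfl (by omega)]
      rw [ssgn_even _ _ (podd_high _ _ (by omega) (by omega)), one_zsmul]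
      rw [mul_add, map_add, ← mul_assoc]
      rw [Γ.pk _ _ _ (by omega) (by omega) (by omega), Γ.pk _ _ _ (by omega) (by omega) (by omega)]
      simp
    · unfold Ctx.gE
      rw [Γ.swapE _ _ _ _ (by omega) (by omega) (by omega) (by omega) (by omega) (by omega)
        (by omega) (by omega) (by omega) (by omega)]
      rw [ssgn_even _ _ (podd_high _ _ (by omega) (by omega)), one_zsmul, ← mul_assoc]
      rw [Γ.pk _ _ _ (by omega) (by omega) (by omega)]
  | cons b M ih =>
    obtain ⟨hhM, hhu, hrest, hMu, hMp⟩ := pair_ext hs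
    have hh1 : -Γ.r ≤ h := hb h (by simp)
    have hhj : j - 1 < h := hgt h (by simp)
    have hhb : h < b := hhM b (by simp)
    have hbu : b < u := hMu b (by simp)
    have hbj : j - 1 < b := hgt b (by simp)
    have hb1 : -Γ.r ≤ b := hb b (by simp)
    have hb' : ∀ x ∈ b :: M, -Γ.r ≤ x := fun x hx => hb x (List.mem_cons_of_mem h hx)
    have hgt' : ∀ x ∈ b :: M, j - 1 < x := fun x hx => hgt x (List.mem_cons_of_mem h hx)
    rw [Ctx.tail_cons, ← mul_assoc, mul_assoc y]
    by_cases hβb : β = b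
    · subst hβb
      rw [show Γ.E ((m:ℤ)+j+1) ((m:ℤ)+β+2) * Γ.gE h β
          = Γ.gE h β * Γ.E ((m:ℤ)+j+1) ((m:ℤ)+β+2) + Γ.E ((m:ℤ)+j+1) ((m:ℤ)+h+2) from by
        unfold Ctx.gE
        rw [Γ.swapE_bc _ _ _ _ (by omega) (by omega) (by omega) (by omega) (by omega) (by omega)
          (by omega) (by omega) rfl (by omega)]
        rw [ssgn_even _ _ (podd_high _ _ (by omega) (by omega)), one_zsmul]]
      rw [mul_add y, add_mul, map_add, ← mul_assoc y]
      rw [ih β β (y * Γ.gE h β) hβ hβn hrest hb' hgt', ih β h y hhj (by omega) hrest hb' hgt']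
      simp
    · rw [show Γ.E ((m:ℤ)+j+1) ((m:ℤ)+β+2) * Γ.gE h b
          = Γ.gE h b * Γ.E ((m:ℤ)+j+1) ((m:ℤ)+β+2) from by
        unfold Ctx.gE
        rw [Γ.swapE _ _ _ _ (by omega) (by omega) (by omega) (by omega) (by omega) (by omega)
          (by omega) (by omega) (by omega) (by omega)]
        rw [ssgn_even _ _ (podd_high _ _ (by omega) (by omega)), one_zsmul]]
      rw [← mul_assoc y]
      exact ih b β (y * Γ.gE h b) hβ hβn hrest hb' hgt'

end S14
namespace S14
variable {m n : ℕ} {U : Type*} [Ring U] [Algebra ℂ U] (Γ : Ctx m n U)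

lemma Ctx.chain_one (a u : ℤ) : Γ.fE a * Γ.gE a u = Γ.chain [a] u := by
  rw [Ctx.chain_cons, Ctx.tail_nil]

lemma Ctx.chain_two (a h : ℤ) (M : List ℤ) (u : ℤ) :
    Γ.fE a * (Γ.gE a h * Γ.tail h M u) = Γ.chain (a :: h :: M) u := by
  rw [Ctx.chain_cons, Ctx.tail_cons]

lemma Ctx.chain_two' (a h : ℤ) (M : List ℤ) (u : ℤ) :
    Γ.fE a * Γ.gE a h * Γ.tail h M u = Γ.chain (a :: h :: M) u := by
  rw [mul_assoc, Ctx.chain_two]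

lemma pair_cons {a u : ℤ} {M : List ℤ} (hs : (M ++ [u]).Pairwise (· < ·))
    (haM : ∀ x ∈ M, a < x) (hau : a < u) : ((a :: M) ++ [u]).Pairwise (· < ·) := by
  refine List.pairwise_cons.mpr ⟨?_, hs⟩
  intro x hx
  rcases List.mem_append.mp hx with h | h
  · exact haM x h
  · simp at h; omega

lemma Ctx.chain_mem' (M : List ℤ) (u : ℤ) (hs : (M ++ [u]).Pairwise (· < ·))
    (hb : ∀ x ∈ M, -Γ.r ≤ x) (hu1 : -Γ.r ≤ u) (hun : u ≤ n) :
    Γ.chain M u ∈ Lsub m n Γ.E := by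
  obtain ⟨hMu, hMp⟩ := pair_ext' hs
  exact Γ.chain_mem M u hb hMp hMu hu1 hun

lemma cons_b {a : ℤ} {M : List ℤ} (r : ℤ) (ha : -r ≤ a) (hb : ∀ x ∈ M, -r ≤ x) :
    ∀ x ∈ a :: M, -r ≤ x := by
  intro x hx
  rcases List.mem_cons.mp hx with h | h
  · omega
  · exact hb x h

/-- CORE, negative case : `p (Ω_j · chain M u) = chain M u + chain (j::M) u`. -/
lemma Ctx.core_neg (j : ℤ) (hj : j < 0) (hjr : -Γ.r ≤ j) (M : List ℤ) (u : ℤ)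
    (hs : (M ++ [u]).Pairwise (· < ·)) (hb : ∀ x ∈ M, -Γ.r ≤ x) (hgt : ∀ x ∈ M, j < x)
    (hu1 : -Γ.r ≤ u) (hun : u ≤ n) (huj : j < u) :
    Γ.p (OmegaV m n Γ.E j * Γ.chain M u) = Γ.chain M u + Γ.chain (j :: M) u := by
  have h1 := Γ.hr; have h2 := Γ.hrm
  have hc0 : Γ.c0 = (m:ℤ) - Γ.r + 1 := rfl
  obtain ⟨hMu, hMp⟩ := pair_ext' hs
  have hmem : Γ.chain M u ∈ Lsub m n Γ.E := Γ.chain_mem' M u hs hb hu1 hun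
  have hΩ : OmegaV m n Γ.E j
      = 1 - ∑ k ∈ Finset.Icc (-(m:ℤ)) j, fV m Γ.E k j * eV m Γ.E k j := if_pos hj
  rw [hΩ, sub_mul, one_mul, Finset.sum_mul, map_sub, map_sum, Γ.pfix hmem]
  have heV : eV m Γ.E (-Γ.r) j = Γ.E Γ.c0 ((m:ℤ)+j+2) := by
    show Γ.E ((m:ℤ) + -Γ.r + 1) _ = _; rw [show (m:ℤ) + -Γ.r + 1 = Γ.c0 from by omega]
  have hfV : fV m Γ.E (-Γ.r) j = Γ.fE j := by
    show Γ.E _ ((m:ℤ) + -Γ.r + 1) = _; rw [show (m:ℤ) + -Γ.r + 1 = Γ.c0 from by omega]; rfl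
  have hmain : Γ.p (fV m Γ.E (-Γ.r) j * eV m Γ.E (-Γ.r) j * Γ.chain M u)
      = -Γ.chain (j :: M) u := by
    rw [hfV, heV, mul_assoc]
    cases M with
    | nil =>
      rw [Ctx.chain_nil]
      rw [show Γ.E Γ.c0 ((m:ℤ)+j+2) * Γ.fE u
          = Γ.fE u * Γ.E Γ.c0 ((m:ℤ)+j+2) - Γ.gE j u from by
        unfold Ctx.fE Ctx.gE
        rw [Γ.swapE_da _ _ _ _ (by omega) (by omega) (by omega) (by omega) (by omega) (by omega)
          (by omega) (by omega) (by omega) rfl]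
        rw [ssgn_even _ _ (podd_low _ _ (by omega) (by omega))]
        simp only [one_zsmul]]
      rw [mul_sub, map_sub, ← mul_assoc, Γ.pk _ _ _ (by omega) (by omega) (by omega)]
      rw [Ctx.chain_one, Γ.pfix (Γ.chain_mem' [j] u (pair_cons hs (by simp) huj)
        (by intro x hx; simp at hx; omega) hu1 hun)]
      simp
    | cons h M' =>
      obtain ⟨hhM', hhu, hrest, hM'u, hM'p⟩ := pair_ext hs
      have hh1 : -Γ.r ≤ h := hb h (by simp)
      have hhj : j < h := hgt h (by simp)
      rw [Ctx.chain_cons, ← mul_assoc (Γ.E Γ.c0 ((m:ℤ)+j+2))]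
      rw [show Γ.E Γ.c0 ((m:ℤ)+j+2) * Γ.fE h
          = Γ.fE h * Γ.E Γ.c0 ((m:ℤ)+j+2) - Γ.gE j h from by
        unfold Ctx.fE Ctx.gE
        rw [Γ.swapE_da _ _ _ _ (by omega) (by omega) (by omega) (by omega) (by omega) (by omega)
          (by omega) (by omega) (by omega) rfl]
        rw [ssgn_even _ _ (podd_low _ _ (by omega) (by omega))]
        simp only [one_zsmul]]
      rw [sub_mul, mul_assoc (Γ.fE h)]
      rw [show Γ.E Γ.c0 ((m:ℤ)+j+2) * Γ.tail h M' u = Γ.tail h M' u * Γ.E Γ.c0 ((m:ℤ)+j+2) from by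
        rw [show Γ.E Γ.c0 ((m:ℤ)+j+2) = Γ.E ((m:ℤ) + -Γ.r + 1) ((m:ℤ)+j+2) from by
          rw [show (m:ℤ) + -Γ.r + 1 = Γ.c0 from by omega]]
        exact Γ.e_pass_tail (-Γ.r) j hj hjr (by omega) M' h u hs hb hgt hun huj]
      rw [mul_sub, map_sub, ← mul_assoc, ← mul_assoc, ← mul_assoc]
      rw [Γ.pk _ _ _ (by omega) (by omega) (by omega)]
      rw [Ctx.chain_two', Γ.pfix (Γ.chain_mem' (j :: h :: M') u (pair_cons hs hgt huj)
        (cons_b Γ.r hjr hb) hu1 hun)]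
      simp
  rw [Finset.sum_eq_single_of_mem (-Γ.r) (Finset.mem_Icc.mpr ⟨by omega, hjr⟩) ?hz, hmain,
    sub_neg_eq_add]
  case hz =>
    intro k hk hkr
    rw [Finset.mem_Icc] at hk
    rw [mul_assoc]
    cases M with
    | nil =>
      rw [Ctx.chain_nil]
      rw [show eV m Γ.E k j * Γ.fE u = Γ.fE u * eV m Γ.E k j from by
        show Γ.E ((m:ℤ)+k+1) ((m:ℤ)+j+2) * Γ.E ((m:ℤ)+u+2) Γ.c0
          = Γ.E ((m:ℤ)+u+2) Γ.c0 * Γ.E ((m:ℤ)+k+1) ((m:ℤ)+j+2)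
        rw [Γ.swapE _ _ _ _ (by omega) (by omega) (by omega) (by omega) (by omega) (by omega)
          (by omega) (by omega) (by omega) (by omega)]
        rw [ssgn_even _ _ (podd_low _ _ (by omega) (by omega)), one_zsmul]]
      rw [← mul_assoc]
      exact Γ.pk _ _ _ (by omega) (by omega) (by omega)
    | cons h M' =>
      have hh1 : -Γ.r ≤ h := hb h (by simp)
      have hhj : j < h := hgt h (by simp)
      have hhu : h < u := hMu h (by simp)
      rw [Ctx.chain_cons, ← mul_assoc (eV m Γ.E k j)]
      rw [show eV m Γ.E k j * Γ.fE h = Γ.fE h * eV m Γ.E k j from by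
        show Γ.E ((m:ℤ)+k+1) ((m:ℤ)+j+2) * Γ.E ((m:ℤ)+h+2) Γ.c0
          = Γ.E ((m:ℤ)+h+2) Γ.c0 * Γ.E ((m:ℤ)+k+1) ((m:ℤ)+j+2)
        rw [Γ.swapE _ _ _ _ (by omega) (by omega) (by omega) (by omega) (by omega) (by omega)
          (by omega) (by omega) (by omega) (by omega)]
        rw [ssgn_even _ _ (podd_low _ _ (by omega) (by omega)), one_zsmul]]
      rw [mul_assoc (Γ.fE h)]
      rw [show eV m Γ.E k j * Γ.tail h M' u = Γ.tail h M' u * eV m Γ.E k j from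
        Γ.e_pass_tail k j hj hk.2 hk.1 M' h u hs hb hgt hun huj]
      rw [← mul_assoc, ← mul_assoc]
      exact Γ.pk _ _ _ (by omega) (by omega) (by omega)

/-- CORE, positive case : `p (Ω_j · chain M u) = - chain ((j-1)::M) u`. -/
lemma Ctx.core_pos (j : ℤ) (hj : 1 ≤ j) (M : List ℤ) (u : ℤ)
    (hs : (M ++ [u]).Pairwise (· < ·)) (hb : ∀ x ∈ M, -Γ.r ≤ x) (hgt : ∀ x ∈ M, j - 1 < x)
    (hu1 : -Γ.r ≤ u) (hun : u ≤ n) (huj : j - 1 < u) :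
    Γ.p (OmegaV m n Γ.E j * Γ.chain M u) = -Γ.chain ((j-1) :: M) u := by
  have h1 := Γ.hr; have h2 := Γ.hrm
  have hc0 : Γ.c0 = (m:ℤ) - Γ.r + 1 := rfl
  obtain ⟨hMu, hMp⟩ := pair_ext' hs
  have hmem : Γ.chain M u ∈ Lsub m n Γ.E := Γ.chain_mem' M u hs hb hu1 hun
  have hΩ : OmegaV m n Γ.E j
      = 1 - ∑ k ∈ Finset.Icc j (n:ℤ), fV m Γ.E j k * eV m Γ.E j k := if_neg (by omega)
  rw [hΩ, sub_mul, one_mul, Finset.sum_mul, map_sub, map_sum, Γ.pfix hmem]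
  cases M with
  | nil =>
    rw [Finset.sum_eq_single_of_mem u (Finset.mem_Icc.mpr ⟨by omega, hun⟩) ?hz]
    case hz =>
      intro k hk hku
      rw [Finset.mem_Icc] at hk
      rw [mul_assoc, Ctx.chain_nil]
      rw [show eV m Γ.E j k * Γ.fE u = Γ.fE u * eV m Γ.E j k from by
        show Γ.E ((m:ℤ)+j+1) ((m:ℤ)+k+2) * Γ.E ((m:ℤ)+u+2) Γ.c0
          = Γ.E ((m:ℤ)+u+2) Γ.c0 * Γ.E ((m:ℤ)+j+1) ((m:ℤ)+k+2)
        rw [Γ.swapE _ _ _ _ (by omega) (by omega) (by omega) (by omega) (by omega) (by omega)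
          (by omega) (by omega) (by omega) (by omega)]
        rw [ssgn_even _ _ (podd_high _ _ (by omega) (by omega)), one_zsmul]]
      rw [← mul_assoc]
      exact Γ.pk _ _ _ (by omega) (by omega) (by omega)
    · rw [mul_assoc, Ctx.chain_nil]
      rw [show eV m Γ.E j u * Γ.fE u = Γ.fE u * eV m Γ.E j u + Γ.fE (j-1) from by
        show Γ.E ((m:ℤ)+j+1) ((m:ℤ)+u+2) * Γ.E ((m:ℤ)+u+2) Γ.c0
          = Γ.E ((m:ℤ)+u+2) Γ.c0 * Γ.E ((m:ℤ)+j+1) ((m:ℤ)+u+2) + Γ.E ((m:ℤ)+(j-1)+2) Γ.c0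
        rw [show (m:ℤ)+(j-1)+2 = (m:ℤ)+j+1 from by ring]
        rw [Γ.swapE_bc _ _ _ _ (by omega) (by omega) (by omega) (by omega) (by omega) (by omega)
          (by omega) (by omega) rfl (by omega)]
        rw [ssgn_even _ _ (podd_high _ _ (by omega) (by omega)), one_zsmul]]
      rw [mul_add, map_add, ← mul_assoc, Γ.pk _ _ _ (by omega) (by omega) (by omega)]
      rw [show fV m Γ.E j u = Γ.gE (j-1) u from by
        show Γ.E ((m:ℤ)+u+2) ((m:ℤ)+j+1) = Γ.E ((m:ℤ)+u+2) ((m:ℤ)+(j-1)+2)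
        rw [show (m:ℤ)+(j-1)+2 = (m:ℤ)+j+1 from by ring]]
      rw [Γ.gE_fE_coll (j-1) u (by omega) (by omega) hun]
      rw [map_add, Ctx.chain_one]
      rw [Γ.pfix (Γ.chain_mem' [j-1] u (pair_cons hs (by simp) (by omega))
        (by intro x hx; simp at hx; omega) hu1 hun)]
      rw [Γ.pfix (Γ.fE_mem u (by omega) hun)]
      abel
  | cons h M' =>
    obtain ⟨hhM', hhu, hrest, hM'u, hM'p⟩ := pair_ext hs
    have hh1 : -Γ.r ≤ h := hb h (by simp)
    have hhj : j - 1 < h := hgt h (by simp)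
    rw [Finset.sum_eq_single_of_mem h (Finset.mem_Icc.mpr ⟨by omega, by omega⟩) ?hz]
    case hz =>
      intro k hk hkh
      rw [Finset.mem_Icc] at hk
      rw [mul_assoc, Ctx.chain_cons, ← mul_assoc (eV m Γ.E j k)]
      rw [show eV m Γ.E j k * Γ.fE h = Γ.fE h * eV m Γ.E j k from by
        show Γ.E ((m:ℤ)+j+1) ((m:ℤ)+k+2) * Γ.E ((m:ℤ)+h+2) Γ.c0
          = Γ.E ((m:ℤ)+h+2) Γ.c0 * Γ.E ((m:ℤ)+j+1) ((m:ℤ)+k+2)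
        rw [Γ.swapE _ _ _ _ (by omega) (by omega) (by omega) (by omega) (by omega) (by omega)
          (by omega) (by omega) (by omega) (by omega)]
        rw [ssgn_even _ _ (podd_high _ _ (by omega) (by omega)), one_zsmul]]
      rw [mul_assoc (Γ.fE h), ← mul_assoc, ← mul_assoc]
      exact Γ.e_kill_tail j hj M' h u k _ (by omega) hk.2 hs hb hgt hun huj
    · rw [mul_assoc, Ctx.chain_cons, ← mul_assoc (eV m Γ.E j h)]
      rw [show eV m Γ.E j h * Γ.fE h = Γ.fE h * eV m Γ.E j h + Γ.fE (j-1) from by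
        show Γ.E ((m:ℤ)+j+1) ((m:ℤ)+h+2) * Γ.E ((m:ℤ)+h+2) Γ.c0
          = Γ.E ((m:ℤ)+h+2) Γ.c0 * Γ.E ((m:ℤ)+j+1) ((m:ℤ)+h+2) + Γ.E ((m:ℤ)+(j-1)+2) Γ.c0
        rw [show (m:ℤ)+(j-1)+2 = (m:ℤ)+j+1 from by ring]
        rw [Γ.swapE_bc _ _ _ _ (by omega) (by omega) (by omega) (by omega) (by omega) (by omega)
          (by omega) (by omega) rfl (by omega)]
        rw [ssgn_even _ _ (podd_high _ _ (by omega) (by omega)), one_zsmul]]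
      rw [add_mul, mul_add, map_add]
      rw [mul_assoc (Γ.fE h), ← mul_assoc (fV m Γ.E j h), ← mul_assoc]
      rw [Γ.e_kill_tail j hj M' h u h _ (by omega) (by omega) hs hb hgt hun huj]
      rw [show fV m Γ.E j h = Γ.gE (j-1) h from by
        show Γ.E ((m:ℤ)+h+2) ((m:ℤ)+j+1) = Γ.E ((m:ℤ)+h+2) ((m:ℤ)+(j-1)+2)
        rw [show (m:ℤ)+(j-1)+2 = (m:ℤ)+j+1 from by ring]]
      rw [← mul_assoc (Γ.gE (j-1) h)]
      rw [Γ.gE_fE_coll (j-1) h (by omega) (by omega) (by omega)]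
      rw [add_mul, map_add, mul_assoc]
      rw [Ctx.chain_two, ← Ctx.chain_cons]
      rw [Γ.pfix (Γ.chain_mem' ((j-1) :: h :: M') u (pair_cons hs hgt huj)
        (cons_b Γ.r (by omega) hb) hu1 hun)]
      rw [Γ.pfix (Γ.chain_mem' (h :: M') u hs hb hu1 hun)]
      abel

end S14
namespace S14
variable {m n : ℕ} {U : Type*} [Ring U] [Algebra ℂ U] (Γ : Ctx m n U)

lemma pair_snoc {M : List ℤ} {u : ℤ} (hMp : M.Pairwise (· < ·)) (hMu : ∀ x ∈ M, x < u) :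
    (M ++ [u]).Pairwise (· < ·) := by
  refine List.pairwise_append.mpr ⟨hMp, List.pairwise_singleton _ _, ?_⟩
  intro x hx y hy
  simp at hy; subst hy; exact hMu x hx

noncomputable def Ctx.F (G : Ctx m n U) (C : ℤ → ℂ) (l : List ℤ) (x : U) : U :=
  l.foldr (fun j acc => chiOp m n G.E G.p j (C j) acc) x

@[simp] lemma Ctx.F_nil (C : ℤ → ℂ) (x : U) : Γ.F C [] x = x := rfl

lemma Ctx.F_append (C : ℤ → ℂ) (l : List ℤ) (j : ℤ) (x : U) :
    Γ.F C (l ++ [j]) x = Γ.F C l (chiOp m n Γ.E Γ.p j (C j) x) := by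
  unfold Ctx.F; rw [List.foldr_append]; rfl

lemma chiOp_add {E : ℤ → ℤ → U} {p : U →ₗ[ℂ] U} (j : ℤ) (c : ℂ) (x y : U) :
    chiOp m n E p j c (x + y) = chiOp m n E p j c x + chiOp m n E p j c y := by
  unfold chiOp; rw [mul_add, map_add, smul_add]; abel

lemma chiOp_smul {E : ℤ → ℤ → U} {p : U →ₗ[ℂ] U} (j : ℤ) (c : ℂ) (a : ℂ) (x : U) :
    chiOp m n E p j c (a • x) = a • chiOp m n E p j c x := by
  unfold chiOp; rw [mul_smul_comm, map_smul]; module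

lemma Ctx.F_add (C : ℤ → ℂ) (l : List ℤ) (x y : U) :
    Γ.F C l (x + y) = Γ.F C l x + Γ.F C l y := by
  induction l with
  | nil => rfl
  | cons j l ih =>
    show chiOp m n Γ.E Γ.p j (C j) (Γ.F C l (x + y)) = _
    rw [ih, chiOp_add]; rfl

lemma Ctx.F_smul (C : ℤ → ℂ) (l : List ℤ) (a : ℂ) (x : U) :
    Γ.F C l (a • x) = a • Γ.F C l x := by
  induction l with
  | nil => rfl
  | cons j l ih =>
    show chiOp m n Γ.E Γ.p j (C j) (Γ.F C l (a • x)) = _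
    rw [ih, chiOp_smul]; rfl

/-- χ-step, negative case. -/
lemma Ctx.chi_neg (j : ℤ) (c : ℂ) (hj : j < 0) (hjr : -Γ.r ≤ j) (M : List ℤ) (u : ℤ)
    (hs : (M ++ [u]).Pairwise (· < ·)) (hb : ∀ x ∈ M, -Γ.r ≤ x) (hgt : ∀ x ∈ M, j < x)
    (hu1 : -Γ.r ≤ u) (hun : u ≤ n) (huj : j < u) :
    chiOp m n Γ.E Γ.p j c (Γ.chain M u) = (c + 1) • Γ.chain M u + Γ.chain (j :: M) u := by
  unfold chiOp
  rw [Γ.core_neg j hj hjr M u hs hb hgt hu1 hun huj]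
  module

/-- χ-step, positive case. -/
lemma Ctx.chi_pos (j : ℤ) (c : ℂ) (hj : 1 ≤ j) (M : List ℤ) (u : ℤ)
    (hs : (M ++ [u]).Pairwise (· < ·)) (hb : ∀ x ∈ M, -Γ.r ≤ x) (hgt : ∀ x ∈ M, j - 1 < x)
    (hu1 : -Γ.r ≤ u) (hun : u ≤ n) (huj : j - 1 < u) :
    chiOp m n Γ.E Γ.p j c (Γ.chain M u) = c • Γ.chain M u + (-1 : ℂ) • Γ.chain ((j-1) :: M) u := by
  unfold chiOp
  rw [Γ.core_pos j hj M u hs hb hgt hu1 hun huj]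
  module

/-- Ψ-step, negative case. -/
lemma Ctx.psi_step_neg (l : List ℤ) (C : ℤ → ℂ) (j : ℤ) (hj : j < 0) (hjr : -Γ.r ≤ j)
    (M : List ℤ) (u : ℤ)
    (hs : (M ++ [u]).Pairwise (· < ·)) (hb : ∀ x ∈ M, -Γ.r ≤ x) (hgt : ∀ x ∈ M, j < x)
    (hu1 : -Γ.r ≤ u) (hun : u ≤ n) (huj : j < u) :
    Γ.F C (l ++ [j]) (Γ.chain M u)
      = (C j + 1) • Γ.F C l (Γ.chain M u) + Γ.F C l (Γ.chain (j :: M) u) := by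
  rw [Ctx.F_append, Γ.chi_neg j (C j) hj hjr M u hs hb hgt hu1 hun huj, Ctx.F_add, Ctx.F_smul]

/-- Ψ-step, positive case. -/
lemma Ctx.psi_step_pos (l : List ℤ) (C : ℤ → ℂ) (j : ℤ) (hj : 1 ≤ j)
    (M : List ℤ) (u : ℤ)
    (hs : (M ++ [u]).Pairwise (· < ·)) (hb : ∀ x ∈ M, -Γ.r ≤ x) (hgt : ∀ x ∈ M, j - 1 < x)
    (hu1 : -Γ.r ≤ u) (hun : u ≤ n) (huj : j - 1 < u) :
    Γ.F C (l ++ [j]) (Γ.chain M u)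
      = C j • Γ.F C l (Γ.chain M u) + (-1 : ℂ) • Γ.F C l (Γ.chain ((j-1) :: M) u) := by
  rw [Ctx.F_append, Γ.chi_pos j (C j) hj M u hs hb hgt hu1 hun huj, Ctx.F_add, Ctx.F_smul,
    Ctx.F_smul]

/-- factorization of a trailing `gE` out of Ψ applied to a chain. -/
lemma Ctx.psi_factor (l : List ℤ) (C : ℤ → ℂ) :
    ∀ (M : List ℤ) (a u : ℤ),
    l.Pairwise (· < ·) →
    (∀ x ∈ l, -Γ.r ≤ x ∧ x ≠ 0) →
    (∀ x ∈ l, ∀ b ∈ M ++ [a], lam x < b) →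
    ((M ++ [a]) ++ [u]).Pairwise (· < ·) →
    (∀ x ∈ M ++ [a], -Γ.r ≤ x) →
    -Γ.r ≤ u → u ≤ n →
    Γ.F C l (Γ.chain (M ++ [a]) u) = Γ.F C l (Γ.chain M a) * Γ.gE a u := by
  induction l using List.reverseRecOn with
  | nil =>
    intro M a u _ _ _ hs hb hu1 hun
    simp only [Ctx.F_nil]
    exact Γ.chain_append M a u
  | append_singleton l j ih =>
    intro M a u hlp hl0 hlM hs hb hu1 hun
    obtain ⟨hlj, hlp'⟩ := pair_ext' hlp
    obtain ⟨hjr, hj0⟩ := hl0 j (by simp)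
    obtain ⟨hMau, hMap⟩ := pair_ext' hs
    obtain ⟨hMa, hMp⟩ := pair_ext' hMap
    have hau : a < u := hMau a (by simp)
    have ha1 : -Γ.r ≤ a := hb a (by simp)
    have hl0' : ∀ x ∈ l, -Γ.r ≤ x ∧ x ≠ 0 := fun x hx => hl0 x (by simp [hx])
    have hlM' : ∀ x ∈ l, ∀ b ∈ M ++ [a], lam x < b := fun x hx => hlM x (by simp [hx])
    have hjM : ∀ b ∈ M ++ [a], lam j < b := hlM j (by simp)
    have hja : lam j < a := hjM a (by simp)
    have hsM : (M ++ [a]).Pairwise (· < ·) := hMap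
    have hbM : ∀ x ∈ M, -Γ.r ≤ x := fun x hx => hb x (by simp [hx])
    -- pairwise for the extended chain lists
    have hsL : ((lam j :: M) ++ [a]).Pairwise (· < ·) :=
      pair_cons hsM (fun x hx => hjM x (by simp [hx])) hja
    have hsL' : (((lam j :: M) ++ [a]) ++ [u]).Pairwise (· < ·) :=
      pair_cons hs (fun x hx => by
        rcases List.mem_append.mp hx with h | h
        · exact hjM x (by simp [h])
        · simp at h; omega) (by omega)
    have hbL : ∀ x ∈ (lam j :: M) ++ [a], -Γ.r ≤ x := by
      intro x hx
      rcases List.mem_append.mp hx with h | h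
      · rcases List.mem_cons.mp h with h' | h'
        · subst h'; exact lam_ge Γ.r Γ.hr hjr hj0
        · exact hbM x h'
      · simp at h; omega
    have hlMext : ∀ x ∈ l, ∀ b ∈ (lam j :: M) ++ [a], lam x < b := by
      intro x hx b hbmem
      rcases List.mem_append.mp hbmem with h | h
      · rcases List.mem_cons.mp h with h' | h'
        · subst h'; exact lam_lt_lam (hl0 x (by simp [hx])).2 hj0 (hlj x hx)
        · exact hlM x (by simp [hx]) b (by simp [h'])
      · simp at h; subst h; exact hlM x (by simp [hx]) b (by simp)
    rcases lt_or_ge j 0 with hj | hj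
    · have hlamj : lam j = j := if_pos hj
      rw [Γ.psi_step_neg l C j hj hjr (M ++ [a]) u hs hb
        (fun x hx => by have := hjM x hx; omega) hu1 hun (by omega)]
      rw [Γ.psi_step_neg l C j hj hjr M a hsM hbM
        (fun x hx => by have := hjM x (by simp [hx]); omega) ha1 (by omega) (by omega)]
      rw [show (j :: (M ++ [a])) = (j :: M) ++ [a] from rfl]
      rw [ih M a u hlp' hl0' hlM' hs hb hu1 hun]
      rw [hlamj] at hlMext hsL' hbL
      rw [ih (j :: M) a u hlp' hl0' hlMext hsL' hbL hu1 hun]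
      rw [add_mul, smul_mul_assoc]
    · have hj1 : 1 ≤ j := by omega
      have hlamj : lam j = j - 1 := if_neg (by omega)
      rw [Γ.psi_step_pos l C j hj1 (M ++ [a]) u hs hb
        (fun x hx => by have := hjM x hx; omega) hu1 hun (by omega)]
      rw [Γ.psi_step_pos l C j hj1 M a hsM hbM
        (fun x hx => by have := hjM x (by simp [hx]); omega) ha1 (by omega) (by omega)]
      rw [show ((j-1) :: (M ++ [a])) = ((j-1) :: M) ++ [a] from rfl]
      rw [ih M a u hlp' hl0' hlM' hs hb hu1 hun]
      rw [hlamj] at hlMext hsL' hbL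
      rw [ih ((j-1) :: M) a u hlp' hl0' hlMext hsL' hbL hu1 hun]
      rw [add_mul, smul_mul_assoc, smul_mul_assoc]

end S14
namespace S14
variable {m n : ℕ} {U : Type*} [Ring U] [Algebra ℂ U] (Γ : Ctx m n U)

/-- `gE μ w` passes Ψ-images of chains (entries `< μ`), with a sign. -/
lemma Ctx.g_pass_psi (μ w : ℤ) (hμ1 : -Γ.r ≤ μ) (hμw : μ < w) (hw2 : w ≤ n)
    (l : List ℤ) (C : ℤ → ℂ) :
    ∀ (M : List ℤ) (v : ℤ),
    l.Pairwise (· < ·) → (∀ x ∈ l, -Γ.r ≤ x ∧ x ≠ 0) → (∀ x ∈ l, lam x < μ) →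
    (∀ x ∈ l, ∀ b ∈ M ++ [v], lam x < b) →
    (M ++ [v]).Pairwise (· < ·) → (∀ x ∈ M, -Γ.r ≤ x) → (∀ x ∈ M, x < μ) →
    -Γ.r ≤ v → v ≤ n → v ≠ μ →
    Γ.gE μ w * Γ.F C l (Γ.chain M v)
      = sg ((μ < 0 ∧ 0 ≤ w) ∧ 0 ≤ v) • (Γ.F C l (Γ.chain M v) * Γ.gE μ w) := by
  induction l using List.reverseRecOn with
  | nil =>
    intro M v _ _ _ _ hs hb hltμ hv1 hv2 hvμ
    simp only [Ctx.F_nil]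
    exact Γ.g_pass_chain μ w hμ1 hμw hw2 M v hs hb hltμ hv1 hv2 hvμ
  | append_singleton l j ih =>
    intro M v hlp hl0 hlμ hlM hs hb hltμ hv1 hv2 hvμ
    obtain ⟨hlj, hlp'⟩ := pair_ext' hlp
    obtain ⟨hjr, hj0⟩ := hl0 j (by simp)
    obtain ⟨hMv, hMp⟩ := pair_ext' hs
    have hjμ : lam j < μ := hlμ j (by simp)
    have hjM : ∀ b ∈ M ++ [v], lam j < b := hlM j (by simp)
    have hjv : lam j < v := hjM v (by simp)
    have hl0' : ∀ x ∈ l, -Γ.r ≤ x ∧ x ≠ 0 := fun x hx => hl0 x (by simp [hx])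
    have hlμ' : ∀ x ∈ l, lam x < μ := fun x hx => hlμ x (by simp [hx])
    have hlM' : ∀ x ∈ l, ∀ b ∈ M ++ [v], lam x < b := fun x hx => hlM x (by simp [hx])
    have hjr' : -Γ.r ≤ lam j := lam_ge Γ.r Γ.hr hjr hj0
    have hsL : ((lam j :: M) ++ [v]).Pairwise (· < ·) :=
      pair_cons hs (fun x hx => hjM x (by simp [hx])) hjv
    have hbL : ∀ x ∈ lam j :: M, -Γ.r ≤ x := cons_b Γ.r hjr' hb
    have hltμL : ∀ x ∈ lam j :: M, x < μ := by
      intro x hx; rcases List.mem_cons.mp hx with h | h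
      · omega
      · exact hltμ x h
    have hlMext : ∀ x ∈ l, ∀ b ∈ (lam j :: M) ++ [v], lam x < b := by
      intro x hx b hbmem
      rcases List.mem_append.mp hbmem with h | h
      · rcases List.mem_cons.mp h with h' | h'
        · subst h'; exact lam_lt_lam (hl0 x (by simp [hx])).2 hj0 (hlj x hx)
        · exact hlM x (by simp [hx]) b (by simp [h'])
      · simp at h; subst h; exact hlM x (by simp [hx]) b (by simp)
    rcases lt_or_ge j 0 with hj | hj
    · have hlamj : lam j = j := if_pos hj
      rw [hlamj] at hsL hbL hltμL hlMext hjr' hjμ hjv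
      rw [Γ.psi_step_neg l C j hj hjr M v hs hb
        (fun x hx => by have := hjM x (by simp [hx]); omega) hv1 hv2 (by omega)]
      rw [mul_add, mul_smul_comm]
      rw [ih M v hlp' hl0' hlμ' hlM' hs hb hltμ hv1 hv2 hvμ]
      rw [ih (j :: M) v hlp' hl0' hlμ' hlMext hsL hbL hltμL hv1 hv2 hvμ]
      rw [add_mul, smul_mul_assoc]
      module
    · have hj1 : 1 ≤ j := by omega
      have hlamj : lam j = j - 1 := if_neg (by omega)
      rw [hlamj] at hsL hbL hltμL hlMext hjr' hjμ hjv
      rw [Γ.psi_step_pos l C j hj1 M v hs hb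
        (fun x hx => by have := hjM x (by simp [hx]); omega) hv1 hv2 (by omega)]
      rw [mul_add, mul_smul_comm, mul_smul_comm]
      rw [ih M v hlp' hl0' hlμ' hlM' hs hb hltμ hv1 hv2 hvμ]
      rw [ih ((j-1) :: M) v hlp' hl0' hlμ' hlMext hsL hbL hltμL hv1 hv2 hvμ]
      rw [add_mul, smul_mul_assoc, smul_mul_assoc]
      module

/-- collision of `gE μ u` with Ψ-images of chains ending at `μ`. -/
lemma Ctx.g_coll_psi (μ u : ℤ) (hμ1 : -Γ.r ≤ μ) (hμu : μ < u) (hu2 : u ≤ n)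
    (l : List ℤ) (C : ℤ → ℂ) :
    ∀ (M : List ℤ),
    l.Pairwise (· < ·) → (∀ x ∈ l, -Γ.r ≤ x ∧ x ≠ 0) →
    (∀ x ∈ l, ∀ b ∈ M ++ [μ], lam x < b) →
    (M ++ [μ]).Pairwise (· < ·) → (∀ x ∈ M, -Γ.r ≤ x) →
    Γ.gE μ u * Γ.F C l (Γ.chain M μ)
      = Γ.F C l (Γ.chain M μ) * Γ.gE μ u + Γ.F C l (Γ.chain M u) := by
  induction l using List.reverseRecOn with
  | nil =>
    intro M _ _ _ hs hb
    simp only [Ctx.F_nil]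
    exact Γ.g_coll_chain μ u hμ1 hμu hu2 M hs hb
  | append_singleton l j ih =>
    intro M hlp hl0 hlM hs hb
    obtain ⟨hlj, hlp'⟩ := pair_ext' hlp
    obtain ⟨hjr, hj0⟩ := hl0 j (by simp)
    obtain ⟨hMμ, hMp⟩ := pair_ext' hs
    have hjM : ∀ b ∈ M ++ [μ], lam j < b := hlM j (by simp)
    have hjμ : lam j < μ := hjM μ (by simp)
    have hl0' : ∀ x ∈ l, -Γ.r ≤ x ∧ x ≠ 0 := fun x hx => hl0 x (by simp [hx])
    have hlM' : ∀ x ∈ l, ∀ b ∈ M ++ [μ], lam x < b := fun x hx => hlM x (by simp [hx])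
    have hjr' : -Γ.r ≤ lam j := lam_ge Γ.r Γ.hr hjr hj0
    have hsL : ((lam j :: M) ++ [μ]).Pairwise (· < ·) :=
      pair_cons hs (fun x hx => hjM x (by simp [hx])) hjμ
    have hbL : ∀ x ∈ lam j :: M, -Γ.r ≤ x := cons_b Γ.r hjr' hb
    have hlMext : ∀ x ∈ l, ∀ b ∈ (lam j :: M) ++ [μ], lam x < b := by
      intro x hx b hbmem
      rcases List.mem_append.mp hbmem with h | h
      · rcases List.mem_cons.mp h with h' | h'
        · subst h'; exact lam_lt_lam (hl0 x (by simp [hx])).2 hj0 (hlj x hx)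
        · exact hlM x (by simp [hx]) b (by simp [h'])
      · simp at h; subst h; exact hlM x (by simp [hx]) b (by simp)
    -- chain data with endpoint `u`
    have hsu : (M ++ [u]).Pairwise (· < ·) := pair_snoc hMp (fun x hx => by
      have := hMμ x hx; omega)
    have hsLu : ((lam j :: M) ++ [u]).Pairwise (· < ·) :=
      pair_cons hsu (fun x hx => hjM x (by simp [hx])) (by omega)
    rcases lt_or_ge j 0 with hj | hj
    · have hlamj : lam j = j := if_pos hj
      rw [hlamj] at hsL hbL hlMext hjr' hjμ hsLu
      rw [Γ.psi_step_neg l C j hj hjr M μ hs hb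
        (fun x hx => by have := hjM x (by simp [hx]); omega) hμ1 (by omega) (by omega)]
      rw [Γ.psi_step_neg l C j hj hjr M u hsu hb
        (fun x hx => by have := hjM x (by simp [hx]); omega) (by omega) hu2 (by omega)]
      rw [mul_add, mul_smul_comm]
      rw [ih M hlp' hl0' hlM' hs hb]
      rw [ih (j :: M) hlp' hl0' hlMext hsL hbL]
      rw [add_mul, smul_mul_assoc]
      module
    · have hj1 : 1 ≤ j := by omega
      have hlamj : lam j = j - 1 := if_neg (by omega)
      rw [hlamj] at hsL hbL hlMext hjr' hjμ hsLu
      rw [Γ.psi_step_pos l C j hj1 M μ hs hb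
        (fun x hx => by have := hjM x (by simp [hx]); omega) hμ1 (by omega) (by omega)]
      rw [Γ.psi_step_pos l C j hj1 M u hsu hb
        (fun x hx => by have := hjM x (by simp [hx]); omega) (by omega) hu2 (by omega)]
      rw [mul_add, mul_smul_comm, mul_smul_comm]
      rw [ih M hlp' hl0' hlM' hs hb]
      rw [ih ((j-1) :: M) hlp' hl0' hlMext hsL hbL]
      rw [add_mul, smul_mul_assoc, smul_mul_assoc]
      module

end S14
namespace S14
variable {m n : ℕ} {U : Type*} [Ring U] [Algebra ℂ U] (Γ : Ctx m n U)

noncomputable def eps (u v : ℤ) : ℂ := if 0 ≤ u ∧ 0 ≤ v then 1 else -1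

lemma half_zero (x : U) (h : x + x = 0) : x = 0 := by
  have h2 : (2:ℂ) • x = 0 := by rw [two_smul]; exact h
  calc x = ((2:ℂ)⁻¹ * 2) • x := by norm_num
  _ = (2:ℂ)⁻¹ • ((2:ℂ) • x) := by rw [mul_smul]
  _ = 0 := by rw [h2, smul_zero]

theorem Ctx.main (l : List ℤ) (C D : ℤ → ℂ) (hD : ∀ x, D x = C x + 1) :
    ∀ (u v : ℤ),
    l.Pairwise (· < ·) → (∀ x ∈ l, -Γ.r ≤ x ∧ x ≠ 0) →
    (∀ x ∈ l, lam x < u) → (∀ x ∈ l, lam x < v) →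
    -Γ.r ≤ u → u ≤ n → -Γ.r ≤ v → v ≤ n →
    Γ.F C l (Γ.chain [] u) * Γ.F D l (Γ.chain [] v)
      + eps u v • (Γ.F C l (Γ.chain [] v) * Γ.F D l (Γ.chain [] u)) = 0 := by
  induction l using List.reverseRecOn with
  | nil =>
    intro u v _ _ _ _ hu1 hun hv1 hvn
    simp only [Ctx.F_nil, Ctx.chain_nil]
    rw [Γ.fE_fE u v hu1 hun hv1 hvn]
    by_cases h : 0 ≤ u ∧ 0 ≤ v
    · rw [sg, if_pos h, eps, if_pos h]; module
    · rw [sg, if_neg h, eps, if_neg h]; module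
  | append_singleton l j ih =>
    intro u v hlp hl0 hlu hlv hu1 hun hv1 hvn
    obtain ⟨hlj, hlp'⟩ := pair_ext' hlp
    obtain ⟨hjr, hj0⟩ := hl0 j (by simp)
    have hju : lam j < u := hlu j (by simp)
    have hjv : lam j < v := hlv j (by simp)
    have hl0' : ∀ x ∈ l, -Γ.r ≤ x ∧ x ≠ 0 := fun x hx => hl0 x (by simp [hx])
    have hlu' : ∀ x ∈ l, lam x < u := fun x hx => hlu x (by simp [hx])
    have hlv' : ∀ x ∈ l, lam x < v := fun x hx => hlv x (by simp [hx])
    have hlamlt : ∀ x ∈ l, lam x < lam j :=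
      fun x hx => lam_lt_lam (hl0 x (by simp [hx])).2 hj0 (hlj x hx)
    have hjr' : -Γ.r ≤ lam j := lam_ge Γ.r Γ.hr hjr hj0
    have hjn : lam j ≤ (n:ℤ) := by omega
    -- IH instances with endpoint `lam j`
    have ihuv := ih u v hlp' hl0' hlu' hlv' hu1 hun hv1 hvn
    have ihuμ := ih u (lam j) hlp' hl0' hlu' hlamlt hu1 hun hjr' hjn
    have ihvμ := ih v (lam j) hlp' hl0' hlv' hlamlt hv1 hvn hjr' hjn
    have ihμμ := ih (lam j) (lam j) hlp' hl0' hlamlt hlamlt hjr' hjn hjr' hjn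
    -- commutation instances
    have hgp : ∀ (CC : ℤ → ℂ) (w w' : ℤ), lam j < w → w ≤ n → lam j < w' → -Γ.r ≤ w' → w' ≤ n →
        Γ.gE (lam j) w * Γ.F CC l (Γ.chain [] w')
          = sg ((lam j < 0 ∧ 0 ≤ w) ∧ 0 ≤ w') • (Γ.F CC l (Γ.chain [] w') * Γ.gE (lam j) w) := by
      intro CC w w' hw hw2 hw' hw'1 hw'2
      exact Γ.g_pass_psi (lam j) w hjr' hw hw2 l CC [] w' hlp' hl0' hlamlt
        (by intro x hx b hb; simp at hb; subst hb; have := hlamlt x hx; omega)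
        (by simp) (by simp) (by simp) hw'1 hw'2 (by omega)
    have hgc : ∀ (CC : ℤ → ℂ) (w : ℤ), lam j < w → w ≤ n →
        Γ.gE (lam j) w * Γ.F CC l (Γ.chain [] (lam j))
          = Γ.F CC l (Γ.chain [] (lam j)) * Γ.gE (lam j) w + Γ.F CC l (Γ.chain [] w) := by
      intro CC w hw hw2
      exact Γ.g_coll_psi (lam j) w hjr' hw hw2 l CC [] hlp' hl0'
        (by intro x hx b hb; simp at hb; subst hb; exact hlamlt x hx) (by simp) (by simp)
    have hgg : Γ.gE (lam j) u * Γ.gE (lam j) v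
        = sg ((lam j < 0 ∧ 0 ≤ u) ∧ (lam j < 0 ∧ 0 ≤ v)) • (Γ.gE (lam j) v * Γ.gE (lam j) u) :=
      Γ.gE_gE (lam j) u (lam j) v hjr' hju hun hjr' hjv hvn (by omega) (by omega)
    -- decompositions
    rcases lt_or_ge j 0 with hj | hj
    · -- negative case : lam j = j
      have hlamj : lam j = j := if_pos hj
      rw [hlamj] at hju hjv hlamlt hjr' hjn ihuμ ihvμ ihμμ hgp hgc hgg
      have hdec : ∀ (CC : ℤ → ℂ) (w : ℤ), -Γ.r ≤ w → w ≤ n → j < w →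
          Γ.F CC (l ++ [j]) (Γ.chain [] w)
            = (CC j + 1) • Γ.F CC l (Γ.chain [] w)
              + Γ.F CC l (Γ.chain [] j) * Γ.gE j w := by
        intro CC w hw1 hw2 hjw
        rw [Γ.psi_step_neg l CC j hj hjr [] w (by simp) (by simp) (by simp) hw1 hw2 hjw]
        congr 1
        exact Γ.psi_factor l CC [] j w hlp' hl0'
          (by intro x hx b hb; simp at hb; subst hb; have := hlamlt x hx; omega)
          (by exact pair_snoc (by simp) (by intro x hx; simp at hx; omega))
          (by intro x hx; simp at hx; omega) hw1 hw2
      rw [hdec C u hu1 hun (by omega), hdec C v hv1 hvn (by omega),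
        hdec D u hu1 hun (by omega), hdec D v hv1 hvn (by omega), hD j]
      -- abbreviations
      set au := Γ.F C l (Γ.chain [] u) with hau
      set av := Γ.F C l (Γ.chain [] v) with hav
      set at' := Γ.F C l (Γ.chain [] j) with hat
      set bu := Γ.F D l (Γ.chain [] u) with hbu
      set bv := Γ.F D l (Γ.chain [] v) with hbv
      set bt := Γ.F D l (Γ.chain [] j) with hbt
      set gu := Γ.gE j u with hgu
      set gv := Γ.gE j v with hgv
      have hcu : gu * bt = bt * gu + bu := hgc D u (by omega) hun
      have hcv : gv * bt = bt * gv + bv := hgc D v (by omega) hvn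
      have hpu : gu * bv = sg ((j < 0 ∧ 0 ≤ u) ∧ 0 ≤ v) • (bv * gu) :=
        hgp D u v (by omega) hun (by omega) hv1 hvn
      have hpv : gv * bu = sg ((j < 0 ∧ 0 ≤ v) ∧ 0 ≤ u) • (bu * gv) :=
        hgp D v u (by omega) hvn (by omega) hu1 hun
      -- IH rewrites
      have hIuμ : au * bt = at' * bu := by
        rw [eps, if_neg (by omega)] at ihuμ
        have := eq_neg_of_add_eq_zero_left ihuμ
        rw [this]; module
      have hIvμ : av * bt = at' * bv := by
        rw [eps, if_neg (by omega)] at ihvμ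
        have := eq_neg_of_add_eq_zero_left ihvμ
        rw [this]; module
      have hP1 : au * (bt * gv) = at' * (bu * gv) := by
        rw [← mul_assoc, hIuμ, mul_assoc]
      have hP2 : av * (bt * gu) = at' * (bv * gu) := by
        rw [← mul_assoc, hIvμ, mul_assoc]
      have hD1 : gu * (bt * gv) = bt * (gu * gv) + bu * gv := by
        rw [← mul_assoc, hcu, add_mul, mul_assoc]
      have hD2 : gv * (bt * gu) = bt * (gv * gu) + bv * gu := by
        rw [← mul_assoc, hcv, add_mul, mul_assoc]
      by_cases h0u : 0 ≤ u <;> by_cases h0v : 0 ≤ v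
      · -- u ≥ 0, v ≥ 0 : eps = 1, passes are -1, gg is -1
        rw [sg, if_pos (by omega)] at hpu hpv hgg
        rw [eps, if_pos (by omega)] at ihuv ⊢
        have hIuv : au * bv = -(av * bu) := by
          have := eq_neg_of_add_eq_zero_left ihuv
          rw [this]; module
        simp only [mul_add, add_mul, smul_mul_assoc, mul_smul_comm, smul_add, smul_smul,
          mul_assoc]
        rw [hP1, hP2, hD1, hD2, hpu, hpv, hgg, hIuv]
        simp only [mul_add, mul_smul_comm, smul_smul, smul_add, smul_neg, mul_neg, neg_mul,
          neg_neg]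
        module
      · rw [sg, if_neg (by omega)] at hpu hgg
        rw [sg, if_neg (by omega)] at hpv
        rw [eps, if_neg (by omega)] at ihuv ⊢
        have hIuv : au * bv = av * bu := by
          have := eq_neg_of_add_eq_zero_left ihuv
          rw [this]; module
        simp only [mul_add, add_mul, smul_mul_assoc, mul_smul_comm, smul_add, smul_smul,
          mul_assoc]
        rw [hP1, hP2, hD1, hD2, hpu, hpv, hgg, hIuv]
        simp only [mul_add, mul_smul_comm, smul_smul, smul_add, smul_neg, mul_neg, neg_mul,
          neg_neg]
        module
      · rw [sg, if_neg (by omega)] at hpu hgg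
        rw [sg, if_neg (by omega)] at hpv
        rw [eps, if_neg (by omega)] at ihuv ⊢
        have hIuv : au * bv = av * bu := by
          have := eq_neg_of_add_eq_zero_left ihuv
          rw [this]; module
        simp only [mul_add, add_mul, smul_mul_assoc, mul_smul_comm, smul_add, smul_smul,
          mul_assoc]
        rw [hP1, hP2, hD1, hD2, hpu, hpv, hgg, hIuv]
        simp only [mul_add, mul_smul_comm, smul_smul, smul_add, smul_neg, mul_neg, neg_mul,
          neg_neg]
        module
      · rw [sg, if_neg (by omega)] at hpu hgg
        rw [sg, if_neg (by omega)] at hpv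
        rw [eps, if_neg (by omega)] at ihuv ⊢
        have hIuv : au * bv = av * bu := by
          have := eq_neg_of_add_eq_zero_left ihuv
          rw [this]; module
        simp only [mul_add, add_mul, smul_mul_assoc, mul_smul_comm, smul_add, smul_smul,
          mul_assoc]
        rw [hP1, hP2, hD1, hD2, hpu, hpv, hgg, hIuv]
        simp only [mul_add, mul_smul_comm, smul_smul, smul_add, smul_neg, mul_neg, neg_mul,
          neg_neg]
        module
    · -- positive case : lam j = j - 1
      have hj1 : 1 ≤ j := by omega
      have hlamj : lam j = j - 1 := if_neg (by omega)
      rw [hlamj] at hju hjv hlamlt hjr' hjn ihuμ ihvμ ihμμ hgp hgc hgg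
      have h0u : 0 ≤ u := by omega
      have h0v : 0 ≤ v := by omega
      have hdec : ∀ (CC : ℤ → ℂ) (w : ℤ), -Γ.r ≤ w → w ≤ n → j - 1 < w →
          Γ.F CC (l ++ [j]) (Γ.chain [] w)
            = CC j • Γ.F CC l (Γ.chain [] w)
              + (-1:ℂ) • (Γ.F CC l (Γ.chain [] (j-1)) * Γ.gE (j-1) w) := by
        intro CC w hw1 hw2 hjw
        rw [Γ.psi_step_pos l CC j hj1 [] w (by simp) (by simp) (by simp) hw1 hw2 hjw]
        congr 2
        exact Γ.psi_factor l CC [] (j-1) w hlp' hl0'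
          (by intro x hx b hb; simp at hb; subst hb; have := hlamlt x hx; omega)
          (by exact pair_snoc (by simp) (by intro x hx; simp at hx; omega))
          (by intro x hx; simp at hx; omega) hw1 hw2
      rw [hdec C u hu1 hun (by omega), hdec C v hv1 hvn (by omega),
        hdec D u hu1 hun (by omega), hdec D v hv1 hvn (by omega), hD j]
      set au := Γ.F C l (Γ.chain [] u) with hau
      set av := Γ.F C l (Γ.chain [] v) with hav
      set at' := Γ.F C l (Γ.chain [] (j-1)) with hat
      set bu := Γ.F D l (Γ.chain [] u) with hbu
      set bv := Γ.F D l (Γ.chain [] v) with hbv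
      set bt := Γ.F D l (Γ.chain [] (j-1)) with hbt
      set gu := Γ.gE (j-1) u with hgu
      set gv := Γ.gE (j-1) v with hgv
      have hcu : gu * bt = bt * gu + bu := hgc D u (by omega) hun
      have hcv : gv * bt = bt * gv + bv := hgc D v (by omega) hvn
      have hpu : gu * bv = bv * gu := by
        have := hgp D u v (by omega) hun (by omega) hv1 hvn
        rw [sg, if_neg (by omega), one_smul] at this; exact this
      have hpv : gv * bu = bu * gv := by
        have := hgp D v u (by omega) hvn (by omega) hu1 hun
        rw [sg, if_neg (by omega), one_smul] at this; exact this
      rw [sg, if_neg (by omega), one_smul] at hgg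
      have hzz : at' * bt = 0 := by
        rw [eps, if_pos (by omega), one_smul] at ihμμ
        exact half_zero _ ihμμ
      have hIuμ : au * bt = -(at' * bu) := by
        rw [eps, if_pos (by omega), one_smul] at ihuμ
        exact eq_neg_of_add_eq_zero_left ihuμ
      have hIvμ : av * bt = -(at' * bv) := by
        rw [eps, if_pos (by omega), one_smul] at ihvμ
        exact eq_neg_of_add_eq_zero_left ihvμ
      rw [eps, if_pos (by omega)] at ihuv ⊢
      rw [one_smul] at ihuv
      have hIuv : au * bv = -(av * bu) := eq_neg_of_add_eq_zero_left ihuv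
      have hP1 : au * (bt * gv) = -(at' * (bu * gv)) := by
        rw [← mul_assoc, hIuμ, neg_mul, mul_assoc]
      have hP2 : av * (bt * gu) = -(at' * (bv * gu)) := by
        rw [← mul_assoc, hIvμ, neg_mul, mul_assoc]
      have hD1 : gu * (bt * gv) = bt * (gu * gv) + bu * gv := by
        rw [← mul_assoc, hcu, add_mul, mul_assoc]
      have hD2 : gv * (bt * gu) = bt * (gv * gu) + bv * gu := by
        rw [← mul_assoc, hcv, add_mul, mul_assoc]
      have hK1 : at' * (bt * (gu * gv)) = 0 := by rw [← mul_assoc, hzz, zero_mul]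
      have hK2 : at' * (bt * (gv * gu)) = 0 := by rw [← mul_assoc, hzz, zero_mul]
      simp only [mul_add, add_mul, smul_mul_assoc, mul_smul_comm, smul_add, smul_smul,
        mul_assoc]
      rw [hP1, hP2, hD1, hD2, hpu, hpv, hIuv]
      simp only [mul_add, mul_smul_comm, smul_smul, smul_add, smul_neg, mul_neg, neg_mul,
        neg_neg, hK1, hK2, mul_zero, smul_zero, neg_zero, add_zero, zero_add]
      module

end S14
/-- For `1 ≤ r ≤ m`, `1 ≤ s ≤ t ≤ n`, `J ⊆ {-r,…,-1} ∪ {1,…,s}`, `C = (c_j)`,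
`C(1) = (c_j+1)`:
`χ_{J,C} f_{-r,s} · χ_{J,C(1)} f_{-r,t} + χ_{J,C} f_{-r,t} · χ_{J,C(1)} f_{-r,s} = 0`. -/
theorem stmt14 (m n : ℕ) (U : Type*) [Ring U] [Algebra ℂ U] (E : ℤ → ℤ → U)
    (hE : glRel m n E) (φ : U →ₗ[ℂ] U)
    (hrange : ∀ u : U, φ u ∈ Lsub m n E)
    (hfix : ∀ g ∈ Lsub m n E, φ g = g)
    (hker : ∀ x ∈ Kid m n E, φ x = 0)
    (hdec : ∀ u : U, u - φ u ∈ Kid m n E)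
    (r s t : ℤ) (hr : 1 ≤ r) (hrm : r ≤ (m : ℤ))
    (hs : 1 ≤ s) (hst : s ≤ t) (htn : t ≤ (n : ℤ))
    (J : Finset ℤ) (hJ : ∀ j ∈ J, (-r ≤ j ∧ j ≤ -1) ∨ (1 ≤ j ∧ j ≤ s))
    (C : ℤ → ℂ) :
    chiJ m n E φ J C (fV m E (-r) s) *
        chiJ m n E φ J (fun j => C j + 1) (fV m E (-r) t)
      + chiJ m n E φ J C (fV m E (-r) t) *
        chiJ m n E φ J (fun j => C j + 1) (fV m E (-r) s) = 0 := by
  classical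
  set Γ : S14.Ctx m n U := ⟨E, φ, r, hE, hfix, hker, hr, hrm⟩ with hΓ
  set l : List ℤ := J.sort (· ≤ ·) with hl
  have hfs : fV m E (-r) s = Γ.chain [] s := by
    show E _ _ = E _ _
    congr 1
  have hft : fV m E (-r) t = Γ.chain [] t := by
    show E _ _ = E _ _
    congr 1
  have hchi : ∀ (CC : ℤ → ℂ) (g : U), chiJ m n E φ J CC g = Γ.F CC l g := fun _ _ => rfl
  rw [hfs, hft, hchi, hchi, hchi, hchi]
  have hlp : l.Pairwise (· < ·) := J.sortedLT_sort.pairwise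
  have hl0 : ∀ x ∈ l, -Γ.r ≤ x ∧ x ≠ 0 := by
    intro x hx
    have := hJ x ((Finset.mem_sort _).mp hx)
    constructor <;> [show -r ≤ x; skip] <;> omega
  have hlu : ∀ x ∈ l, S14.lam x < s := by
    intro x hx
    have := hJ x ((Finset.mem_sort _).mp hx)
    unfold S14.lam
    split_ifs with h1
    all_goals omega
  have hlv : ∀ x ∈ l, S14.lam x < t := by
    intro x hx
    have := hlu x hx
    omega
  have hmain := Γ.main l C (fun j => C j + 1) (fun _ => rfl) s t hlp hl0 hlu hlv
    (by show -r ≤ s; omega) (by omega) (by show -r ≤ t; omega) htn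
  rw [S14.eps, if_pos (by omega), one_smul] at hmain
  exact hmain
end
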